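/- arXiv:math/0101249 — 11 statements merged into one kernel-verified Lean document; each statement's English description precedes it below -/
import Mathlib

section
/- Suppose y₁,y₂,y₃:ℝ→ℂ are differentiable and satisfy dy₁/ds = β₁·conj(y₂(s)y₃(s)), dy₂/ds = β₂·conj(y₃(s)y₁(s)), dy₃/ds = β₃·conj(y₁(s)y₂(s)) for all s∈ℝ, and that |y_j(0)|² = β_j·v₀ + 1 for j=1,2,3. Define v:ℝ→ℝ by v(s) = v₀ + 2·∫₀^s Re(y₁(u)y₂(u)y₃(u)) du. Then |y_j(s)|² = β_j·v(s) + 1 for all s∈ℝ and j=1,2,3. -/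
open Complex


lemma normSq_hasDerivAt' {y : ℝ → ℂ} {c : ℂ} {s : ℝ}
    (h : HasDerivAt y c s) :
    HasDerivAt (fun t => Complex.normSq (y t)) (2 * ((starRingEnd ℂ) (y s) * c).re) s := by
  have hre : HasDerivAt (fun t => (y t).re) c.re s :=
    (Complex.reCLM.hasFDerivAt.comp_hasDerivAt s h)
  have him : HasDerivAt (fun t => (y t).im) c.im s :=
    (Complex.imCLM.hasFDerivAt.comp_hasDerivAt s h)
  have h2 : HasDerivAt (fun t => (y t).re * (y t).re + (y t).im * (y t).im) _ s :=
    (hre.mul hre).add (him.mul him)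
  have heq : (fun t => (y t).re * (y t).re + (y t).im * (y t).im)
      = fun t => Complex.normSq (y t) := by
    ext t; simp [Complex.normSq_apply]
  rw [heq] at h2
  convert h2 using 1
  simp [Complex.mul_re, Complex.conj_re, Complex.conj_im]; ring

lemma const_of_deriv0 {f : ℝ → ℝ} (h : ∀ s, HasDerivAt f 0 s) (h0 : f 0 = 0) :
    ∀ s, f s = 0 := by
  intro s
  have hc := is_const_of_deriv_eq_zero (fun x => (h x).differentiableAt)
    (fun x => (h x).deriv) s 0
  rw [hc, h0]

/-- first part of Theorem 5.1 of the paper.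
If `y₁, y₂, y₃ : ℝ → ℂ` satisfy the ODE system `dy₁/ds = β₁ ⋅ conj (y₂ y₃)`, etc.,
and the modulus conditions `|y_j(0)|² = β_j v₀ + 1` hold at `s = 0`, then with
`v(s) = v₀ + 2 ∫₀ˢ Re (y₁ y₂ y₃)` the modulus conditions `|y_j(s)|² = β_j v(s) + 1`
hold for all `s`. -/
theorem stmt0
    (β₁ β₂ β₃ v₀ : ℝ) (y₁ y₂ y₃ : ℝ → ℂ)
    (hy₁ : ∀ s, HasDerivAt y₁ ((β₁ : ℂ) * (starRingEnd ℂ) (y₂ s * y₃ s)) s)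
    (hy₂ : ∀ s, HasDerivAt y₂ ((β₂ : ℂ) * (starRingEnd ℂ) (y₃ s * y₁ s)) s)
    (hy₃ : ∀ s, HasDerivAt y₃ ((β₃ : ℂ) * (starRingEnd ℂ) (y₁ s * y₂ s)) s)
    (h₁ : Complex.normSq (y₁ 0) = β₁ * v₀ + 1)
    (h₂ : Complex.normSq (y₂ 0) = β₂ * v₀ + 1)
    (h₃ : Complex.normSq (y₃ 0) = β₃ * v₀ + 1)
    (v : ℝ → ℝ)
    (hv : ∀ s, v s = v₀ + 2 * ∫ u in (0:ℝ)..s, (y₁ u * y₂ u * y₃ u).re) :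
    ∀ s, Complex.normSq (y₁ s) = β₁ * v s + 1 ∧
         Complex.normSq (y₂ s) = β₂ * v s + 1 ∧
         Complex.normSq (y₃ s) = β₃ * v s + 1 := by
  -- continuity of integrand
  have hcont : Continuous fun u => (y₁ u * y₂ u * y₃ u).re := by
    have hd1 : Differentiable ℝ y₁ := fun s => (hy₁ s).differentiableAt
    have hd2 : Differentiable ℝ y₂ := fun s => (hy₂ s).differentiableAt
    have hd3 : Differentiable ℝ y₃ := fun s => (hy₃ s).differentiableAt
    exact Complex.continuous_re.comp ((hd1.continuous.mul hd2.continuous).mul hd3.continuous)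
  have hvderiv : ∀ s, HasDerivAt v (2 * (y₁ s * y₂ s * y₃ s).re) s := by
    intro s
    have hI : HasDerivAt (fun t => ∫ u in (0:ℝ)..t, (y₁ u * y₂ u * y₃ u).re)
        ((y₁ s * y₂ s * y₃ s).re) s :=
      intervalIntegral.integral_hasDerivAt_right
        (hcont.intervalIntegrable _ _) (hcont.stronglyMeasurableAtFilter _ _)
        hcont.continuousAt
    have := (hI.const_mul (2:ℝ)).const_add v₀
    have hfun : v = fun t => v₀ + 2 * ∫ u in (0:ℝ)..t, (y₁ u * y₂ u * y₃ u).re := funext hv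
    rw [hfun]
    convert this using 1
  -- generic step
  have key : ∀ (β : ℝ) (y : ℝ → ℂ),
      (∀ s, HasDerivAt (fun t => Complex.normSq (y t)) (2 * β * (y₁ s * y₂ s * y₃ s).re) s) →
      Complex.normSq (y 0) = β * v₀ + 1 →
      ∀ s, Complex.normSq (y s) = β * v s + 1 := by
    intro β y hd h0 s
    have hg : ∀ t, HasDerivAt (fun u => Complex.normSq (y u) - (β * v u + 1)) 0 t := by
      intro t
      have : HasDerivAt (fun u => Complex.normSq (y u) - (β * v u + 1)) _ t :=
        (hd t).sub (((hvderiv t).const_mul β).add_const 1)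
      convert this using 1; ring
    have h00 : Complex.normSq (y 0) - (β * v 0 + 1) = 0 := by
      rw [hv 0]; simp [h0]
    have := const_of_deriv0 hg h00 s
    linarith
  refine fun s => ⟨?_, ?_, ?_⟩
  · refine key β₁ y₁ (fun t => ?_) h₁ s
    have := normSq_hasDerivAt' (hy₁ t)
    convert this using 1
    simp [Complex.mul_re, Complex.conj_re, Complex.conj_im, Complex.mul_im]
    ring
  · refine key β₂ y₂ (fun t => ?_) h₂ s
    have := normSq_hasDerivAt' (hy₂ t)
    convert this using 1
    simp [Complex.mul_re, Complex.conj_re, Complex.conj_im, Complex.mul_im]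
    ring
  · refine key β₃ y₃ (fun t => ?_) h₃ s
    have := normSq_hasDerivAt' (hy₃ t)
    convert this using 1
    simp [Complex.mul_re, Complex.conj_re, Complex.conj_im, Complex.mul_im]
    ring
end

section
/- For every (r,s,t) ∈ ℝ³, the three partial derivatives ∂Φ/∂r, ∂Φ/∂s, ∂Φ/∂t satisfy ω(∂Φ/∂r, ∂Φ/∂s) = 0, ω(∂Φ/∂r, ∂Φ/∂t) = 0, ω(∂Φ/∂s, ∂Φ/∂t) = 0, and Im Ω(∂Φ/∂r, ∂Φ/∂s, ∂Φ/∂t) = 0. Consequently, at every point where ∂Φ/∂r, ∂Φ/∂s, ∂Φ/∂t are linearly independent over ℝ, the tangent space to the image N = Φ(ℝ³) is a special Lagrangian 3-plane in ℂ³, so N is a special Lagrangian cone wherever it is nonsingular. -/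
noncomputable section

open Complex

/-- The Hermitian inner product on `ℂ³`: `⟨a,b⟩ = a₁ conj b₁ + a₂ conj b₂ + a₃ conj b₃`. -/
def herm (a b : Fin 3 → ℂ) : ℂ :=
  a 0 * (starRingEnd ℂ) (b 0) + a 1 * (starRingEnd ℂ) (b 1) + a 2 * (starRingEnd ℂ) (b 2)

/-- The Kähler form `ω(a,b) = Im ⟨a,b⟩`. -/
def omegaForm (a b : Fin 3 → ℂ) : ℝ := (herm a b).im

/-- The holomorphic volume form `Ω(a,b,c) = det (a b c)`. -/
def OmegaForm (a b c : Fin 3 → ℂ) : ℂ :=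
  Matrix.det !![a 0, b 0, c 0; a 1, b 1, c 1; a 2, b 2, c 2]

/-- A real 3-dimensional subspace `V ⊆ ℂ³` is a special Lagrangian 3-plane if
`ω` vanishes on `V` and `Im Ω` vanishes on `V`. -/
def IsSpecialLagrangianPlane (V : Submodule ℝ (Fin 3 → ℂ)) : Prop :=
  Module.finrank ℝ V = 3 ∧
  (∀ a ∈ V, ∀ b ∈ V, omegaForm a b = 0) ∧
  (∀ a ∈ V, ∀ b ∈ V, ∀ c ∈ V, (OmegaForm a b c).im = 0)

private lemma omega_expand (p q u p' q' u' : ℝ) (A B C : Fin 3 → ℂ) :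
    omegaForm (p • A + (q • B + u • C)) (p' • A + (q' • B + u' • C)) =
      (p * q' - q * p') * omegaForm A B + (p * u' - u * p') * omegaForm A C +
        (q * u' - u * q') * omegaForm B C := by
  simp only [omegaForm, herm, Pi.add_apply, Pi.smul_apply, Complex.real_smul,
    map_add, map_mul, Complex.conj_ofReal]
  simp only [Complex.add_re, Complex.add_im, Complex.mul_re, Complex.mul_im,
    Complex.conj_re, Complex.conj_im, Complex.ofReal_re, Complex.ofReal_im]
  ring

private lemma Omega_expand (p q u p' q' u' p'' q'' u'' : ℝ) (A B C : Fin 3 → ℂ) :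
    OmegaForm (p • A + (q • B + u • C)) (p' • A + (q' • B + u' • C))
        (p'' • A + (q'' • B + u'' • C)) =
      ((p * (q' * u'' - u' * q'') - q * (p' * u'' - u' * p'')
        + u * (p' * q'' - q' * p'') : ℝ) : ℂ) * OmegaForm A B C := by
  simp only [OmegaForm, Matrix.det_fin_three, Matrix.cons_val', Matrix.cons_val_zero,
    Matrix.cons_val_one, Matrix.head_cons, Matrix.empty_val', Matrix.cons_val_fin_one,
    Matrix.head_fin_const, Matrix.of_apply, Matrix.cons_val_two, Matrix.tail_cons,
    Pi.add_apply, Pi.smul_apply, Complex.real_smul]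
  push_cast
  ring

/-- Theorem 5.1 of the paper. The map
`Φ(r,s,t) = (1/√3)(r y₁(s) z₁(t), r y₂(s) z₂(t), r y₃(s) z₃(t))` satisfies
`ω(∂Φ/∂r, ∂Φ/∂s) = ω(∂Φ/∂r, ∂Φ/∂t) = ω(∂Φ/∂s, ∂Φ/∂t) = 0` and
`Im Ω(∂Φ/∂r, ∂Φ/∂s, ∂Φ/∂t) = 0`; consequently wherever the three partial derivatives
are linearly independent over `ℝ`, their span is a special Lagrangian 3-plane,
so `N = Φ(ℝ³)` is a special Lagrangian cone wherever it is nonsingular. -/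
theorem stmt1
    (β₁ β₂ β₃ γ₁ γ₂ γ₃ : ℝ)
    (hβ : β₁ + β₂ + β₃ = 0) (hγ : γ₁ + γ₂ + γ₃ = 0)
    (hβγ : β₁ * γ₁ + β₂ * γ₂ + β₃ * γ₃ = 0)
    (y₁ y₂ y₃ z₁ z₂ z₃ : ℝ → ℂ)
    (hy₁ : ∀ s, HasDerivAt y₁ ((β₁ : ℂ) * (starRingEnd ℂ) (y₂ s * y₃ s)) s)
    (hy₂ : ∀ s, HasDerivAt y₂ ((β₂ : ℂ) * (starRingEnd ℂ) (y₃ s * y₁ s)) s)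
    (hy₃ : ∀ s, HasDerivAt y₃ ((β₃ : ℂ) * (starRingEnd ℂ) (y₁ s * y₂ s)) s)
    (hz₁ : ∀ t, HasDerivAt z₁ ((γ₁ : ℂ) * (starRingEnd ℂ) (z₂ t * z₃ t)) t)
    (hz₂ : ∀ t, HasDerivAt z₂ ((γ₂ : ℂ) * (starRingEnd ℂ) (z₃ t * z₁ t)) t)
    (hz₃ : ∀ t, HasDerivAt z₃ ((γ₃ : ℂ) * (starRingEnd ℂ) (z₁ t * z₂ t)) t)
    (v w : ℝ → ℝ)
    (hv₁ : ∀ s, Complex.normSq (y₁ s) = β₁ * v s + 1)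
    (hv₂ : ∀ s, Complex.normSq (y₂ s) = β₂ * v s + 1)
    (hv₃ : ∀ s, Complex.normSq (y₃ s) = β₃ * v s + 1)
    (hw₁ : ∀ t, Complex.normSq (z₁ t) = γ₁ * w t + 1)
    (hw₂ : ∀ t, Complex.normSq (z₂ t) = γ₂ * w t + 1)
    (hw₃ : ∀ t, Complex.normSq (z₃ t) = γ₃ * w t + 1)
    (Φ : ℝ → ℝ → ℝ → (Fin 3 → ℂ))
    (hΦ : ∀ r s t, Φ r s t =
      ![(Real.sqrt 3 : ℂ)⁻¹ * (r : ℂ) * y₁ s * z₁ t,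
        (Real.sqrt 3 : ℂ)⁻¹ * (r : ℂ) * y₂ s * z₂ t,
        (Real.sqrt 3 : ℂ)⁻¹ * (r : ℂ) * y₃ s * z₃ t]) :
    ∀ r s t : ℝ,
      omegaForm (deriv (fun x => Φ x s t) r) (deriv (fun x => Φ r x t) s) = 0 ∧
      omegaForm (deriv (fun x => Φ x s t) r) (deriv (fun x => Φ r s x) t) = 0 ∧
      omegaForm (deriv (fun x => Φ r x t) s) (deriv (fun x => Φ r s x) t) = 0 ∧
      (OmegaForm (deriv (fun x => Φ x s t) r) (deriv (fun x => Φ r x t) s)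
        (deriv (fun x => Φ r s x) t)).im = 0 ∧
      (LinearIndependent ℝ
          ![deriv (fun x => Φ x s t) r, deriv (fun x => Φ r x t) s,
            deriv (fun x => Φ r s x) t] →
        IsSpecialLagrangianPlane (Submodule.span ℝ
          {deriv (fun x => Φ x s t) r, deriv (fun x => Φ r x t) s,
           deriv (fun x => Φ r s x) t})) := by
  intro r s t
  have hc1 : HasDerivAt (fun x : ℝ => (x : ℂ)) 1 r := by
    exact Complex.ofRealCLM.hasDerivAt (x := r)
  have hDA : deriv (fun x => Φ x s t) r = ![(Real.sqrt 3 : ℂ)⁻¹ * y₁ s * z₁ t, (Real.sqrt 3 : ℂ)⁻¹ * y₂ s * z₂ t, (Real.sqrt 3 : ℂ)⁻¹ * y₃ s * z₃ t] := by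
    have hfun : (fun x : ℝ => Φ x s t) = fun x : ℝ =>
        ![(Real.sqrt 3 : ℂ)⁻¹ * (x : ℂ) * y₁ s * z₁ t,
          (Real.sqrt 3 : ℂ)⁻¹ * (x : ℂ) * y₂ s * z₂ t,
          (Real.sqrt 3 : ℂ)⁻¹ * (x : ℂ) * y₃ s * z₃ t] := funext fun x => hΦ x s t
    have h : HasDerivAt (fun x => Φ x s t) (![(Real.sqrt 3 : ℂ)⁻¹ * y₁ s * z₁ t, (Real.sqrt 3 : ℂ)⁻¹ * y₂ s * z₂ t, (Real.sqrt 3 : ℂ)⁻¹ * y₃ s * z₃ t]) r := by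
      rw [hfun, hasDerivAt_pi]
      intro i
      fin_cases i
      · simpa using (((hc1.const_mul ((Real.sqrt 3 : ℂ)⁻¹)).mul_const (y₁ s)).mul_const (z₁ t))
      · simpa using (((hc1.const_mul ((Real.sqrt 3 : ℂ)⁻¹)).mul_const (y₂ s)).mul_const (z₂ t))
      · simpa using (((hc1.const_mul ((Real.sqrt 3 : ℂ)⁻¹)).mul_const (y₃ s)).mul_const (z₃ t))
    exact h.deriv
  have hDB : deriv (fun x => Φ r x t) s = ![(Real.sqrt 3 : ℂ)⁻¹ * (r:ℂ) * ((β₁:ℂ) * (starRingEnd ℂ) (y₂ s * y₃ s)) * z₁ t, (Real.sqrt 3 : ℂ)⁻¹ * (r:ℂ) * ((β₂:ℂ) * (starRingEnd ℂ) (y₃ s * y₁ s)) * z₂ t, (Real.sqrt 3 : ℂ)⁻¹ * (r:ℂ) * ((β₃:ℂ) * (starRingEnd ℂ) (y₁ s * y₂ s)) * z₃ t] := by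
    have hfun : (fun x : ℝ => Φ r x t) = fun x : ℝ =>
        ![(Real.sqrt 3 : ℂ)⁻¹ * (r : ℂ) * y₁ x * z₁ t,
          (Real.sqrt 3 : ℂ)⁻¹ * (r : ℂ) * y₂ x * z₂ t,
          (Real.sqrt 3 : ℂ)⁻¹ * (r : ℂ) * y₃ x * z₃ t] := funext fun x => hΦ r x t
    have h : HasDerivAt (fun x => Φ r x t) (![(Real.sqrt 3 : ℂ)⁻¹ * (r:ℂ) * ((β₁:ℂ) * (starRingEnd ℂ) (y₂ s * y₃ s)) * z₁ t, (Real.sqrt 3 : ℂ)⁻¹ * (r:ℂ) * ((β₂:ℂ) * (starRingEnd ℂ) (y₃ s * y₁ s)) * z₂ t, (Real.sqrt 3 : ℂ)⁻¹ * (r:ℂ) * ((β₃:ℂ) * (starRingEnd ℂ) (y₁ s * y₂ s)) * z₃ t]) s := by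
      rw [hfun, hasDerivAt_pi]
      intro i
      fin_cases i
      · simpa using (((hy₁ s).const_mul ((Real.sqrt 3 : ℂ)⁻¹ * (r : ℂ))).mul_const (z₁ t))
      · simpa using (((hy₂ s).const_mul ((Real.sqrt 3 : ℂ)⁻¹ * (r : ℂ))).mul_const (z₂ t))
      · simpa using (((hy₃ s).const_mul ((Real.sqrt 3 : ℂ)⁻¹ * (r : ℂ))).mul_const (z₃ t))
    exact h.deriv
  have hDC : deriv (fun x => Φ r s x) t = ![(Real.sqrt 3 : ℂ)⁻¹ * (r:ℂ) * y₁ s * ((γ₁:ℂ) * (starRingEnd ℂ) (z₂ t * z₃ t)) , (Real.sqrt 3 : ℂ)⁻¹ * (r:ℂ) * y₂ s * ((γ₂:ℂ) * (starRingEnd ℂ) (z₃ t * z₁ t)) , (Real.sqrt 3 : ℂ)⁻¹ * (r:ℂ) * y₃ s * ((γ₃:ℂ) * (starRingEnd ℂ) (z₁ t * z₂ t)) ] := by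
    have hfun : (fun x : ℝ => Φ r s x) = fun x : ℝ =>
        ![(Real.sqrt 3 : ℂ)⁻¹ * (r : ℂ) * y₁ s * z₁ x,
          (Real.sqrt 3 : ℂ)⁻¹ * (r : ℂ) * y₂ s * z₂ x,
          (Real.sqrt 3 : ℂ)⁻¹ * (r : ℂ) * y₃ s * z₃ x] := funext fun x => hΦ r s x
    have h : HasDerivAt (fun x => Φ r s x) (![(Real.sqrt 3 : ℂ)⁻¹ * (r:ℂ) * y₁ s * ((γ₁:ℂ) * (starRingEnd ℂ) (z₂ t * z₃ t)) , (Real.sqrt 3 : ℂ)⁻¹ * (r:ℂ) * y₂ s * ((γ₂:ℂ) * (starRingEnd ℂ) (z₃ t * z₁ t)) , (Real.sqrt 3 : ℂ)⁻¹ * (r:ℂ) * y₃ s * ((γ₃:ℂ) * (starRingEnd ℂ) (z₁ t * z₂ t)) ]) t := by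
      rw [hfun, hasDerivAt_pi]
      intro i
      fin_cases i
      · simpa using ((hz₁ t).const_mul ((Real.sqrt 3 : ℂ)⁻¹ * (r : ℂ) * y₁ s))
      · simpa using ((hz₂ t).const_mul ((Real.sqrt 3 : ℂ)⁻¹ * (r : ℂ) * y₂ s))
      · simpa using ((hz₃ t).const_mul ((Real.sqrt 3 : ℂ)⁻¹ * (r : ℂ) * y₃ s))
    exact h.deriv
  rw [hDA, hDB, hDC]
  set A : Fin 3 → ℂ := ![(Real.sqrt 3 : ℂ)⁻¹ * y₁ s * z₁ t, (Real.sqrt 3 : ℂ)⁻¹ * y₂ s * z₂ t, (Real.sqrt 3 : ℂ)⁻¹ * y₃ s * z₃ t] with hAdef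
  set B : Fin 3 → ℂ := ![(Real.sqrt 3 : ℂ)⁻¹ * (r:ℂ) * ((β₁:ℂ) * (starRingEnd ℂ) (y₂ s * y₃ s)) * z₁ t, (Real.sqrt 3 : ℂ)⁻¹ * (r:ℂ) * ((β₂:ℂ) * (starRingEnd ℂ) (y₃ s * y₁ s)) * z₂ t, (Real.sqrt 3 : ℂ)⁻¹ * (r:ℂ) * ((β₃:ℂ) * (starRingEnd ℂ) (y₁ s * y₂ s)) * z₃ t] with hBdef
  set C : Fin 3 → ℂ := ![(Real.sqrt 3 : ℂ)⁻¹ * (r:ℂ) * y₁ s * ((γ₁:ℂ) * (starRingEnd ℂ) (z₂ t * z₃ t)) , (Real.sqrt 3 : ℂ)⁻¹ * (r:ℂ) * y₂ s * ((γ₂:ℂ) * (starRingEnd ℂ) (z₃ t * z₁ t)) , (Real.sqrt 3 : ℂ)⁻¹ * (r:ℂ) * y₃ s * ((γ₃:ℂ) * (starRingEnd ℂ) (z₁ t * z₂ t)) ] with hCdef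
  have hY1 : y₁ s * (starRingEnd ℂ) (y₁ s) = (β₁:ℂ) * (v s:ℂ) + 1 := by
    rw [Complex.mul_conj, hv₁ s]; push_cast; ring
  have hY2 : y₂ s * (starRingEnd ℂ) (y₂ s) = (β₂:ℂ) * (v s:ℂ) + 1 := by
    rw [Complex.mul_conj, hv₂ s]; push_cast; ring
  have hY3 : y₃ s * (starRingEnd ℂ) (y₃ s) = (β₃:ℂ) * (v s:ℂ) + 1 := by
    rw [Complex.mul_conj, hv₃ s]; push_cast; ring
  have hZ1 : z₁ t * (starRingEnd ℂ) (z₁ t) = (γ₁:ℂ) * (w t:ℂ) + 1 := by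
    rw [Complex.mul_conj, hw₁ t]; push_cast; ring
  have hZ2 : z₂ t * (starRingEnd ℂ) (z₂ t) = (γ₂:ℂ) * (w t:ℂ) + 1 := by
    rw [Complex.mul_conj, hw₂ t]; push_cast; ring
  have hZ3 : z₃ t * (starRingEnd ℂ) (z₃ t) = (γ₃:ℂ) * (w t:ℂ) + 1 := by
    rw [Complex.mul_conj, hw₃ t]; push_cast; ring
  have hb : (β₁:ℂ) + (β₂:ℂ) + (β₃:ℂ) = 0 := by exact_mod_cast congrArg (fun x : ℝ => (x : ℂ)) hβ
  have hg : (γ₁:ℂ) + (γ₂:ℂ) + (γ₃:ℂ) = 0 := by exact_mod_cast congrArg (fun x : ℝ => (x : ℂ)) hγ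
  have hbg : (β₁:ℂ) * (γ₁:ℂ) + (β₂:ℂ) * (γ₂:ℂ) + (β₃:ℂ) * (γ₃:ℂ) = 0 := by
    exact_mod_cast congrArg (fun x : ℝ => (x : ℂ)) hβγ
  have h1 : herm A B = 0 := by
    simp only [hAdef, hBdef, herm, Matrix.cons_val_zero, Matrix.cons_val_one, Matrix.head_cons,
      Matrix.cons_val_two, Matrix.tail_cons, map_mul, map_inv₀, Complex.conj_ofReal,
      Complex.conj_conj]
    linear_combination ((Real.sqrt 3:ℂ)⁻¹)^2 * (r:ℂ) * (y₁ s * y₂ s * y₃ s) * ((β₁:ℂ) * hZ1 + (β₂:ℂ) * hZ2 + (β₃:ℂ) * hZ3 + ((w t):ℂ) * hbg + hb)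
  have h2 : herm A C = 0 := by
    simp only [hAdef, hCdef, herm, Matrix.cons_val_zero, Matrix.cons_val_one, Matrix.head_cons,
      Matrix.cons_val_two, Matrix.tail_cons, map_mul, map_inv₀, Complex.conj_ofReal,
      Complex.conj_conj]
    linear_combination ((Real.sqrt 3:ℂ)⁻¹)^2 * (r:ℂ) * (z₁ t * z₂ t * z₃ t) * ((γ₁:ℂ) * hY1 + (γ₂:ℂ) * hY2 + (γ₃:ℂ) * hY3 + ((v s):ℂ) * hbg + hg)
  have h3 : herm B C = 0 := by
    simp only [hBdef, hCdef, herm, Matrix.cons_val_zero, Matrix.cons_val_one, Matrix.head_cons,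
      Matrix.cons_val_two, Matrix.tail_cons, map_mul, map_inv₀, Complex.conj_ofReal,
      Complex.conj_conj]
    linear_combination ((Real.sqrt 3:ℂ)⁻¹)^2 * (r:ℂ)^2 * ((starRingEnd ℂ) (y₁ s) * (starRingEnd ℂ) (y₂ s) * (starRingEnd ℂ) (y₃ s) * z₁ t * z₂ t * z₃ t) * hbg
  have hω1 : omegaForm A B = 0 := by unfold omegaForm; rw [h1]; simp
  have hω2 : omegaForm A C = 0 := by unfold omegaForm; rw [h2]; simp
  have hω3 : omegaForm B C = 0 := by unfold omegaForm; rw [h3]; simp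
  have hΩval : OmegaForm A B C = ((((Real.sqrt 3)⁻¹)^3 * r^2 * (β₂*γ₃*(β₁ * v s + 1)*(β₃ * v s + 1)*(γ₁ * w t + 1)*(γ₂ * w t + 1) + β₃*γ₁*(β₁ * v s + 1)*(β₂ * v s + 1)*(γ₂ * w t + 1)*(γ₃ * w t + 1) + β₁*γ₂*(β₂ * v s + 1)*(β₃ * v s + 1)*(γ₃ * w t + 1)*(γ₁ * w t + 1) - β₃*γ₂*(β₁ * v s + 1)*(β₂ * v s + 1)*(γ₁ * w t + 1)*(γ₃ * w t + 1) - β₂*γ₁*(β₁ * v s + 1)*(β₃ * v s + 1)*(γ₃ * w t + 1)*(γ₂ * w t + 1) - β₁*γ₃*(β₂ * v s + 1)*(β₃ * v s + 1)*(γ₂ * w t + 1)*(γ₁ * w t + 1)) : ℝ) : ℂ) := by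
    rw [hAdef, hBdef, hCdef]
    simp only [OmegaForm, Matrix.det_fin_three, Matrix.cons_val',
      Matrix.cons_val_zero, Matrix.cons_val_one, Matrix.head_cons, Matrix.empty_val',
      Matrix.cons_val_fin_one, Matrix.head_fin_const, Matrix.of_apply, Matrix.cons_val_two,
      Matrix.tail_cons, map_mul, map_inv₀, Complex.conj_ofReal, Complex.conj_conj]
    push_cast
    linear_combination 0
      + ((Real.sqrt 3:ℂ)⁻¹)^3 * (r:ℂ)^2 * (β₂:ℂ)*(γ₃:ℂ) * (y₃ s * (starRingEnd ℂ) (y₃ s) * (z₁ t) * (starRingEnd ℂ) (z₁ t) * (z₂ t) * (starRingEnd ℂ) (z₂ t)) * hY1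
      + ((Real.sqrt 3:ℂ)⁻¹)^3 * (r:ℂ)^2 * (β₂:ℂ)*(γ₃:ℂ) * ((β₁:ℂ) * (v s:ℂ) + 1) * ((z₁ t) * (starRingEnd ℂ) (z₁ t) * (z₂ t) * (starRingEnd ℂ) (z₂ t)) * hY3
      + ((Real.sqrt 3:ℂ)⁻¹)^3 * (r:ℂ)^2 * (β₂:ℂ)*(γ₃:ℂ) * ((β₁:ℂ) * (v s:ℂ) + 1) * ((β₃:ℂ) * (v s:ℂ) + 1) * ((z₂ t) * (starRingEnd ℂ) (z₂ t)) * hZ1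
      + ((Real.sqrt 3:ℂ)⁻¹)^3 * (r:ℂ)^2 * (β₂:ℂ)*(γ₃:ℂ) * ((β₁:ℂ) * (v s:ℂ) + 1) * ((β₃:ℂ) * (v s:ℂ) + 1) * ((γ₁:ℂ) * (w t:ℂ) + 1) * hZ2
      + ((Real.sqrt 3:ℂ)⁻¹)^3 * (r:ℂ)^2 * (β₃:ℂ)*(γ₁:ℂ) * (y₂ s * (starRingEnd ℂ) (y₂ s) * (z₂ t) * (starRingEnd ℂ) (z₂ t) * (z₃ t) * (starRingEnd ℂ) (z₃ t)) * hY1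
      + ((Real.sqrt 3:ℂ)⁻¹)^3 * (r:ℂ)^2 * (β₃:ℂ)*(γ₁:ℂ) * ((β₁:ℂ) * (v s:ℂ) + 1) * ((z₂ t) * (starRingEnd ℂ) (z₂ t) * (z₃ t) * (starRingEnd ℂ) (z₃ t)) * hY2
      + ((Real.sqrt 3:ℂ)⁻¹)^3 * (r:ℂ)^2 * (β₃:ℂ)*(γ₁:ℂ) * ((β₁:ℂ) * (v s:ℂ) + 1) * ((β₂:ℂ) * (v s:ℂ) + 1) * ((z₃ t) * (starRingEnd ℂ) (z₃ t)) * hZ2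
      + ((Real.sqrt 3:ℂ)⁻¹)^3 * (r:ℂ)^2 * (β₃:ℂ)*(γ₁:ℂ) * ((β₁:ℂ) * (v s:ℂ) + 1) * ((β₂:ℂ) * (v s:ℂ) + 1) * ((γ₂:ℂ) * (w t:ℂ) + 1) * hZ3
      + ((Real.sqrt 3:ℂ)⁻¹)^3 * (r:ℂ)^2 * (β₁:ℂ)*(γ₂:ℂ) * (y₃ s * (starRingEnd ℂ) (y₃ s) * (z₃ t) * (starRingEnd ℂ) (z₃ t) * (z₁ t) * (starRingEnd ℂ) (z₁ t)) * hY2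
      + ((Real.sqrt 3:ℂ)⁻¹)^3 * (r:ℂ)^2 * (β₁:ℂ)*(γ₂:ℂ) * ((β₂:ℂ) * (v s:ℂ) + 1) * ((z₃ t) * (starRingEnd ℂ) (z₃ t) * (z₁ t) * (starRingEnd ℂ) (z₁ t)) * hY3
      + ((Real.sqrt 3:ℂ)⁻¹)^3 * (r:ℂ)^2 * (β₁:ℂ)*(γ₂:ℂ) * ((β₂:ℂ) * (v s:ℂ) + 1) * ((β₃:ℂ) * (v s:ℂ) + 1) * ((z₁ t) * (starRingEnd ℂ) (z₁ t)) * hZ3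
      + ((Real.sqrt 3:ℂ)⁻¹)^3 * (r:ℂ)^2 * (β₁:ℂ)*(γ₂:ℂ) * ((β₂:ℂ) * (v s:ℂ) + 1) * ((β₃:ℂ) * (v s:ℂ) + 1) * ((γ₃:ℂ) * (w t:ℂ) + 1) * hZ1
      - ((Real.sqrt 3:ℂ)⁻¹)^3 * (r:ℂ)^2 * (β₃:ℂ)*(γ₂:ℂ) * (y₂ s * (starRingEnd ℂ) (y₂ s) * (z₁ t) * (starRingEnd ℂ) (z₁ t) * (z₃ t) * (starRingEnd ℂ) (z₃ t)) * hY1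
      - ((Real.sqrt 3:ℂ)⁻¹)^3 * (r:ℂ)^2 * (β₃:ℂ)*(γ₂:ℂ) * ((β₁:ℂ) * (v s:ℂ) + 1) * ((z₁ t) * (starRingEnd ℂ) (z₁ t) * (z₃ t) * (starRingEnd ℂ) (z₃ t)) * hY2
      - ((Real.sqrt 3:ℂ)⁻¹)^3 * (r:ℂ)^2 * (β₃:ℂ)*(γ₂:ℂ) * ((β₁:ℂ) * (v s:ℂ) + 1) * ((β₂:ℂ) * (v s:ℂ) + 1) * ((z₃ t) * (starRingEnd ℂ) (z₃ t)) * hZ1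
      - ((Real.sqrt 3:ℂ)⁻¹)^3 * (r:ℂ)^2 * (β₃:ℂ)*(γ₂:ℂ) * ((β₁:ℂ) * (v s:ℂ) + 1) * ((β₂:ℂ) * (v s:ℂ) + 1) * ((γ₁:ℂ) * (w t:ℂ) + 1) * hZ3
      - ((Real.sqrt 3:ℂ)⁻¹)^3 * (r:ℂ)^2 * (β₂:ℂ)*(γ₁:ℂ) * (y₃ s * (starRingEnd ℂ) (y₃ s) * (z₃ t) * (starRingEnd ℂ) (z₃ t) * (z₂ t) * (starRingEnd ℂ) (z₂ t)) * hY1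
      - ((Real.sqrt 3:ℂ)⁻¹)^3 * (r:ℂ)^2 * (β₂:ℂ)*(γ₁:ℂ) * ((β₁:ℂ) * (v s:ℂ) + 1) * ((z₃ t) * (starRingEnd ℂ) (z₃ t) * (z₂ t) * (starRingEnd ℂ) (z₂ t)) * hY3
      - ((Real.sqrt 3:ℂ)⁻¹)^3 * (r:ℂ)^2 * (β₂:ℂ)*(γ₁:ℂ) * ((β₁:ℂ) * (v s:ℂ) + 1) * ((β₃:ℂ) * (v s:ℂ) + 1) * ((z₂ t) * (starRingEnd ℂ) (z₂ t)) * hZ3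
      - ((Real.sqrt 3:ℂ)⁻¹)^3 * (r:ℂ)^2 * (β₂:ℂ)*(γ₁:ℂ) * ((β₁:ℂ) * (v s:ℂ) + 1) * ((β₃:ℂ) * (v s:ℂ) + 1) * ((γ₃:ℂ) * (w t:ℂ) + 1) * hZ2
      - ((Real.sqrt 3:ℂ)⁻¹)^3 * (r:ℂ)^2 * (β₁:ℂ)*(γ₃:ℂ) * (y₃ s * (starRingEnd ℂ) (y₃ s) * (z₂ t) * (starRingEnd ℂ) (z₂ t) * (z₁ t) * (starRingEnd ℂ) (z₁ t)) * hY2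
      - ((Real.sqrt 3:ℂ)⁻¹)^3 * (r:ℂ)^2 * (β₁:ℂ)*(γ₃:ℂ) * ((β₂:ℂ) * (v s:ℂ) + 1) * ((z₂ t) * (starRingEnd ℂ) (z₂ t) * (z₁ t) * (starRingEnd ℂ) (z₁ t)) * hY3
      - ((Real.sqrt 3:ℂ)⁻¹)^3 * (r:ℂ)^2 * (β₁:ℂ)*(γ₃:ℂ) * ((β₂:ℂ) * (v s:ℂ) + 1) * ((β₃:ℂ) * (v s:ℂ) + 1) * ((z₁ t) * (starRingEnd ℂ) (z₁ t)) * hZ2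
      - ((Real.sqrt 3:ℂ)⁻¹)^3 * (r:ℂ)^2 * (β₁:ℂ)*(γ₃:ℂ) * ((β₂:ℂ) * (v s:ℂ) + 1) * ((β₃:ℂ) * (v s:ℂ) + 1) * ((γ₂:ℂ) * (w t:ℂ) + 1) * hZ1
  have h4 : (OmegaForm A B C).im = 0 := by rw [hΩval]; exact Complex.ofReal_im _
  refine ⟨hω1, hω2, hω3, h4, ?_⟩
  intro hLI
  have hset : ({A, B, C} : Set (Fin 3 → ℂ)) = Set.range ![A, B, C] := by
    rw [Matrix.range_cons, Matrix.range_cons_cons_empty, Set.singleton_union]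
  refine ⟨?_, ?_, ?_⟩
  · rw [hset]
    simpa using finrank_span_eq_card hLI
  · intro a ha b hb
    rw [Submodule.mem_span_insert] at ha
    obtain ⟨p, x1, hx1, rfl⟩ := ha
    rw [Submodule.mem_span_insert] at hx1
    obtain ⟨q, x2, hx2, rfl⟩ := hx1
    rw [Submodule.mem_span_singleton] at hx2
    obtain ⟨u, rfl⟩ := hx2
    rw [Submodule.mem_span_insert] at hb
    obtain ⟨p', x1', hx1', rfl⟩ := hb
    rw [Submodule.mem_span_insert] at hx1'
    obtain ⟨q', x2', hx2', rfl⟩ := hx1'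
    rw [Submodule.mem_span_singleton] at hx2'
    obtain ⟨u', rfl⟩ := hx2'
    rw [omega_expand, hω1, hω2, hω3]
    ring
  · intro a ha b hb c hc
    rw [Submodule.mem_span_insert] at ha
    obtain ⟨p, x1, hx1, rfl⟩ := ha
    rw [Submodule.mem_span_insert] at hx1
    obtain ⟨q, x2, hx2, rfl⟩ := hx1
    rw [Submodule.mem_span_singleton] at hx2
    obtain ⟨u, rfl⟩ := hx2
    rw [Submodule.mem_span_insert] at hb
    obtain ⟨p', x1', hx1', rfl⟩ := hb
    rw [Submodule.mem_span_insert] at hx1'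
    obtain ⟨q', x2', hx2', rfl⟩ := hx1'
    rw [Submodule.mem_span_singleton] at hx2'
    obtain ⟨u', rfl⟩ := hx2'
    rw [Submodule.mem_span_insert] at hc
    obtain ⟨p'', x1'', hx1'', rfl⟩ := hc
    rw [Submodule.mem_span_insert] at hx1''
    obtain ⟨q'', x2'', hx2'', rfl⟩ := hx1''
    rw [Submodule.mem_span_singleton] at hx2''
    obtain ⟨u'', rfl⟩ := hx2''
    rw [Omega_expand, Complex.mul_im, h4]
    simp
end
end

section
/- Suppose β₁,β₂,β₃ ∈ ℝ are not all zero, y₁,y₂,y₃:ℝ→ℂ are differentiable with dy₁/ds = β₁·conj(y₂y₃), dy₂/ds = β₂·conj(y₃y₁), dy₃/ds = β₃·conj(y₁y₂), and v:ℝ→ℝ is differentiable with |y_j(s)|² = β_j·v(s)+1 for all s and j=1,2,3. Then: (i) the function s ↦ Im(y₁(s)y₂(s)y₃(s)) is constant, equal to some B ∈ ℝ; (ii) dv/ds = 2·Re(y₁y₂y₃) and (dv/ds)² = 4·(Q(v(s)) − B²) for all s, where Q(x) = (β₁x+1)(β₂x+1)(β₃x+1); (iii) Im(conj(y_j(s))·(dy_j/ds)(s))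 = −β_j·B for all s and j=1,2,3; in particular, if y_j(s) = e^{iδ_j(s)}·√(β_j v(s)+1) with δ_j:ℝ→ℝ differentiable and β_j v(s)+1 > 0, then dδ_j/ds = −β_j·B/(β_j v(s)+1). -/
open Complex

private lemma imP_deriv (β₁ β₂ β₃ : ℝ) (y₁ y₂ y₃ : ℝ → ℂ)
    (hy₁ : ∀ s, HasDerivAt y₁ ((β₁ : ℂ) * (starRingEnd ℂ) (y₂ s * y₃ s)) s)
    (hy₂ : ∀ s, HasDerivAt y₂ ((β₂ : ℂ) * (starRingEnd ℂ) (y₃ s * y₁ s)) s)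
    (hy₃ : ∀ s, HasDerivAt y₃ ((β₃ : ℂ) * (starRingEnd ℂ) (y₁ s * y₂ s)) s)
    (s : ℝ) :
    HasDerivAt (fun s => (y₁ s * y₂ s * y₃ s).im) 0 s := by
  have hP := ((hy₁ s).mul (hy₂ s)).mul (hy₃ s)
  have h := Complex.imCLM.hasFDerivAt.comp_hasDerivAt s hP
  refine h.congr_deriv ?_
  simp only [Complex.imCLM_apply, Pi.mul_apply, map_mul, Complex.add_im, Complex.add_re,
    Complex.mul_im, Complex.mul_re,
    Complex.conj_re, Complex.conj_im, Complex.ofReal_re, Complex.ofReal_im]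
  ring

private lemma cyc (β₁ β₂ β₃ : ℝ) (y₁ y₂ y₃ : ℝ → ℂ)
    (hy₁ : ∀ s, HasDerivAt y₁ ((β₁ : ℂ) * (starRingEnd ℂ) (y₂ s * y₃ s)) s)
    (v : ℝ → ℝ) (hv : Differentiable ℝ v)
    (hv₁ : ∀ s, Complex.normSq (y₁ s) = β₁ * v s + 1) (s : ℝ) :
    β₁ * deriv v s = 2 * (β₁ * (y₁ s * y₂ s * y₃ s).re) ∧
    ((starRingEnd ℂ) (y₁ s) * deriv y₁ s).im = -(β₁ * (y₁ s * y₂ s * y₃ s).im) := by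
  constructor
  · have hre := Complex.reCLM.hasFDerivAt.comp_hasDerivAt s (hy₁ s)
    have him := Complex.imCLM.hasFDerivAt.comp_hasDerivAt s (hy₁ s)
    have hns := (hre.mul hre).add (him.mul him)
    have hfeq : (fun s => (Complex.reCLM ∘ y₁) s * (Complex.reCLM ∘ y₁) s
        + (Complex.imCLM ∘ y₁) s * (Complex.imCLM ∘ y₁) s) = fun s => β₁ * v s + 1 := by
      funext t
      simpa [Complex.normSq_apply] using hv₁ t
    rw [show (Complex.reCLM ∘ y₁ * Complex.reCLM ∘ y₁ + Complex.imCLM ∘ y₁ * Complex.imCLM ∘ y₁) = _ from hfeq] at hns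
    have h2 : HasDerivAt (fun s => β₁ * v s + 1) (β₁ * deriv v s) s :=
      ((hv s).hasDerivAt.const_mul β₁).add_const 1
    have heq := h2.unique hns
    rw [heq]
    simp only [Complex.reCLM_apply, Complex.imCLM_apply, Function.comp,
      Complex.mul_re, Complex.mul_im, Complex.conj_re, Complex.conj_im,
      Complex.ofReal_re, Complex.ofReal_im]
    ring
  · rw [(hy₁ s).deriv]
    simp only [Complex.mul_im, Complex.mul_re, Complex.conj_re, Complex.conj_im,
      Complex.ofReal_re, Complex.ofReal_im]
    ring

private lemma polar (β B : ℝ) (y : ℝ → ℂ) (v : ℝ → ℝ) (hv : Differentiable ℝ v)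
    (hdy : ∀ s, ((starRingEnd ℂ) (y s) * deriv y s).im = -(β * B))
    (δ : ℝ → ℝ) (hδ : Differentiable ℝ δ)
    (hpolar : ∀ s, y s = Complex.exp (Complex.I * (δ s : ℂ)) * (Real.sqrt (β * v s + 1) : ℂ))
    (hpos : ∀ s, 0 < β * v s + 1) (s : ℝ) :
    deriv δ s = -(β * B) / (β * v s + 1) := by
  set r : ℝ → ℝ := fun s => β * v s + 1 with hr
  have hrs : 0 < r s := hpos s
  have hgpos : 0 < Real.sqrt (r s) := Real.sqrt_pos.2 hrs
  have hrd : HasDerivAt r (β * deriv v s) s := ((hv s).hasDerivAt.const_mul β).add_const 1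
  have hgd : HasDerivAt (fun s => Real.sqrt (r s)) (β * deriv v s / (2 * Real.sqrt (r s))) s := by
    have h := (Real.hasDerivAt_sqrt (ne_of_gt hrs)).comp s hrd
    refine h.congr_deriv ?_
    field_simp
  have hδd : HasDerivAt (fun s => Complex.I * (δ s : ℂ)) (Complex.I * (Complex.ofReal (deriv δ s))) s :=
    ((hδ s).hasDerivAt.ofReal_comp).const_mul Complex.I
  have hed : HasDerivAt (fun s => Complex.exp (Complex.I * (δ s : ℂ)))
      (Complex.exp (Complex.I * (δ s : ℂ)) * (Complex.I * (Complex.ofReal (deriv δ s)))) s := hδd.cexp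
  have hgC : HasDerivAt (fun s => ((Real.sqrt (r s) : ℝ) : ℂ))
      ((β * deriv v s / (2 * Real.sqrt (r s)) : ℝ) : ℂ) s := hgd.ofReal_comp
  have hmul := hed.mul hgC
  have hyfun : y = fun s => Complex.exp (Complex.I * (δ s : ℂ)) * ((Real.sqrt (r s) : ℝ) : ℂ) :=
    funext hpolar
  have hy' : deriv y s = Complex.exp (Complex.I * (δ s : ℂ)) * (Complex.I * (Complex.ofReal (deriv δ s)))
      * ((Real.sqrt (r s) : ℝ) : ℂ)
      + Complex.exp (Complex.I * (δ s : ℂ)) * ((β * deriv v s / (2 * Real.sqrt (r s)) : ℝ) : ℂ) := by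
    rw [hyfun]; exact hmul.deriv
  have he : (starRingEnd ℂ) (Complex.exp (Complex.I * (δ s : ℂ)))
      * Complex.exp (Complex.I * (δ s : ℂ)) = 1 := by
    rw [mul_comm, Complex.mul_conj]
    rw [Complex.normSq_eq_norm_sq, Complex.norm_exp]
    simp
  have key : ((starRingEnd ℂ) (y s) * deriv y s).im = deriv δ s * r s := by
    rw [hy', hpolar s, map_mul, Complex.conj_ofReal]
    have hexp : (starRingEnd ℂ) (Complex.exp (Complex.I * (δ s : ℂ)))
        * ((Real.sqrt (r s) : ℝ) : ℂ)
        * (Complex.exp (Complex.I * (δ s : ℂ)) * (Complex.I * (Complex.ofReal (deriv δ s)))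
          * ((Real.sqrt (r s) : ℝ) : ℂ)
          + Complex.exp (Complex.I * (δ s : ℂ)) * ((β * deriv v s / (2 * Real.sqrt (r s)) : ℝ) : ℂ))
        = Complex.I * (Complex.ofReal (deriv δ s)) * ((Real.sqrt (r s) : ℝ) : ℂ) ^ 2
          + ((Real.sqrt (r s) : ℝ) : ℂ) * ((β * deriv v s / (2 * Real.sqrt (r s)) : ℝ) : ℂ) := by
      linear_combination (Complex.I * (Complex.ofReal (deriv δ s)) * ((Real.sqrt (r s) : ℝ) : ℂ) ^ 2
        + ((Real.sqrt (r s) : ℝ) : ℂ) * ((β * deriv v s / (2 * Real.sqrt (r s)) : ℝ) : ℂ)) * he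
    rw [hexp]
    have hsq : Real.sqrt (r s) ^ 2 = r s := Real.sq_sqrt (le_of_lt hrs)
    have him : (Complex.I * Complex.ofReal (deriv δ s) * ((Real.sqrt (r s) : ℝ) : ℂ) ^ 2
        + ((Real.sqrt (r s) : ℝ) : ℂ) * ((β * deriv v s / (2 * Real.sqrt (r s)) : ℝ) : ℂ)).im
        = deriv δ s * Real.sqrt (r s) ^ 2 := by
      simp only [pow_two, Complex.add_im, Complex.mul_im, Complex.mul_re, Complex.I_re,
        Complex.I_im, Complex.ofReal_re, Complex.ofReal_im]
      ring
    rw [him, hsq]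
  have : deriv δ s * r s = -(β * B) := key.symm.trans (hdy s)
  rw [eq_div_iff (ne_of_gt hrs)]
  exact this


/-- Proposition 5.2 of the paper.
For solutions `y₁, y₂, y₃` of the ODE system with moduli `|y_j|² = β_j v + 1`:
(i) `Im (y₁ y₂ y₃)` is a constant `B`; (ii) `v' = 2 Re (y₁ y₂ y₃)` and
`(v')² = 4 (Q(v) − B²)` where `Q(x) = (β₁x+1)(β₂x+1)(β₃x+1)`;
(iii) `Im (conj (y_j) ⋅ y_j') = −β_j B`, and in the polar form
`y_j = e^{iδ_j} √(β_j v + 1)` one has `δ_j' = −β_j B / (β_j v + 1)`. -/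
theorem stmt2
    (β₁ β₂ β₃ : ℝ) (hβ : ¬ (β₁ = 0 ∧ β₂ = 0 ∧ β₃ = 0))
    (y₁ y₂ y₃ : ℝ → ℂ)
    (hy₁ : ∀ s, HasDerivAt y₁ ((β₁ : ℂ) * (starRingEnd ℂ) (y₂ s * y₃ s)) s)
    (hy₂ : ∀ s, HasDerivAt y₂ ((β₂ : ℂ) * (starRingEnd ℂ) (y₃ s * y₁ s)) s)
    (hy₃ : ∀ s, HasDerivAt y₃ ((β₃ : ℂ) * (starRingEnd ℂ) (y₁ s * y₂ s)) s)
    (v : ℝ → ℝ) (hv : Differentiable ℝ v)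
    (hv₁ : ∀ s, Complex.normSq (y₁ s) = β₁ * v s + 1)
    (hv₂ : ∀ s, Complex.normSq (y₂ s) = β₂ * v s + 1)
    (hv₃ : ∀ s, Complex.normSq (y₃ s) = β₃ * v s + 1) :
    ∃ B : ℝ,
      (∀ s, (y₁ s * y₂ s * y₃ s).im = B) ∧
      (∀ s, deriv v s = 2 * (y₁ s * y₂ s * y₃ s).re) ∧
      (∀ s, (deriv v s) ^ 2 =
        4 * ((β₁ * v s + 1) * (β₂ * v s + 1) * (β₃ * v s + 1) - B ^ 2)) ∧
      (∀ s, ((starRingEnd ℂ) (y₁ s) * deriv y₁ s).im = -(β₁ * B) ∧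
            ((starRingEnd ℂ) (y₂ s) * deriv y₂ s).im = -(β₂ * B) ∧
            ((starRingEnd ℂ) (y₃ s) * deriv y₃ s).im = -(β₃ * B)) ∧
      (∀ δ : ℝ → ℝ, Differentiable ℝ δ →
        (∀ s, y₁ s = Complex.exp (Complex.I * (δ s : ℂ)) * (Real.sqrt (β₁ * v s + 1) : ℂ)) →
        (∀ s, 0 < β₁ * v s + 1) →
        ∀ s, deriv δ s = -(β₁ * B) / (β₁ * v s + 1)) ∧
      (∀ δ : ℝ → ℝ, Differentiable ℝ δ →
        (∀ s, y₂ s = Complex.exp (Complex.I * (δ s : ℂ)) * (Real.sqrt (β₂ * v s + 1) : ℂ)) →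
        (∀ s, 0 < β₂ * v s + 1) →
        ∀ s, deriv δ s = -(β₂ * B) / (β₂ * v s + 1)) ∧
      (∀ δ : ℝ → ℝ, Differentiable ℝ δ →
        (∀ s, y₃ s = Complex.exp (Complex.I * (δ s : ℂ)) * (Real.sqrt (β₃ * v s + 1) : ℂ)) →
        (∀ s, 0 < β₃ * v s + 1) →
        ∀ s, deriv δ s = -(β₃ * B) / (β₃ * v s + 1)) := by
  set B : ℝ := (y₁ 0 * y₂ 0 * y₃ 0).im with hBdef
  have hB : ∀ s, (y₁ s * y₂ s * y₃ s).im = B := by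
    intro s
    exact is_const_of_deriv_eq_zero
      (fun t => (imP_deriv β₁ β₂ β₃ y₁ y₂ y₃ hy₁ hy₂ hy₃ t).differentiableAt)
      (fun t => (imP_deriv β₁ β₂ β₃ y₁ y₂ y₃ hy₁ hy₂ hy₃ t).deriv) s 0
  have hc₁ := cyc β₁ β₂ β₃ y₁ y₂ y₃ hy₁ v hv hv₁
  have hc₂ := cyc β₂ β₃ β₁ y₂ y₃ y₁ hy₂ v hv hv₂
  have hc₃ := cyc β₃ β₁ β₂ y₃ y₁ y₂ hy₃ v hv hv₃
  have hrot₂ : ∀ s, y₂ s * y₃ s * y₁ s = y₁ s * y₂ s * y₃ s := fun s => by ring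
  have hrot₃ : ∀ s, y₃ s * y₁ s * y₂ s = y₁ s * y₂ s * y₃ s := fun s => by ring
  have hv' : ∀ s, deriv v s = 2 * (y₁ s * y₂ s * y₃ s).re := by
    intro s
    rcases not_and_or.1 hβ with h | h
    · exact mul_left_cancel₀ h (by rw [(hc₁ s).1]; ring)
    rcases not_and_or.1 h with h | h
    · refine mul_left_cancel₀ h ?_
      have := (hc₂ s).1
      rw [hrot₂ s] at this
      rw [this]; ring
    · refine mul_left_cancel₀ h ?_
      have := (hc₃ s).1
      rw [hrot₃ s] at this
      rw [this]; ring
  have hiii : ∀ s, ((starRingEnd ℂ) (y₁ s) * deriv y₁ s).im = -(β₁ * B) ∧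
      ((starRingEnd ℂ) (y₂ s) * deriv y₂ s).im = -(β₂ * B) ∧
      ((starRingEnd ℂ) (y₃ s) * deriv y₃ s).im = -(β₃ * B) := by
    intro s
    refine ⟨?_, ?_, ?_⟩
    · rw [(hc₁ s).2, hB s]
    · have := (hc₂ s).2
      rw [hrot₂ s, hB s] at this
      exact this
    · have := (hc₃ s).2
      rw [hrot₃ s, hB s] at this
      exact this
  refine ⟨B, hB, hv', ?_, hiii, ?_, ?_, ?_⟩
  · intro s
    have h1 : (β₁ * v s + 1) * (β₂ * v s + 1) * (β₃ * v s + 1)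
        = Complex.normSq (y₁ s * y₂ s * y₃ s) := by
      rw [map_mul, map_mul, hv₁, hv₂, hv₃]
    rw [hv' s, h1, ← hB s, Complex.normSq_apply]
    ring
  · exact fun δ hδ hp hpos s =>
      polar β₁ B y₁ v hv (fun t => (hiii t).1) δ hδ hp hpos s
  · exact fun δ hδ hp hpos s =>
      polar β₂ B y₂ v hv (fun t => (hiii t).2.1) δ hδ hp hpos s
  · exact fun δ hδ hp hpos s =>
      polar β₃ B y₃ v hv (fun t => (hiii t).2.2) δ hδ hp hpos s
end

section
/- Suppose γ₁,γ₂,γ₃ ∈ ℝ are not all zero, z₁,z₂,z₃:ℝ→ℂ are differentiable with dz₁/dt = γ₁·conj(z₂z₃), dz₂/dt = γ₂·conj(z₃z₁), dz₃/dt = γ₃·conj(z₁z₂), and w:ℝ→ℝ is differentiable with |z_j(t)|² = γ_j·w(t)+1 for all t and j=1,2,3. Then: (i) the function t ↦ Im(z₁(t)z₂(t)z₃(t)) is constant, equal to some C ∈ ℝ; (ii) dw/dt = 2·Re(z₁z₂z₃) and (dw/dt)² = 4·(R(w(t)) − C²) for all t, where R(x) = (γ₁x+1)(γ₂x+1)(γ₃x+1);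 (iii) Im(conj(z_j(t))·(dz_j/dt)(t)) = −γ_j·C for all t and j=1,2,3; in particular, if z_j(t) = e^{iε_j(t)}·√(γ_j w(t)+1) with ε_j:ℝ→ℝ differentiable and γ_j w(t)+1 > 0, then dε_j/dt = −γ_j·C/(γ_j w(t)+1). -/
open Complex

lemma aux_normSq {z : ℝ → ℂ} {z' : ℂ} {s : ℝ} (h : HasDerivAt z z' s) :
    HasDerivAt (fun t => Complex.normSq (z t)) (2 * ((starRingEnd ℂ) (z s) * z').re) s := by
  have hc : HasDerivAt (fun t => (starRingEnd ℂ) (z t)) ((starRingEnd ℂ) z') s := by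
    simpa using h.star
  have h1 := hc.mul h
  have h2 : HasDerivAt (fun t => ((starRingEnd ℂ) (z t) * z t).re)
      (((starRingEnd ℂ) z' * z s + (starRingEnd ℂ) (z s) * z').re) s :=
    Complex.reCLM.hasFDerivAt.comp_hasDerivAt s h1
  have hfun : (fun t => ((starRingEnd ℂ) (z t) * z t).re) = fun t => Complex.normSq (z t) := by
    funext t
    rw [mul_comm, Complex.mul_conj, Complex.ofReal_re]
  rw [hfun] at h2
  convert h2 using 1
  simp [Complex.add_re, Complex.mul_re, Complex.conj_re, Complex.conj_im]
  ring

lemma aux_phase (γ C : ℝ) (w δ : ℝ → ℝ) (hw : Differentiable ℝ w) (hδ : Differentiable ℝ δ)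
    (z : ℝ → ℂ)
    (hzdef : ∀ s, z s = Complex.exp (Complex.I * (δ s : ℂ)) * (Real.sqrt (γ * w s + 1) : ℂ))
    (hpos : ∀ s, 0 < γ * w s + 1)
    (him : ∀ s, ((starRingEnd ℂ) (z s) * deriv z s).im = -(γ * C)) :
    ∀ s, deriv δ s = -(γ * C) / (γ * w s + 1) := by
  intro s
  set r := Real.sqrt (γ * w s + 1) with hr_def
  set u := γ * deriv w s / (2 * r) with hu_def
  set E := Complex.exp (Complex.I * (δ s : ℂ)) with hE_def
  have hf : HasDerivAt (fun t => γ * w t + 1) (γ * deriv w s) s :=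
    ((hw s).hasDerivAt.const_mul γ).add_const 1
  have hr : HasDerivAt (fun t => Real.sqrt (γ * w t + 1)) u s := hf.sqrt (ne_of_gt (hpos s))
  have hrC : HasDerivAt (fun t => ((Real.sqrt (γ * w t + 1) : ℝ) : ℂ)) ((u : ℝ) : ℂ) s :=
    hr.ofReal_comp
  have hδC : HasDerivAt (fun t => Complex.I * (δ t : ℂ)) (Complex.I * ((deriv δ s : ℝ) : ℂ)) s :=
    ((hδ s).hasDerivAt.ofReal_comp).const_mul Complex.I
  have hexp : HasDerivAt (fun t => Complex.exp (Complex.I * (δ t : ℂ)))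
      (E * (Complex.I * ((deriv δ s : ℝ) : ℂ))) s := hδC.cexp
  have hzD : HasDerivAt z (E * (Complex.I * ((deriv δ s : ℝ) : ℂ)) * (r : ℂ) + E * (u : ℂ)) s := by
    rw [show z = fun t => Complex.exp (Complex.I * (δ t : ℂ)) * (Real.sqrt (γ * w t + 1) : ℂ)
      from funext hzdef]
    exact hexp.mul hrC
  have hd : deriv z s = E * (Complex.I * ((deriv δ s : ℝ) : ℂ)) * (r : ℂ) + E * (u : ℂ) := hzD.deriv
  have hE1 : (starRingEnd ℂ) E * E = 1 := by
    rw [mul_comm, Complex.mul_conj]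
    rw [hE_def]
    norm_cast
    rw [Complex.normSq_eq_norm_sq, Complex.norm_exp]
    simp
  have key := him s
  rw [hd, hzdef s] at key
  have expand : (starRingEnd ℂ) (E * (r : ℂ)) *
      (E * (Complex.I * ((deriv δ s : ℝ) : ℂ)) * (r : ℂ) + E * (u : ℂ)) =
      ((starRingEnd ℂ) E * E) * (Complex.I * ((deriv δ s : ℝ) : ℂ) * (r : ℂ) * (r : ℂ)
        + (u : ℂ) * (r : ℂ)) := by
    rw [map_mul, Complex.conj_ofReal]
    ring
  rw [expand, hE1, one_mul] at key
  have him2 : (Complex.I * ((deriv δ s : ℝ) : ℂ) * (r : ℂ) * (r : ℂ) + (u : ℂ) * (r : ℂ)).im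
      = deriv δ s * (r * r) := by
    simp [Complex.add_im, Complex.mul_im, Complex.mul_re]
    ring
  rw [him2] at key
  have hrr : r * r = γ * w s + 1 := Real.mul_self_sqrt (le_of_lt (hpos s))
  rw [hrr] at key
  rw [eq_div_iff (ne_of_gt (hpos s))]
  linarith [key]


/-- Proposition 5.3 of the paper.
For solutions `z₁, z₂, z₃` of the ODE system with moduli `|z_j|² = γ_j w + 1`:
(i) `Im (z₁ z₂ z₃)` is a constant `C`; (ii) `w' = 2 Re (z₁ z₂ z₃)` and
`(w')² = 4 (R(w) − C²)` where `R(x) = (γ₁x+1)(γ₂x+1)(γ₃x+1)`;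
(iii) `Im (conj (z_j) ⋅ z_j') = −γ_j C`, and in the polar form
`z_j = e^{iε_j} √(γ_j w + 1)` one has `ε_j' = −γ_j C / (γ_j w + 1)`. -/
theorem stmt3
    (γ₁ γ₂ γ₃ : ℝ) (hγ : ¬ (γ₁ = 0 ∧ γ₂ = 0 ∧ γ₃ = 0))
    (z₁ z₂ z₃ : ℝ → ℂ)
    (hz₁ : ∀ s, HasDerivAt z₁ ((γ₁ : ℂ) * (starRingEnd ℂ) (z₂ s * z₃ s)) s)
    (hz₂ : ∀ s, HasDerivAt z₂ ((γ₂ : ℂ) * (starRingEnd ℂ) (z₃ s * z₁ s)) s)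
    (hz₃ : ∀ s, HasDerivAt z₃ ((γ₃ : ℂ) * (starRingEnd ℂ) (z₁ s * z₂ s)) s)
    (w : ℝ → ℝ) (hw : Differentiable ℝ w)
    (hw₁ : ∀ s, Complex.normSq (z₁ s) = γ₁ * w s + 1)
    (hw₂ : ∀ s, Complex.normSq (z₂ s) = γ₂ * w s + 1)
    (hw₃ : ∀ s, Complex.normSq (z₃ s) = γ₃ * w s + 1) :
    ∃ C : ℝ,
      (∀ s, (z₁ s * z₂ s * z₃ s).im = C) ∧
      (∀ s, deriv w s = 2 * (z₁ s * z₂ s * z₃ s).re) ∧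
      (∀ s, (deriv w s) ^ 2 =
        4 * ((γ₁ * w s + 1) * (γ₂ * w s + 1) * (γ₃ * w s + 1) - C ^ 2)) ∧
      (∀ s, ((starRingEnd ℂ) (z₁ s) * deriv z₁ s).im = -(γ₁ * C) ∧
            ((starRingEnd ℂ) (z₂ s) * deriv z₂ s).im = -(γ₂ * C) ∧
            ((starRingEnd ℂ) (z₃ s) * deriv z₃ s).im = -(γ₃ * C)) ∧
      (∀ δ : ℝ → ℝ, Differentiable ℝ δ →
        (∀ s, z₁ s = Complex.exp (Complex.I * (δ s : ℂ)) * (Real.sqrt (γ₁ * w s + 1) : ℂ)) →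
        (∀ s, 0 < γ₁ * w s + 1) →
        ∀ s, deriv δ s = -(γ₁ * C) / (γ₁ * w s + 1)) ∧
      (∀ δ : ℝ → ℝ, Differentiable ℝ δ →
        (∀ s, z₂ s = Complex.exp (Complex.I * (δ s : ℂ)) * (Real.sqrt (γ₂ * w s + 1) : ℂ)) →
        (∀ s, 0 < γ₂ * w s + 1) →
        ∀ s, deriv δ s = -(γ₂ * C) / (γ₂ * w s + 1)) ∧
      (∀ δ : ℝ → ℝ, Differentiable ℝ δ →
        (∀ s, z₃ s = Complex.exp (Complex.I * (δ s : ℂ)) * (Real.sqrt (γ₃ * w s + 1) : ℂ)) →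
        (∀ s, 0 < γ₃ * w s + 1) →
        ∀ s, deriv δ s = -(γ₃ * C) / (γ₃ * w s + 1)) := by

  -- the product P = z₁ z₂ z₃ and its derivative
  set C := (z₁ 0 * z₂ 0 * z₃ 0).im with hC_def
  have hP : ∀ s, HasDerivAt (fun t => z₁ t * z₂ t * z₃ t)
      (((γ₁ : ℂ) * (starRingEnd ℂ) (z₂ s * z₃ s) * z₂ s
          + z₁ s * ((γ₂ : ℂ) * (starRingEnd ℂ) (z₃ s * z₁ s))) * z₃ s
        + z₁ s * z₂ s * ((γ₃ : ℂ) * (starRingEnd ℂ) (z₁ s * z₂ s))) s :=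
    fun s => ((hz₁ s).mul (hz₂ s)).mul (hz₃ s)
  have hIm0 : ∀ s, (((γ₁ : ℂ) * (starRingEnd ℂ) (z₂ s * z₃ s) * z₂ s
          + z₁ s * ((γ₂ : ℂ) * (starRingEnd ℂ) (z₃ s * z₁ s))) * z₃ s
        + z₁ s * z₂ s * ((γ₃ : ℂ) * (starRingEnd ℂ) (z₁ s * z₂ s))).im = 0 := by
    intro s
    simp [Complex.add_im, Complex.add_re, Complex.mul_im, Complex.mul_re,
      Complex.conj_re, Complex.conj_im, Complex.ofReal_re, Complex.ofReal_im]
    ring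
  have hImDeriv : ∀ s, HasDerivAt (fun t => (z₁ t * z₂ t * z₃ t).im) 0 s := by
    intro s
    have h : HasDerivAt (fun t => (z₁ t * z₂ t * z₃ t).im)
        ((((γ₁ : ℂ) * (starRingEnd ℂ) (z₂ s * z₃ s) * z₂ s
          + z₁ s * ((γ₂ : ℂ) * (starRingEnd ℂ) (z₃ s * z₁ s))) * z₃ s
        + z₁ s * z₂ s * ((γ₃ : ℂ) * (starRingEnd ℂ) (z₁ s * z₂ s))).im) s :=
      Complex.imCLM.hasFDerivAt.comp_hasDerivAt s (hP s)
    exact hIm0 s ▸ h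
  -- (i) Im P is constant
  have hconst : ∀ s, (z₁ s * z₂ s * z₃ s).im = C := by
    intro s
    exact is_const_of_deriv_eq_zero (fun t => (hImDeriv t).differentiableAt)
      (fun t => (hImDeriv t).deriv) s 0
  -- the per-component relation γⱼ · w' = 2 γⱼ · Re P
  have key₁ : ∀ s, γ₁ * deriv w s = 2 * (γ₁ * (z₁ s * z₂ s * z₃ s).re) := by
    intro s
    have hA := aux_normSq (hz₁ s)
    have hB : HasDerivAt (fun t => γ₁ * w t + 1) (γ₁ * deriv w s) s :=
      ((hw s).hasDerivAt.const_mul γ₁).add_const 1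
    rw [show (fun t => Complex.normSq (z₁ t)) = fun t => γ₁ * w t + 1 from funext hw₁] at hA
    rw [← hA.unique hB]
    simp [Complex.mul_re, Complex.mul_im, Complex.conj_re, Complex.conj_im,
      Complex.ofReal_re, Complex.ofReal_im]
    ring
  have key₂ : ∀ s, γ₂ * deriv w s = 2 * (γ₂ * (z₁ s * z₂ s * z₃ s).re) := by
    intro s
    have hA := aux_normSq (hz₂ s)
    have hB : HasDerivAt (fun t => γ₂ * w t + 1) (γ₂ * deriv w s) s :=
      ((hw s).hasDerivAt.const_mul γ₂).add_const 1
    rw [show (fun t => Complex.normSq (z₂ t)) = fun t => γ₂ * w t + 1 from funext hw₂] at hA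
    rw [← hA.unique hB]
    simp [Complex.mul_re, Complex.mul_im, Complex.conj_re, Complex.conj_im,
      Complex.ofReal_re, Complex.ofReal_im]
    ring
  have key₃ : ∀ s, γ₃ * deriv w s = 2 * (γ₃ * (z₁ s * z₂ s * z₃ s).re) := by
    intro s
    have hA := aux_normSq (hz₃ s)
    have hB : HasDerivAt (fun t => γ₃ * w t + 1) (γ₃ * deriv w s) s :=
      ((hw s).hasDerivAt.const_mul γ₃).add_const 1
    rw [show (fun t => Complex.normSq (z₃ t)) = fun t => γ₃ * w t + 1 from funext hw₃] at hA
    rw [← hA.unique hB]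
    simp [Complex.mul_re, Complex.mul_im, Complex.conj_re, Complex.conj_im,
      Complex.ofReal_re, Complex.ofReal_im]
    ring
  -- (ii) w' = 2 Re P
  have hw' : ∀ s, deriv w s = 2 * (z₁ s * z₂ s * z₃ s).re := by
    intro s
    by_cases h1 : γ₁ = 0
    · by_cases h2 : γ₂ = 0
      · have h3 : γ₃ ≠ 0 := fun h3 => hγ ⟨h1, h2, h3⟩
        apply mul_left_cancel₀ h3
        rw [key₃ s]; ring
      · apply mul_left_cancel₀ h2
        rw [key₂ s]; ring
    · apply mul_left_cancel₀ h1
      rw [key₁ s]; ring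
  -- (iii)
  have hiii : ∀ s, ((starRingEnd ℂ) (z₁ s) * deriv z₁ s).im = -(γ₁ * C) ∧
      ((starRingEnd ℂ) (z₂ s) * deriv z₂ s).im = -(γ₂ * C) ∧
      ((starRingEnd ℂ) (z₃ s) * deriv z₃ s).im = -(γ₃ * C) := by
    intro s
    refine ⟨?_, ?_, ?_⟩
    · rw [(hz₁ s).deriv, ← hconst s]
      simp [Complex.mul_im, Complex.mul_re, Complex.conj_re, Complex.conj_im,
        Complex.ofReal_re, Complex.ofReal_im]
      ring
    · rw [(hz₂ s).deriv, ← hconst s]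
      simp [Complex.mul_im, Complex.mul_re, Complex.conj_re, Complex.conj_im,
        Complex.ofReal_re, Complex.ofReal_im]
      ring
    · rw [(hz₃ s).deriv, ← hconst s]
      simp [Complex.mul_im, Complex.mul_re, Complex.conj_re, Complex.conj_im,
        Complex.ofReal_re, Complex.ofReal_im]
      ring
  refine ⟨C, hconst, hw', ?_, hiii, ?_, ?_, ?_⟩
  · intro s
    have h1 : (γ₁ * w s + 1) * (γ₂ * w s + 1) * (γ₃ * w s + 1)
        = (z₁ s * z₂ s * z₃ s).re ^ 2 + (z₁ s * z₂ s * z₃ s).im ^ 2 := by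
      rw [← hw₁ s, ← hw₂ s, ← hw₃ s, ← map_mul, ← map_mul]
      rw [Complex.normSq_apply]
      ring
    rw [hw' s, h1, ← hconst s]
    ring
  · exact fun δ hδ hzdef hpos => aux_phase γ₁ C w δ hw hδ z₁ hzdef hpos
      (fun s => (hiii s).1)
  · exact fun δ hδ hzdef hpos => aux_phase γ₂ C w δ hw hδ z₂ hzdef hpos
      (fun s => (hiii s).2.1)
  · exact fun δ hδ hzdef hpos => aux_phase γ₃ C w δ hw hδ z₃ hzdef hpos
      (fun s => (hiii s).2.2)
end

section
/- For every (r,s,t) ∈ ℝ³, the partial derivatives ∂Φ/∂r, ∂Φ/∂s, ∂Φ/∂t are orthogonal with respect to the real inner product: Re⟨∂Φ/∂r, ∂Φ/∂s⟩ = 0, Re⟨∂Φ/∂r, ∂Φ/∂t⟩ = 0, and Re⟨∂Φ/∂s, ∂Φ/∂t⟩ = 0. -/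
noncomputable section

open Complex

/-- The squared Hermitian norm on `ℂ³`. -/
def hermSq (a : Fin 3 → ℂ) : ℝ :=
  Complex.normSq (a 0) + Complex.normSq (a 1) + Complex.normSq (a 2)

/-- The partial derivatives `∂Φ/∂r`, `∂Φ/∂s`, `∂Φ/∂t` are
orthogonal for the real inner product `Re ⟨·,·⟩`. -/
theorem stmt5
    (β₁ β₂ β₃ γ₁ γ₂ γ₃ : ℝ)
    (hβ : β₁ + β₂ + β₃ = 0) (hγ : γ₁ + γ₂ + γ₃ = 0)
    (hβγ : β₁ * γ₁ + β₂ * γ₂ + β₃ * γ₃ = 0)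
    (y₁ y₂ y₃ z₁ z₂ z₃ : ℝ → ℂ)
    (hy₁ : ∀ s, HasDerivAt y₁ ((β₁ : ℂ) * (starRingEnd ℂ) (y₂ s * y₃ s)) s)
    (hy₂ : ∀ s, HasDerivAt y₂ ((β₂ : ℂ) * (starRingEnd ℂ) (y₃ s * y₁ s)) s)
    (hy₃ : ∀ s, HasDerivAt y₃ ((β₃ : ℂ) * (starRingEnd ℂ) (y₁ s * y₂ s)) s)
    (hz₁ : ∀ t, HasDerivAt z₁ ((γ₁ : ℂ) * (starRingEnd ℂ) (z₂ t * z₃ t)) t)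
    (hz₂ : ∀ t, HasDerivAt z₂ ((γ₂ : ℂ) * (starRingEnd ℂ) (z₃ t * z₁ t)) t)
    (hz₃ : ∀ t, HasDerivAt z₃ ((γ₃ : ℂ) * (starRingEnd ℂ) (z₁ t * z₂ t)) t)
    (v w : ℝ → ℝ)
    (hv₁ : ∀ s, Complex.normSq (y₁ s) = β₁ * v s + 1)
    (hv₂ : ∀ s, Complex.normSq (y₂ s) = β₂ * v s + 1)
    (hv₃ : ∀ s, Complex.normSq (y₃ s) = β₃ * v s + 1)
    (hw₁ : ∀ t, Complex.normSq (z₁ t) = γ₁ * w t + 1)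
    (hw₂ : ∀ t, Complex.normSq (z₂ t) = γ₂ * w t + 1)
    (hw₃ : ∀ t, Complex.normSq (z₃ t) = γ₃ * w t + 1)
    (Φ : ℝ → ℝ → ℝ → (Fin 3 → ℂ))
    (hΦ : ∀ r s t, Φ r s t =
      ![(Real.sqrt 3 : ℂ)⁻¹ * (r : ℂ) * y₁ s * z₁ t,
        (Real.sqrt 3 : ℂ)⁻¹ * (r : ℂ) * y₂ s * z₂ t,
        (Real.sqrt 3 : ℂ)⁻¹ * (r : ℂ) * y₃ s * z₃ t]) :
    ∀ r s t : ℝ,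
      (herm (deriv (fun x => Φ x s t) r) (deriv (fun x => Φ r x t) s)).re = 0 ∧
      (herm (deriv (fun x => Φ x s t) r) (deriv (fun x => Φ r s x) t)).re = 0 ∧
      (herm (deriv (fun x => Φ r x t) s) (deriv (fun x => Φ r s x) t)).re = 0 := by
  intro r s t
  set c : ℂ := (Real.sqrt 3 : ℂ)⁻¹ with hc
  have hofr : HasDerivAt (fun x : ℝ => (x : ℂ)) 1 r := by
    simpa using (hasDerivAt_id r).ofReal_comp
  have hdr : deriv (fun x => Φ x s t) r =
      ![c * 1 * y₁ s * z₁ t, c * 1 * y₂ s * z₂ t, c * 1 * y₃ s * z₃ t] := by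
    have h : HasDerivAt (fun x => Φ x s t)
        ![c * 1 * y₁ s * z₁ t, c * 1 * y₂ s * z₂ t, c * 1 * y₃ s * z₃ t] r := by
      simp only [hΦ, ← hc]
      rw [hasDerivAt_pi]
      intro i
      fin_cases i
      · exact ((hofr.const_mul c).mul_const (y₁ s)).mul_const (z₁ t)
      · exact ((hofr.const_mul c).mul_const (y₂ s)).mul_const (z₂ t)
      · exact ((hofr.const_mul c).mul_const (y₃ s)).mul_const (z₃ t)
    exact h.deriv
  have hds : deriv (fun x => Φ r x t) s =
      ![c * (r : ℂ) * ((β₁ : ℂ) * (starRingEnd ℂ) (y₂ s * y₃ s)) * z₁ t,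
        c * (r : ℂ) * ((β₂ : ℂ) * (starRingEnd ℂ) (y₃ s * y₁ s)) * z₂ t,
        c * (r : ℂ) * ((β₃ : ℂ) * (starRingEnd ℂ) (y₁ s * y₂ s)) * z₃ t] := by
    have h : HasDerivAt (fun x => Φ r x t)
        ![c * (r : ℂ) * ((β₁ : ℂ) * (starRingEnd ℂ) (y₂ s * y₃ s)) * z₁ t,
          c * (r : ℂ) * ((β₂ : ℂ) * (starRingEnd ℂ) (y₃ s * y₁ s)) * z₂ t,
          c * (r : ℂ) * ((β₃ : ℂ) * (starRingEnd ℂ) (y₁ s * y₂ s)) * z₃ t] s := by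
      simp only [hΦ, ← hc]
      rw [hasDerivAt_pi]
      intro i
      fin_cases i
      · exact ((hy₁ s).const_mul (c * (r : ℂ))).mul_const (z₁ t)
      · exact ((hy₂ s).const_mul (c * (r : ℂ))).mul_const (z₂ t)
      · exact ((hy₃ s).const_mul (c * (r : ℂ))).mul_const (z₃ t)
    exact h.deriv
  have hdt : deriv (fun x => Φ r s x) t =
      ![c * (r : ℂ) * y₁ s * ((γ₁ : ℂ) * (starRingEnd ℂ) (z₂ t * z₃ t)),
        c * (r : ℂ) * y₂ s * ((γ₂ : ℂ) * (starRingEnd ℂ) (z₃ t * z₁ t)),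
        c * (r : ℂ) * y₃ s * ((γ₃ : ℂ) * (starRingEnd ℂ) (z₁ t * z₂ t))] := by
    have h : HasDerivAt (fun x => Φ r s x)
        ![c * (r : ℂ) * y₁ s * ((γ₁ : ℂ) * (starRingEnd ℂ) (z₂ t * z₃ t)),
          c * (r : ℂ) * y₂ s * ((γ₂ : ℂ) * (starRingEnd ℂ) (z₃ t * z₁ t)),
          c * (r : ℂ) * y₃ s * ((γ₃ : ℂ) * (starRingEnd ℂ) (z₁ t * z₂ t))] t := by
      simp only [hΦ, ← hc]
      rw [hasDerivAt_pi]
      intro i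
      fin_cases i
      · exact (hz₁ t).const_mul (c * (r : ℂ) * y₁ s)
      · exact (hz₂ t).const_mul (c * (r : ℂ) * y₂ s)
      · exact (hz₃ t).const_mul (c * (r : ℂ) * y₃ s)
    exact h.deriv
  have hβ' : (β₁ : ℂ) + β₂ + β₃ = 0 := by exact_mod_cast congrArg (Complex.ofReal) hβ
  have hγ' : (γ₁ : ℂ) + γ₂ + γ₃ = 0 := by exact_mod_cast congrArg (Complex.ofReal) hγ
  have hβγ' : (β₁ : ℂ) * γ₁ + (β₂ : ℂ) * γ₂ + (β₃ : ℂ) * γ₃ = 0 := by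
    exact_mod_cast congrArg (Complex.ofReal) hβγ
  have hcc : (starRingEnd ℂ) c = c := by rw [hc, map_inv₀, Complex.conj_ofReal]
  have hY₁ : y₁ s * (starRingEnd ℂ) (y₁ s) = (β₁ : ℂ) * v s + 1 := by
    rw [Complex.mul_conj, hv₁]; push_cast; ring
  have hY₂ : y₂ s * (starRingEnd ℂ) (y₂ s) = (β₂ : ℂ) * v s + 1 := by
    rw [Complex.mul_conj, hv₂]; push_cast; ring
  have hY₃ : y₃ s * (starRingEnd ℂ) (y₃ s) = (β₃ : ℂ) * v s + 1 := by
    rw [Complex.mul_conj, hv₃]; push_cast; ring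
  have hZ₁ : z₁ t * (starRingEnd ℂ) (z₁ t) = (γ₁ : ℂ) * w t + 1 := by
    rw [Complex.mul_conj, hw₁]; push_cast; ring
  have hZ₂ : z₂ t * (starRingEnd ℂ) (z₂ t) = (γ₂ : ℂ) * w t + 1 := by
    rw [Complex.mul_conj, hw₂]; push_cast; ring
  have hZ₃ : z₃ t * (starRingEnd ℂ) (z₃ t) = (γ₃ : ℂ) * w t + 1 := by
    rw [Complex.mul_conj, hw₃]; push_cast; ring
  have h1 : herm (deriv (fun x => Φ x s t) r) (deriv (fun x => Φ r x t) s) = 0 := by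
    rw [hdr, hds]
    simp only [herm, Matrix.cons_val_zero, Matrix.cons_val_one, Matrix.head_cons,
      Matrix.cons_val_two, Matrix.tail_cons, map_mul, map_inv₀, Complex.conj_ofReal,
      Complex.conj_conj, map_one, hcc, ← hc]
    linear_combination (c * c * (r : ℂ) * (y₁ s * y₂ s * y₃ s)) *
        ((β₁ : ℂ) * hZ₁ + (β₂ : ℂ) * hZ₂ + (β₃ : ℂ) * hZ₃ + hβ' + (w t : ℂ) * hβγ')
  have h2 : herm (deriv (fun x => Φ x s t) r) (deriv (fun x => Φ r s x) t) = 0 := by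
    rw [hdr, hdt]
    simp only [herm, Matrix.cons_val_zero, Matrix.cons_val_one, Matrix.head_cons,
      Matrix.cons_val_two, Matrix.tail_cons, map_mul, map_inv₀, Complex.conj_ofReal,
      Complex.conj_conj, map_one, hcc, ← hc]
    linear_combination (c * c * (r : ℂ) * (z₁ t * z₂ t * z₃ t)) *
        ((γ₁ : ℂ) * hY₁ + (γ₂ : ℂ) * hY₂ + (γ₃ : ℂ) * hY₃ + hγ' + (v s : ℂ) * hβγ')
  have h3 : herm (deriv (fun x => Φ r x t) s) (deriv (fun x => Φ r s x) t) = 0 := by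
    rw [hds, hdt]
    simp only [herm, Matrix.cons_val_zero, Matrix.cons_val_one, Matrix.head_cons,
      Matrix.cons_val_two, Matrix.tail_cons, map_mul, map_inv₀, Complex.conj_ofReal,
      Complex.conj_conj, map_one, hcc, ← hc]
    linear_combination (c * c * (r : ℂ) * (r : ℂ) *
        ((starRingEnd ℂ) (y₁ s) * (starRingEnd ℂ) (y₂ s) * (starRingEnd ℂ) (y₃ s)) *
        (z₁ t * z₂ t * z₃ t)) * hβγ'
  exact ⟨by rw [h1]; simp, by rw [h2]; simp, by rw [h3]; simp⟩
end
end

section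
/- With the normalized values of β_j, γ_j determined by θ, define φ:ℝ²→ℂ³ by φ(s,t) = Φ(1,s,t), and write ∂φ/∂z = (1/2)(∂φ/∂s − i·∂φ/∂t) and ∂φ/∂z̄ = (1/2)(∂φ/∂s + i·∂φ/∂t). Then for all (s,t): ⟨∂φ/∂z, φ⟩ = 0, ⟨∂φ/∂z̄, φ⟩ = 0, ⟨∂φ/∂z, ∂φ/∂z̄⟩ = 0, and |∂φ/∂z|² = |∂φ/∂z̄|² = a + b·v(s) + c·w(t), where a = 1/6, b = −(1/2)β₁β₂β₃ and c = −(1/2)γ₁γ₂γ₃. -/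
noncomputable section

open Complex

/-- from the analysis of §6.1 of the paper. For
`φ(s,t) = Φ(1,s,t)` with `∂φ/∂z = (1/2)(∂φ/∂s − i ∂φ/∂t)` and
`∂φ/∂z̄ = (1/2)(∂φ/∂s + i ∂φ/∂t)`, one has `⟨∂φ/∂z, φ⟩ = ⟨∂φ/∂z̄, φ⟩ = 0`,
`⟨∂φ/∂z, ∂φ/∂z̄⟩ = 0` and `|∂φ/∂z|² = |∂φ/∂z̄|² = a + b v(s) + c w(t)`. -/
theorem stmt8
    (θ : ℝ) (β₁ β₂ β₃ γ₁ γ₂ γ₃ a b c : ℝ)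
    (hβ₁ : β₁ = Real.cos θ / Real.sqrt 2 - Real.sin θ / Real.sqrt 6)
    (hβ₂ : β₂ = -(Real.cos θ / Real.sqrt 2) - Real.sin θ / Real.sqrt 6)
    (hβ₃ : β₃ = 2 * Real.sin θ / Real.sqrt 6)
    (hγ₁ : γ₁ = -(Real.cos θ / Real.sqrt 6) - Real.sin θ / Real.sqrt 2)
    (hγ₂ : γ₂ = -(Real.cos θ / Real.sqrt 6) + Real.sin θ / Real.sqrt 2)
    (hγ₃ : γ₃ = 2 * Real.cos θ / Real.sqrt 6)
    (ha : a = 1 / 6)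
    (hb : b = -(1 / 2) * (β₁ * β₂ * β₃))
    (hc : c = -(1 / 2) * (γ₁ * γ₂ * γ₃))
    (y₁ y₂ y₃ z₁ z₂ z₃ : ℝ → ℂ)
    (hy₁ : ∀ s, HasDerivAt y₁ ((β₁ : ℂ) * (starRingEnd ℂ) (y₂ s * y₃ s)) s)
    (hy₂ : ∀ s, HasDerivAt y₂ ((β₂ : ℂ) * (starRingEnd ℂ) (y₃ s * y₁ s)) s)
    (hy₃ : ∀ s, HasDerivAt y₃ ((β₃ : ℂ) * (starRingEnd ℂ) (y₁ s * y₂ s)) s)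
    (hz₁ : ∀ t, HasDerivAt z₁ ((γ₁ : ℂ) * (starRingEnd ℂ) (z₂ t * z₃ t)) t)
    (hz₂ : ∀ t, HasDerivAt z₂ ((γ₂ : ℂ) * (starRingEnd ℂ) (z₃ t * z₁ t)) t)
    (hz₃ : ∀ t, HasDerivAt z₃ ((γ₃ : ℂ) * (starRingEnd ℂ) (z₁ t * z₂ t)) t)
    (v w : ℝ → ℝ)
    (hv₁ : ∀ s, Complex.normSq (y₁ s) = β₁ * v s + 1)
    (hv₂ : ∀ s, Complex.normSq (y₂ s) = β₂ * v s + 1)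
    (hv₃ : ∀ s, Complex.normSq (y₃ s) = β₃ * v s + 1)
    (hw₁ : ∀ t, Complex.normSq (z₁ t) = γ₁ * w t + 1)
    (hw₂ : ∀ t, Complex.normSq (z₂ t) = γ₂ * w t + 1)
    (hw₃ : ∀ t, Complex.normSq (z₃ t) = γ₃ * w t + 1)
    (Φ : ℝ → ℝ → ℝ → (Fin 3 → ℂ))
    (hΦ : ∀ r s t, Φ r s t =
      ![(Real.sqrt 3 : ℂ)⁻¹ * (r : ℂ) * y₁ s * z₁ t,
        (Real.sqrt 3 : ℂ)⁻¹ * (r : ℂ) * y₂ s * z₂ t,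
        (Real.sqrt 3 : ℂ)⁻¹ * (r : ℂ) * y₃ s * z₃ t]) :
    ∀ s t : ℝ,
      let φs := deriv (fun x => Φ 1 x t) s
      let φt := deriv (fun x => Φ 1 s x) t
      let φz := (1 / 2 : ℂ) • (φs - Complex.I • φt)
      let φzb := (1 / 2 : ℂ) • (φs + Complex.I • φt)
      herm φz (Φ 1 s t) = 0 ∧
      herm φzb (Φ 1 s t) = 0 ∧
      herm φz φzb = 0 ∧
      hermSq φz = a + b * v s + c * w t ∧
      hermSq φzb = a + b * v s + c * w t := by
  subst ha hb hc
  -- real identities for β, γ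
  have hp : Real.sqrt 2 ^ 2 = 2 := Real.sq_sqrt (by norm_num)
  have hq : Real.sqrt 6 ^ 2 = 6 := Real.sq_sqrt (by norm_num)
  have hp0 : Real.sqrt 2 ≠ 0 := by positivity
  have hq0 : Real.sqrt 6 ≠ 0 := by positivity
  have hpy : Real.sin θ ^ 2 + Real.cos θ ^ 2 = 1 := Real.sin_sq_add_cos_sq θ
  have ep : ∀ x : ℝ, x / Real.sqrt 2 = x * Real.sqrt 2 / 2 := fun x => by
    rw [div_eq_iff hp0]; linear_combination (-x/2) * hp
  have eq' : ∀ x : ℝ, x / Real.sqrt 6 = x * Real.sqrt 6 / 6 := fun x => by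
    rw [div_eq_iff hq0]; linear_combination (-x/6) * hq
  rw [ep] at hβ₁ hβ₂ hγ₁ hγ₂
  rw [eq'] at hβ₁ hβ₂ hβ₃ hγ₁ hγ₂ hγ₃
  have j1 : β₁ + β₂ + β₃ = 0 := by rw [hβ₁, hβ₂, hβ₃]; ring
  have j2 : γ₁ + γ₂ + γ₃ = 0 := by rw [hγ₁, hγ₂, hγ₃]; ring
  have j3 : β₁*γ₁ + β₂*γ₂ + β₃*γ₃ = 0 := by
    rw [hβ₁, hβ₂, hβ₃, hγ₁, hγ₂, hγ₃]
    linear_combination (Real.cos θ*Real.sin θ/6) * hq - (Real.cos θ*Real.sin θ/2) * hp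
  have j4 : β₁^2 + β₂^2 + β₃^2 = 1 := by
    rw [hβ₁, hβ₂, hβ₃]
    linear_combination (Real.cos θ^2/2) * hp + (Real.sin θ^2/6) * hq + hpy
  have j5 : γ₁^2 + γ₂^2 + γ₃^2 = 1 := by
    rw [hγ₁, hγ₂, hγ₃]
    linear_combination (Real.sin θ^2/2) * hp + (Real.cos θ^2/6) * hq + hpy
  have j6 : β₁^2*γ₁ + β₂^2*γ₂ + β₃^2*γ₃ = -3*(γ₁*γ₂*γ₃) := by
    rw [hβ₁, hβ₂, hβ₃, hγ₁, hγ₂, hγ₃]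
    linear_combination (Real.cos θ*(Real.cos θ^2+Real.sin θ^2)*Real.sqrt 6/36) * hq
      - (Real.cos θ*(Real.cos θ^2+Real.sin θ^2)*Real.sqrt 6/12) * hp
  have j7 : γ₁^2*β₁ + γ₂^2*β₂ + γ₃^2*β₃ = -3*(β₁*β₂*β₃) := by
    rw [hβ₁, hβ₂, hβ₃, hγ₁, hγ₂, hγ₃]
    linear_combination (Real.sin θ*(Real.sin θ^2+Real.cos θ^2)*Real.sqrt 6/36) * hq
      - (Real.sin θ*(Real.sin θ^2+Real.cos θ^2)*Real.sqrt 6/12) * hp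
  have j8 : β₁^3*γ₁ + β₂^3*γ₂ + β₃^3*γ₃ = 0 := by
    rw [hβ₁, hβ₂, hβ₃, hγ₁, hγ₂, hγ₃]
    linear_combination (Real.cos θ^3*Real.sin θ*Real.sqrt 2^2/24
        + Real.cos θ*Real.sin θ^3*Real.sqrt 6^2/72) * hq
      - (Real.cos θ^3*Real.sin θ*Real.sqrt 2^2/8
        + Real.cos θ*Real.sin θ^3*Real.sqrt 6^2/24) * hp
  have j9 : γ₁^3*β₁ + γ₂^3*β₂ + γ₃^3*β₃ = 0 := by
    rw [hβ₁, hβ₂, hβ₃, hγ₁, hγ₂, hγ₃]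
    linear_combination (Real.sin θ^3*Real.cos θ*Real.sqrt 2^2/24
        + Real.sin θ*Real.cos θ^3*Real.sqrt 6^2/72) * hq
      - (Real.sin θ^3*Real.cos θ*Real.sqrt 2^2/8
        + Real.sin θ*Real.cos θ^3*Real.sqrt 6^2/24) * hp
  -- complex casts of the identities
  have jc1 : (β₁:ℂ) + β₂ + β₃ = 0 := by exact_mod_cast j1
  have jc2 : (γ₁:ℂ) + γ₂ + γ₃ = 0 := by exact_mod_cast j2
  have jc3 : (β₁:ℂ)*γ₁ + (β₂:ℂ)*γ₂ + (β₃:ℂ)*γ₃ = 0 := by exact_mod_cast j3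
  have jc4 : (β₁:ℂ)^2 + (β₂:ℂ)^2 + (β₃:ℂ)^2 = 1 := by exact_mod_cast j4
  have jc5 : (γ₁:ℂ)^2 + (γ₂:ℂ)^2 + (γ₃:ℂ)^2 = 1 := by exact_mod_cast j5
  have jc6 : (β₁:ℂ)^2*γ₁ + (β₂:ℂ)^2*γ₂ + (β₃:ℂ)^2*γ₃ = -3*((γ₁:ℂ)*γ₂*γ₃) := by
    exact_mod_cast j6
  have jc7 : (γ₁:ℂ)^2*β₁ + (γ₂:ℂ)^2*β₂ + (γ₃:ℂ)^2*β₃ = -3*((β₁:ℂ)*β₂*β₃) := by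
    exact_mod_cast j7
  have jc8 : (β₁:ℂ)^3*γ₁ + (β₂:ℂ)^3*γ₂ + (β₃:ℂ)^3*γ₃ = 0 := by exact_mod_cast j8
  have jc9 : (γ₁:ℂ)^3*β₁ + (γ₂:ℂ)^3*β₂ + (γ₃:ℂ)^3*β₃ = 0 := by exact_mod_cast j9
  have hkk : ((Real.sqrt 3 : ℝ) : ℂ)⁻¹ * ((Real.sqrt 3 : ℝ) : ℂ)⁻¹ = 1/3 := by
    rw [← mul_inv]
    norm_cast
    rw [Real.mul_self_sqrt (by norm_num : (0:ℝ) ≤ 3)]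
    norm_num
  intro s t
  -- derivatives
  have hS : HasDerivAt (fun x => Φ 1 x t)
      ![(Real.sqrt 3 : ℂ)⁻¹ * ((1:ℝ):ℂ) * ((β₁:ℂ) * (starRingEnd ℂ) (y₂ s * y₃ s)) * z₁ t,
        (Real.sqrt 3 : ℂ)⁻¹ * ((1:ℝ):ℂ) * ((β₂:ℂ) * (starRingEnd ℂ) (y₃ s * y₁ s)) * z₂ t,
        (Real.sqrt 3 : ℂ)⁻¹ * ((1:ℝ):ℂ) * ((β₃:ℂ) * (starRingEnd ℂ) (y₁ s * y₂ s)) * z₃ t] s := by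
    have hfun : (fun x => Φ 1 x t) = fun x =>
        ![(Real.sqrt 3 : ℂ)⁻¹ * ((1:ℝ):ℂ) * y₁ x * z₁ t,
          (Real.sqrt 3 : ℂ)⁻¹ * ((1:ℝ):ℂ) * y₂ x * z₂ t,
          (Real.sqrt 3 : ℂ)⁻¹ * ((1:ℝ):ℂ) * y₃ x * z₃ t] := funext fun x => hΦ 1 x t
    rw [hfun]
    refine hasDerivAt_pi.mpr fun i => ?_
    fin_cases i <;>
      simp only [Matrix.cons_val_zero, Matrix.cons_val_one, Matrix.head_cons,
        Matrix.cons_val_two, Matrix.tail_cons]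
    exacts [((hy₁ s).const_mul _).mul_const _, ((hy₂ s).const_mul _).mul_const _,
      ((hy₃ s).const_mul _).mul_const _]
  have hT : HasDerivAt (fun x => Φ 1 s x)
      ![(Real.sqrt 3 : ℂ)⁻¹ * ((1:ℝ):ℂ) * y₁ s * ((γ₁:ℂ) * (starRingEnd ℂ) (z₂ t * z₃ t)),
        (Real.sqrt 3 : ℂ)⁻¹ * ((1:ℝ):ℂ) * y₂ s * ((γ₂:ℂ) * (starRingEnd ℂ) (z₃ t * z₁ t)),
        (Real.sqrt 3 : ℂ)⁻¹ * ((1:ℝ):ℂ) * y₃ s * ((γ₃:ℂ) * (starRingEnd ℂ) (z₁ t * z₂ t))] t := by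
    have hfun : (fun x => Φ 1 s x) = fun x =>
        ![(Real.sqrt 3 : ℂ)⁻¹ * ((1:ℝ):ℂ) * y₁ s * z₁ x,
          (Real.sqrt 3 : ℂ)⁻¹ * ((1:ℝ):ℂ) * y₂ s * z₂ x,
          (Real.sqrt 3 : ℂ)⁻¹ * ((1:ℝ):ℂ) * y₃ s * z₃ x] := funext fun x => hΦ 1 s x
    rw [hfun]
    refine hasDerivAt_pi.mpr fun i => ?_
    fin_cases i <;>
      simp only [Matrix.cons_val_zero, Matrix.cons_val_one, Matrix.head_cons,
        Matrix.cons_val_two, Matrix.tail_cons]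
    exacts [(hz₁ t).const_mul _, (hz₂ t).const_mul _, (hz₃ t).const_mul _]
  -- mul_conj hypotheses
  have hA1 : y₁ s * (starRingEnd ℂ) (y₁ s) = (β₁:ℂ) * ((v s : ℝ):ℂ) + 1 := by
    rw [Complex.mul_conj, hv₁]; push_cast; ring
  have hA2 : y₂ s * (starRingEnd ℂ) (y₂ s) = (β₂:ℂ) * ((v s : ℝ):ℂ) + 1 := by
    rw [Complex.mul_conj, hv₂]; push_cast; ring
  have hA3 : y₃ s * (starRingEnd ℂ) (y₃ s) = (β₃:ℂ) * ((v s : ℝ):ℂ) + 1 := by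
    rw [Complex.mul_conj, hv₃]; push_cast; ring
  have hB1 : z₁ t * (starRingEnd ℂ) (z₁ t) = (γ₁:ℂ) * ((w t : ℝ):ℂ) + 1 := by
    rw [Complex.mul_conj, hw₁]; push_cast; ring
  have hB2 : z₂ t * (starRingEnd ℂ) (z₂ t) = (γ₂:ℂ) * ((w t : ℝ):ℂ) + 1 := by
    rw [Complex.mul_conj, hw₂]; push_cast; ring
  have hB3 : z₃ t * (starRingEnd ℂ) (z₃ t) = (γ₃:ℂ) * ((w t : ℝ):ℂ) + 1 := by
    rw [Complex.mul_conj, hw₃]; push_cast; ring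
  refine ⟨?_, ?_, ?_, ?_, ?_⟩ <;>
    simp only [hS.deriv, hT.deriv] <;>
    simp only [hΦ, herm, hermSq, Pi.smul_apply, Pi.sub_apply, Pi.add_apply,
      smul_eq_mul, Matrix.cons_val_zero, Matrix.cons_val_one, Matrix.head_cons,
      Matrix.cons_val_two, Matrix.tail_cons, map_mul, map_sub, map_add, map_inv₀, map_one,
      map_div₀, map_ofNat, Complex.conj_ofReal, Complex.conj_I, Complex.conj_conj,
      Complex.ofReal_one, mul_one, one_mul]
  · linear_combination (((Real.sqrt 3:ℂ)⁻¹ * (Real.sqrt 3:ℂ)⁻¹)/2) * (((starRingEnd ℂ) (y₁ s))*((starRingEnd ℂ) (y₂ s))*((starRingEnd ℂ) (y₃ s))) * ((β₁:ℂ)*hB1 + (β₂:ℂ)*hB2 + (β₃:ℂ)*hB3 + ((w t:ℝ):ℂ)*jc3 + jc1) - (Complex.I*((Real.sqrt 3:ℂ)⁻¹ * (Real.sqrt 3:ℂ)⁻¹)/2) * (((starRingEnd ℂ) (z₁ t))*((starRingEnd ℂ) (z₂ t))*((starRingEnd ℂ) (z₃ t))) * ((γ₁:ℂ)*hA1 +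 (γ₂:ℂ)*hA2 + (γ₃:ℂ)*hA3 + ((v s:ℝ):ℂ)*jc3 + jc2)
  · linear_combination (((Real.sqrt 3:ℂ)⁻¹ * (Real.sqrt 3:ℂ)⁻¹)/2) * (((starRingEnd ℂ) (y₁ s))*((starRingEnd ℂ) (y₂ s))*((starRingEnd ℂ) (y₃ s))) * ((β₁:ℂ)*hB1 + (β₂:ℂ)*hB2 + (β₃:ℂ)*hB3 + ((w t:ℝ):ℂ)*jc3 + jc1) + (Complex.I*((Real.sqrt 3:ℂ)⁻¹ * (Real.sqrt 3:ℂ)⁻¹)/2) * (((starRingEnd ℂ) (z₁ t))*((starRingEnd ℂ) (z₂ t))*((starRingEnd ℂ) (z₃ t))) * ((γ₁:ℂ)*hA1 + (γ₂:ℂ)*hA2 + (γ₃:ℂ)*hA3 + ((v s:ℝ):ℂ)*jc3 + jc2)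
  · linear_combination (1/4)*(((Real.sqrt 3:ℂ)⁻¹ * (Real.sqrt 3:ℂ)⁻¹) * ((β₁:ℂ)^2*( ((y₃ s)*((starRingEnd ℂ) (y₃ s)))*((z₁ t)*((starRingEnd ℂ) (z₁ t)))*hA2 + ((β₂:ℂ)*((v s:ℝ):ℂ)+1)*((z₁ t)*((starRingEnd ℂ) (z₁ t)))*hA3 + ((β₂:ℂ)*((v s:ℝ):ℂ)+1)*((β₃:ℂ)*((v s:ℝ):ℂ)+1)*hB1 ) + (β₂:ℂ)^2*( ((y₁ s)*((starRingEnd ℂ) (y₁ s)))*((z₂ t)*((starRingEnd ℂ) (z₂ t)))*hA3 + ((β₃:ℂ)*((v s:ℝ):ℂ)+1)*((z₂ t)*((starRingEnd ℂ) (z₂ t)))*hA1 + ((β₃:ℂ)*((v s:ℝ):ℂ)+1)*((β₁:ℂ)*((v s:ℝ):ℂ)+1)*hB2 ) + (β₃:ℂ)^2*( ((y₂ s)*((starRingEnd ℂ) (y₂ s)))*((z₃ t)*((starRingEnd ℂ) (z₃ t)))*hA1 + ((β₁:ℂ)*((v s:ℝ):ℂ)+1)*((z₃ t)*((starRingEnd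 ℂ) (z₃ t)))*hA2 + ((β₁:ℂ)*((v s:ℝ):ℂ)+1)*((β₂:ℂ)*((v s:ℝ):ℂ)+1)*hB3 ))) + (1/4)*(((Real.sqrt 3:ℂ)⁻¹ * (Real.sqrt 3:ℂ)⁻¹) * ( jc4 + (((v s:ℝ):ℂ)*((β₁:ℂ)*(β₂:ℂ) + (β₁:ℂ)*(β₃:ℂ) + (β₂:ℂ)*(β₃:ℂ)) + ((v s:ℝ):ℂ)*((w t:ℝ):ℂ)*((β₁:ℂ)^2*(γ₁:ℂ) + (β₂:ℂ)^2*(γ₂:ℂ) + (β₃:ℂ)^2*(γ₃:ℂ)) + ((v s:ℝ):ℂ)^2*((β₁:ℂ)*(β₂:ℂ)*(β₃:ℂ)))*jc1 - (((v s:ℝ):ℂ)*((w t:ℝ):ℂ))*jc8 + ((w t:ℝ):ℂ)*jc6 + (((v s:ℝ):ℂ)^2*((w t:ℝ):ℂ)*((β₁:ℂ)*(β₂:ℂ)*(β₃:ℂ)))*jc3 )) - (1/4)*(((Real.sqrt 3:ℂ)⁻¹ * (Real.sqrt 3:ℂ)⁻¹) * ((γ₁:ℂ)^2*( ((z₃ t)*((starRingEnd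 ℂ) (z₃ t)))*((y₁ s)*((starRingEnd ℂ) (y₁ s)))*hB2 + ((γ₂:ℂ)*((w t:ℝ):ℂ)+1)*((y₁ s)*((starRingEnd ℂ) (y₁ s)))*hB3 + ((γ₂:ℂ)*((w t:ℝ):ℂ)+1)*((γ₃:ℂ)*((w t:ℝ):ℂ)+1)*hA1 ) + (γ₂:ℂ)^2*( ((z₁ t)*((starRingEnd ℂ) (z₁ t)))*((y₂ s)*((starRingEnd ℂ) (y₂ s)))*hB3 + ((γ₃:ℂ)*((w t:ℝ):ℂ)+1)*((y₂ s)*((starRingEnd ℂ) (y₂ s)))*hB1 + ((γ₃:ℂ)*((w t:ℝ):ℂ)+1)*((γ₁:ℂ)*((w t:ℝ):ℂ)+1)*hA2 ) + (γ₃:ℂ)^2*( ((z₂ t)*((starRingEnd ℂ) (z₂ t)))*((y₃ s)*((starRingEnd ℂ) (y₃ s)))*hB1 + ((γ₁:ℂ)*((w t:ℝ):ℂ)+1)*((y₃ s)*((starRingEnd ℂ) (y₃ s)))*hB2 + ((γ₁:ℂ)*((w t:ℝ):ℂ)+1)*((γ₂:ℂ)*((w t:ℝ):ℂ)+1)*hA3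 ))) - (1/4)*(((Real.sqrt 3:ℂ)⁻¹ * (Real.sqrt 3:ℂ)⁻¹) * ( jc5 + (((w t:ℝ):ℂ)*((γ₁:ℂ)*(γ₂:ℂ) + (γ₁:ℂ)*(γ₃:ℂ) + (γ₂:ℂ)*(γ₃:ℂ)) + ((v s:ℝ):ℂ)*((w t:ℝ):ℂ)*((γ₁:ℂ)^2*(β₁:ℂ) + (γ₂:ℂ)^2*(β₂:ℂ) + (γ₃:ℂ)^2*(β₃:ℂ)) + ((w t:ℝ):ℂ)^2*((γ₁:ℂ)*(γ₂:ℂ)*(γ₃:ℂ)))*jc2 - (((v s:ℝ):ℂ)*((w t:ℝ):ℂ))*jc9 + ((v s:ℝ):ℂ)*jc7 + (((v s:ℝ):ℂ)*((w t:ℝ):ℂ)^2*((γ₁:ℂ)*(γ₂:ℂ)*(γ₃:ℂ)))*jc3 )) - (Complex.I/4)*((Real.sqrt 3:ℂ)⁻¹ * (Real.sqrt 3:ℂ)⁻¹)*(((starRingEnd ℂ) (y₁ s))*((starRingEnd ℂ) (y₂ s))*((starRingEnd ℂ) (y₃ s))*(z₁ t)*(z₂ t)*(z₃ t) + (y₁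 s)*(y₂ s)*(y₃ s)*((starRingEnd ℂ) (z₁ t))*((starRingEnd ℂ) (z₂ t))*((starRingEnd ℂ) (z₃ t)))*jc3 + (1/4)*(((Real.sqrt 3:ℂ)⁻¹ * (Real.sqrt 3:ℂ)⁻¹) * ((γ₁:ℂ)^2*((y₁ s)*((starRingEnd ℂ) (y₁ s)))*((z₂ t)*((starRingEnd ℂ) (z₂ t)))*((z₃ t)*((starRingEnd ℂ) (z₃ t))) + (γ₂:ℂ)^2*((y₂ s)*((starRingEnd ℂ) (y₂ s)))*((z₃ t)*((starRingEnd ℂ) (z₃ t)))*((z₁ t)*((starRingEnd ℂ) (z₁ t))) + (γ₃:ℂ)^2*((y₃ s)*((starRingEnd ℂ) (y₃ s)))*((z₁ t)*((starRingEnd ℂ) (z₁ t)))*((z₂ t)*((starRingEnd ℂ) (z₂ t)))))*Complex.I_sq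
  · apply Complex.ofReal_injective
    simp only [Complex.ofReal_add, Complex.ofReal_mul, Complex.ofReal_neg, Complex.ofReal_div,
      Complex.ofReal_one, Complex.ofReal_ofNat, ← Complex.mul_conj, map_mul, map_sub, map_add,
      map_inv₀, map_one, map_div₀, map_ofNat, Complex.conj_I, Complex.conj_ofReal,
      Complex.conj_conj]
    linear_combination (1/4)*(((Real.sqrt 3:ℂ)⁻¹ * (Real.sqrt 3:ℂ)⁻¹) * ((β₁:ℂ)^2*( ((y₃ s)*((starRingEnd ℂ) (y₃ s)))*((z₁ t)*((starRingEnd ℂ) (z₁ t)))*hA2 + ((β₂:ℂ)*((v s:ℝ):ℂ)+1)*((z₁ t)*((starRingEnd ℂ) (z₁ t)))*hA3 + ((β₂:ℂ)*((v s:ℝ):ℂ)+1)*((β₃:ℂ)*((v s:ℝ):ℂ)+1)*hB1 ) + (β₂:ℂ)^2*( ((y₁ s)*((starRingEnd ℂ) (y₁ s)))*((z₂ t)*((starRingEnd ℂ) (z₂ t)))*hA3 + ((β₃:ℂ)*((v s:ℝ):ℂ)+1)*((z₂ t)*((starRingEnd ℂ) (z₂ t)))*hA1 + ((β₃:ℂ)*((v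 s:ℝ):ℂ)+1)*((β₁:ℂ)*((v s:ℝ):ℂ)+1)*hB2 ) + (β₃:ℂ)^2*( ((y₂ s)*((starRingEnd ℂ) (y₂ s)))*((z₃ t)*((starRingEnd ℂ) (z₃ t)))*hA1 + ((β₁:ℂ)*((v s:ℝ):ℂ)+1)*((z₃ t)*((starRingEnd ℂ) (z₃ t)))*hA2 + ((β₁:ℂ)*((v s:ℝ):ℂ)+1)*((β₂:ℂ)*((v s:ℝ):ℂ)+1)*hB3 ))) + (1/4)*(((Real.sqrt 3:ℂ)⁻¹ * (Real.sqrt 3:ℂ)⁻¹) * ( jc4 + (((v s:ℝ):ℂ)*((β₁:ℂ)*(β₂:ℂ) + (β₁:ℂ)*(β₃:ℂ) + (β₂:ℂ)*(β₃:ℂ)) + ((v s:ℝ):ℂ)*((w t:ℝ):ℂ)*((β₁:ℂ)^2*(γ₁:ℂ) + (β₂:ℂ)^2*(γ₂:ℂ) + (β₃:ℂ)^2*(γ₃:ℂ)) + ((v s:ℝ):ℂ)^2*((β₁:ℂ)*(β₂:ℂ)*(β₃:ℂ)))*jc1 - (((v s:ℝ):ℂ)*((w t:ℝ):ℂ))*jc8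 + ((w t:ℝ):ℂ)*jc6 + (((v s:ℝ):ℂ)^2*((w t:ℝ):ℂ)*((β₁:ℂ)*(β₂:ℂ)*(β₃:ℂ)))*jc3 )) + (1/4)*(((Real.sqrt 3:ℂ)⁻¹ * (Real.sqrt 3:ℂ)⁻¹) * ((γ₁:ℂ)^2*( ((z₃ t)*((starRingEnd ℂ) (z₃ t)))*((y₁ s)*((starRingEnd ℂ) (y₁ s)))*hB2 + ((γ₂:ℂ)*((w t:ℝ):ℂ)+1)*((y₁ s)*((starRingEnd ℂ) (y₁ s)))*hB3 + ((γ₂:ℂ)*((w t:ℝ):ℂ)+1)*((γ₃:ℂ)*((w t:ℝ):ℂ)+1)*hA1 ) + (γ₂:ℂ)^2*( ((z₁ t)*((starRingEnd ℂ) (z₁ t)))*((y₂ s)*((starRingEnd ℂ) (y₂ s)))*hB3 + ((γ₃:ℂ)*((w t:ℝ):ℂ)+1)*((y₂ s)*((starRingEnd ℂ) (y₂ s)))*hB1 + ((γ₃:ℂ)*((w t:ℝ):ℂ)+1)*((γ₁:ℂ)*((w t:ℝ):ℂ)+1)*hA2 ) + (γ₃:ℂ)^2*( ((z₂ t)*((starRingEnd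 ℂ) (z₂ t)))*((y₃ s)*((starRingEnd ℂ) (y₃ s)))*hB1 + ((γ₁:ℂ)*((w t:ℝ):ℂ)+1)*((y₃ s)*((starRingEnd ℂ) (y₃ s)))*hB2 + ((γ₁:ℂ)*((w t:ℝ):ℂ)+1)*((γ₂:ℂ)*((w t:ℝ):ℂ)+1)*hA3 ))) + (1/4)*(((Real.sqrt 3:ℂ)⁻¹ * (Real.sqrt 3:ℂ)⁻¹) * ( jc5 + (((w t:ℝ):ℂ)*((γ₁:ℂ)*(γ₂:ℂ) + (γ₁:ℂ)*(γ₃:ℂ) + (γ₂:ℂ)*(γ₃:ℂ)) + ((v s:ℝ):ℂ)*((w t:ℝ):ℂ)*((γ₁:ℂ)^2*(β₁:ℂ) + (γ₂:ℂ)^2*(β₂:ℂ) + (γ₃:ℂ)^2*(β₃:ℂ)) + ((w t:ℝ):ℂ)^2*((γ₁:ℂ)*(γ₂:ℂ)*(γ₃:ℂ)))*jc2 - (((v s:ℝ):ℂ)*((w t:ℝ):ℂ))*jc9 + ((v s:ℝ):ℂ)*jc7 + (((v s:ℝ):ℂ)*((w t:ℝ):ℂ)^2*((γ₁:ℂ)*(γ₂:ℂ)*(γ₃:ℂ)))*jc3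 )) + (Complex.I/4)*((Real.sqrt 3:ℂ)⁻¹ * (Real.sqrt 3:ℂ)⁻¹)*(((starRingEnd ℂ) (y₁ s))*((starRingEnd ℂ) (y₂ s))*((starRingEnd ℂ) (y₃ s))*(z₁ t)*(z₂ t)*(z₃ t) - (y₁ s)*(y₂ s)*(y₃ s)*((starRingEnd ℂ) (z₁ t))*((starRingEnd ℂ) (z₂ t))*((starRingEnd ℂ) (z₃ t)))*jc3 + (1/4)*(2 - 6*((β₁:ℂ)*(β₂:ℂ)*(β₃:ℂ))*((v s:ℝ):ℂ) - 6*((γ₁:ℂ)*(γ₂:ℂ)*(γ₃:ℂ))*((w t:ℝ):ℂ))*hkk - (1/4)*(((Real.sqrt 3:ℂ)⁻¹ * (Real.sqrt 3:ℂ)⁻¹) * ((γ₁:ℂ)^2*((y₁ s)*((starRingEnd ℂ) (y₁ s)))*((z₂ t)*((starRingEnd ℂ) (z₂ t)))*((z₃ t)*((starRingEnd ℂ) (z₃ t))) + (γ₂:ℂ)^2*((y₂ s)*((starRingEnd ℂ) (y₂ s)))*((z₃ t)*((starRingEnd ℂ) (z₃ t)))*((z₁ t)*((starRingEnd ℂ)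 (z₁ t))) + (γ₃:ℂ)^2*((y₃ s)*((starRingEnd ℂ) (y₃ s)))*((z₁ t)*((starRingEnd ℂ) (z₁ t)))*((z₂ t)*((starRingEnd ℂ) (z₂ t)))))*Complex.I_sq
  · apply Complex.ofReal_injective
    simp only [Complex.ofReal_add, Complex.ofReal_mul, Complex.ofReal_neg, Complex.ofReal_div,
      Complex.ofReal_one, Complex.ofReal_ofNat, ← Complex.mul_conj, map_mul, map_sub, map_add,
      map_inv₀, map_one, map_div₀, map_ofNat, Complex.conj_I, Complex.conj_ofReal,
      Complex.conj_conj]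
    linear_combination (1/4)*(((Real.sqrt 3:ℂ)⁻¹ * (Real.sqrt 3:ℂ)⁻¹) * ((β₁:ℂ)^2*( ((y₃ s)*((starRingEnd ℂ) (y₃ s)))*((z₁ t)*((starRingEnd ℂ) (z₁ t)))*hA2 + ((β₂:ℂ)*((v s:ℝ):ℂ)+1)*((z₁ t)*((starRingEnd ℂ) (z₁ t)))*hA3 + ((β₂:ℂ)*((v s:ℝ):ℂ)+1)*((β₃:ℂ)*((v s:ℝ):ℂ)+1)*hB1 ) + (β₂:ℂ)^2*( ((y₁ s)*((starRingEnd ℂ) (y₁ s)))*((z₂ t)*((starRingEnd ℂ) (z₂ t)))*hA3 + ((β₃:ℂ)*((v s:ℝ):ℂ)+1)*((z₂ t)*((starRingEnd ℂ) (z₂ t)))*hA1 + ((β₃:ℂ)*((v s:ℝ):ℂ)+1)*((β₁:ℂ)*((v s:ℝ):ℂ)+1)*hB2 ) + (β₃:ℂ)^2*( ((y₂ s)*((starRingEnd ℂ) (y₂ s)))*((z₃ t)*((starRingEnd ℂ) (z₃ t)))*hA1 + ((β₁:ℂ)*((v s:ℝ):ℂ)+1)*((z₃ t)*((starRingEnd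 ℂ) (z₃ t)))*hA2 + ((β₁:ℂ)*((v s:ℝ):ℂ)+1)*((β₂:ℂ)*((v s:ℝ):ℂ)+1)*hB3 ))) + (1/4)*(((Real.sqrt 3:ℂ)⁻¹ * (Real.sqrt 3:ℂ)⁻¹) * ( jc4 + (((v s:ℝ):ℂ)*((β₁:ℂ)*(β₂:ℂ) + (β₁:ℂ)*(β₃:ℂ) + (β₂:ℂ)*(β₃:ℂ)) + ((v s:ℝ):ℂ)*((w t:ℝ):ℂ)*((β₁:ℂ)^2*(γ₁:ℂ) + (β₂:ℂ)^2*(γ₂:ℂ) + (β₃:ℂ)^2*(γ₃:ℂ)) + ((v s:ℝ):ℂ)^2*((β₁:ℂ)*(β₂:ℂ)*(β₃:ℂ)))*jc1 - (((v s:ℝ):ℂ)*((w t:ℝ):ℂ))*jc8 + ((w t:ℝ):ℂ)*jc6 + (((v s:ℝ):ℂ)^2*((w t:ℝ):ℂ)*((β₁:ℂ)*(β₂:ℂ)*(β₃:ℂ)))*jc3 )) + (1/4)*(((Real.sqrt 3:ℂ)⁻¹ * (Real.sqrt 3:ℂ)⁻¹) * ((γ₁:ℂ)^2*( ((z₃ t)*((starRingEnd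 ℂ) (z₃ t)))*((y₁ s)*((starRingEnd ℂ) (y₁ s)))*hB2 + ((γ₂:ℂ)*((w t:ℝ):ℂ)+1)*((y₁ s)*((starRingEnd ℂ) (y₁ s)))*hB3 + ((γ₂:ℂ)*((w t:ℝ):ℂ)+1)*((γ₃:ℂ)*((w t:ℝ):ℂ)+1)*hA1 ) + (γ₂:ℂ)^2*( ((z₁ t)*((starRingEnd ℂ) (z₁ t)))*((y₂ s)*((starRingEnd ℂ) (y₂ s)))*hB3 + ((γ₃:ℂ)*((w t:ℝ):ℂ)+1)*((y₂ s)*((starRingEnd ℂ) (y₂ s)))*hB1 + ((γ₃:ℂ)*((w t:ℝ):ℂ)+1)*((γ₁:ℂ)*((w t:ℝ):ℂ)+1)*hA2 ) + (γ₃:ℂ)^2*( ((z₂ t)*((starRingEnd ℂ) (z₂ t)))*((y₃ s)*((starRingEnd ℂ) (y₃ s)))*hB1 + ((γ₁:ℂ)*((w t:ℝ):ℂ)+1)*((y₃ s)*((starRingEnd ℂ) (y₃ s)))*hB2 + ((γ₁:ℂ)*((w t:ℝ):ℂ)+1)*((γ₂:ℂ)*((w t:ℝ):ℂ)+1)*hA3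 ))) + (1/4)*(((Real.sqrt 3:ℂ)⁻¹ * (Real.sqrt 3:ℂ)⁻¹) * ( jc5 + (((w t:ℝ):ℂ)*((γ₁:ℂ)*(γ₂:ℂ) + (γ₁:ℂ)*(γ₃:ℂ) + (γ₂:ℂ)*(γ₃:ℂ)) + ((v s:ℝ):ℂ)*((w t:ℝ):ℂ)*((γ₁:ℂ)^2*(β₁:ℂ) + (γ₂:ℂ)^2*(β₂:ℂ) + (γ₃:ℂ)^2*(β₃:ℂ)) + ((w t:ℝ):ℂ)^2*((γ₁:ℂ)*(γ₂:ℂ)*(γ₃:ℂ)))*jc2 - (((v s:ℝ):ℂ)*((w t:ℝ):ℂ))*jc9 + ((v s:ℝ):ℂ)*jc7 + (((v s:ℝ):ℂ)*((w t:ℝ):ℂ)^2*((γ₁:ℂ)*(γ₂:ℂ)*(γ₃:ℂ)))*jc3 )) + (Complex.I/4)*((Real.sqrt 3:ℂ)⁻¹ * (Real.sqrt 3:ℂ)⁻¹)*((y₁ s)*(y₂ s)*(y₃ s)*((starRingEnd ℂ) (z₁ t))*((starRingEnd ℂ) (z₂ t))*((starRingEnd ℂ) (z₃ t)) - ((starRingEnd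 ℂ) (y₁ s))*((starRingEnd ℂ) (y₂ s))*((starRingEnd ℂ) (y₃ s))*(z₁ t)*(z₂ t)*(z₃ t))*jc3 + (1/4)*(2 - 6*((β₁:ℂ)*(β₂:ℂ)*(β₃:ℂ))*((v s:ℝ):ℂ) - 6*((γ₁:ℂ)*(γ₂:ℂ)*(γ₃:ℂ))*((w t:ℝ):ℂ))*hkk - (1/4)*(((Real.sqrt 3:ℂ)⁻¹ * (Real.sqrt 3:ℂ)⁻¹) * ((γ₁:ℂ)^2*((y₁ s)*((starRingEnd ℂ) (y₁ s)))*((z₂ t)*((starRingEnd ℂ) (z₂ t)))*((z₃ t)*((starRingEnd ℂ) (z₃ t))) + (γ₂:ℂ)^2*((y₂ s)*((starRingEnd ℂ) (y₂ s)))*((z₃ t)*((starRingEnd ℂ) (z₃ t)))*((z₁ t)*((starRingEnd ℂ) (z₁ t))) + (γ₃:ℂ)^2*((y₃ s)*((starRingEnd ℂ) (y₃ s)))*((z₁ t)*((starRingEnd ℂ) (z₁ t)))*((z₂ t)*((starRingEnd ℂ) (z₂ t)))))*Complex.I_sq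
end
end

section
/- Define χ₀, χ₁, χ₂ : ℝ² → (0,∞) by χ₀(s,t) = 1, χ₁(s,t) = ρ^{−2/3}·f(s,t), χ₂(s,t) = ρ^{2/3}·f(s,t)^{−1}, and extend to all k ∈ ℤ by χ_{k+3} = χ_k. Then χ₀·χ₁·χ₂ ≡ 1, and for every k ∈ ℤ and all (s,t): (1/(4ρ^{2/3}))·(∂²/∂s² + ∂²/∂t²)(log χ_k)(s,t) = χ_{k+1}(s,t)/χ_k(s,t) − χ_k(s,t)/χ_{k−1}(s,t). That is, the χ_k satisfy the SU(3) Toda lattice equations with respect to the special coordinate z = ξ^{1/3}(s+it). -/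
noncomputable section

open Complex

/-- Proposition 6.2 of the paper. The functions
`χ₀ = 1`, `χ₁ = ρ^{-2/3} f`, `χ₂ = ρ^{2/3} f⁻¹` (extended 3-periodically in `k`)
satisfy `χ₀ χ₁ χ₂ ≡ 1` and the `SU(3)` Toda lattice equations with respect to the
special coordinate `z = ξ^{1/3}(s + it)`. -/
theorem stmt10
    (θ B C : ℝ) (β₁ β₂ β₃ γ₁ γ₂ γ₃ a b c : ℝ)
    (hβ₁ : β₁ = Real.cos θ / Real.sqrt 2 - Real.sin θ / Real.sqrt 6)
    (hβ₂ : β₂ = -(Real.cos θ / Real.sqrt 2) - Real.sin θ / Real.sqrt 6)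
    (hβ₃ : β₃ = 2 * Real.sin θ / Real.sqrt 6)
    (hγ₁ : γ₁ = -(Real.cos θ / Real.sqrt 6) - Real.sin θ / Real.sqrt 2)
    (hγ₂ : γ₂ = -(Real.cos θ / Real.sqrt 6) + Real.sin θ / Real.sqrt 2)
    (hγ₃ : γ₃ = 2 * Real.cos θ / Real.sqrt 6)
    (ha : a = 1 / 6) (hb : b = -(1 / 2) * (β₁ * β₂ * β₃)) (hc : c = -(1 / 2) * (γ₁ * γ₂ * γ₃))
    (v w v' w' v'' w'' : ℝ → ℝ)
    (hv : ∀ s, HasDerivAt v (v' s) s) (hv' : ∀ s, HasDerivAt v' (v'' s) s)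
    (hw : ∀ t, HasDerivAt w (w' t) t) (hw' : ∀ t, HasDerivAt w' (w'' t) t)
    (hvB : ∀ s, (v' s) ^ 2 =
      4 * ((β₁ * v s + 1) * ((β₂ * v s + 1) * (β₃ * v s + 1)) - B ^ 2))
    (hvB' : ∀ s, v'' s =
      2 * deriv (fun x : ℝ => (β₁ * x + 1) * ((β₂ * x + 1) * (β₃ * x + 1))) (v s))
    (hwC : ∀ t, (w' t) ^ 2 =
      4 * ((γ₁ * w t + 1) * ((γ₂ * w t + 1) * (γ₃ * w t + 1)) - C ^ 2))
    (hwC' : ∀ t, w'' t =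
      2 * deriv (fun x : ℝ => (γ₁ * x + 1) * ((γ₂ * x + 1) * (γ₃ * x + 1))) (w t))
    (f : ℝ → ℝ → ℝ) (hf : ∀ s t, f s t = a + b * v s + c * w t)
    (hfpos : ∀ s t, 0 < f s t)
    (ξ : ℂ) (hξ : ξ = ((c * C : ℝ) : ℂ) + Complex.I * ((b * B : ℝ) : ℂ)) (hξ0 : ξ ≠ 0)
    (ρ : ℝ) (hρ : ρ = ‖ξ‖)
    (χ : ℤ → ℝ → ℝ → ℝ)
    (hχ : ∀ (k : ℤ) (s t : ℝ), χ k s t =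
      if k % 3 = 0 then 1
      else if k % 3 = 1 then ρ ^ (-(2 : ℝ) / 3) * f s t
      else ρ ^ ((2 : ℝ) / 3) / f s t) :
    (∀ s t : ℝ, χ 0 s t * χ 1 s t * χ 2 s t = 1) ∧
    (∀ (k : ℤ) (s t : ℝ), χ (k + 3) s t = χ k s t) ∧
    (∀ (k : ℤ) (s t : ℝ),
      1 / (4 * ρ ^ ((2 : ℝ) / 3)) *
        (deriv (fun x => deriv (fun x' => Real.log (χ k x' t)) x) s +
         deriv (fun x => deriv (fun x' => Real.log (χ k s x')) x) t)
      = χ (k + 1) s t / χ k s t - χ k s t / χ (k - 1) s t) := by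
  have hρ0 : 0 < ρ := by rw [hρ]; exact norm_pos_iff.mpr hξ0
  set p := ρ ^ ((2 : ℝ) / 3) with hpdef
  have hp0 : 0 < p := Real.rpow_pos_of_pos hρ0 _
  have hneg : ρ ^ (-(2 : ℝ) / 3) = p⁻¹ := by
    rw [hpdef, show (-(2 : ℝ) / 3) = -((2 : ℝ) / 3) by norm_num, Real.rpow_neg hρ0.le]
  have hp3 : p ^ 3 = ρ ^ 2 := by
    rw [hpdef, ← Real.rpow_natCast (ρ ^ ((2 : ℝ) / 3)) 3, ← Real.rpow_mul hρ0.le,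
      ← Real.rpow_natCast ρ 2]
    norm_num
  -- χ value lemmas
  have hχ0 : ∀ k : ℤ, k % 3 = 0 → ∀ s t : ℝ, χ k s t = 1 := by
    intro k hk s t; rw [hχ, if_pos hk]
  have hχ1 : ∀ k : ℤ, k % 3 = 1 → ∀ s t : ℝ, χ k s t = p⁻¹ * f s t := by
    intro k hk s t; rw [hχ, if_neg (by omega), if_pos hk, hneg]
  have hχ2 : ∀ k : ℤ, k % 3 = 2 → ∀ s t : ℝ, χ k s t = p / f s t := by
    intro k hk s t; rw [hχ, if_neg (by omega), if_neg (by omega)]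
  -- trig / sqrt facts
  have h2 : Real.sqrt 2 ^ 2 = 2 := Real.sq_sqrt (by norm_num)
  have h6 : Real.sqrt 6 ^ 2 = 6 := Real.sq_sqrt (by norm_num)
  have hi2 : (Real.sqrt 2)⁻¹ ^ 2 = (1 : ℝ) / 2 := by rw [inv_pow, h2]; norm_num
  have hi6 : (Real.sqrt 6)⁻¹ ^ 2 = (1 : ℝ) / 6 := by rw [inv_pow, h6]; norm_num
  have hpy : Real.cos θ ^ 2 + Real.sin θ ^ 2 = 1 := Real.cos_sq_add_sin_sq θ
  have e1β : β₁ + β₂ + β₃ = 0 := by rw [hβ₁, hβ₂, hβ₃]; ring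
  have e1γ : γ₁ + γ₂ + γ₃ = 0 := by rw [hγ₁, hγ₂, hγ₃]; ring
  have e2β : β₁ * β₂ + β₁ * β₃ + β₂ * β₃ = -(1 / 2) := by
    rw [hβ₁, hβ₂, hβ₃]
    linear_combination (-(Real.cos θ ^ 2)) * hi2 + (-(3 * Real.sin θ ^ 2)) * hi6
      + (-(1 / 2 : ℝ)) * hpy
  have e2γ : γ₁ * γ₂ + γ₁ * γ₃ + γ₂ * γ₃ = -(1 / 2) := by
    rw [hγ₁, hγ₂, hγ₃]
    linear_combination (-(Real.sin θ ^ 2)) * hi2 + (-(3 * Real.cos θ ^ 2)) * hi6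
      + (-(1 / 2 : ℝ)) * hpy
  have hpb : β₁ * β₂ * β₃ = -2 * b := by rw [hb]; ring
  have hpc : γ₁ * γ₂ * γ₃ = -2 * c := by rw [hc]; ring
  have hbc : b ^ 2 + c ^ 2 = 1 / 216 := by
    rw [hb, hc, hβ₁, hβ₂, hβ₃, hγ₁, hγ₂, hγ₃]
    linear_combination
      (1*Real.cos θ^2*(Real.sqrt 2)⁻¹^2*(Real.sqrt 6)⁻¹^2*Real.sin θ^4 + 1/2*Real.cos θ^2*(Real.sqrt 6)⁻¹^2*Real.sin θ^4 - 2*Real.cos θ^2*(Real.sqrt 6)⁻¹^4*Real.sin θ^4 + 1*Real.cos θ^4*(Real.sqrt 2)⁻¹^2*(Real.sqrt 6)⁻¹^2*Real.sin θ^2 + 1/2*Real.cos θ^4*(Real.sqrt 6)⁻¹^2*Real.sin θ^2 - 2*Real.cos θ^4*(Real.sqrt 6)⁻¹^4*Real.sin θ^2) * hi2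
      + (-1*Real.cos θ^2*(Real.sqrt 6)⁻¹^2*Real.sin θ^4 + 1/12*Real.cos θ^2*Real.sin θ^4 - 1*Real.cos θ^4*(Real.sqrt 6)⁻¹^2*Real.sin θ^2 + 1/12*Real.cos θ^4*Real.sin θ^2 + 1/36*Real.cos θ^6 + 1/6*Real.cos θ^6*(Real.sqrt 6)⁻¹^2 + 1*Real.cos θ^6*(Real.sqrt 6)⁻¹^4 + 1/6*(Real.sqrt 6)⁻¹^2*Real.sin θ^6 + 1*(Real.sqrt 6)⁻¹^4*Real.sin θ^6 + 1/36*Real.sin θ^6) * hi6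
      + (1/216 + 1/216*Real.cos θ^2 + 1/108*Real.cos θ^2*Real.sin θ^2 + 1/216*Real.cos θ^4 + 1/216*Real.sin θ^2 + 1/216*Real.sin θ^4) * hpy
  -- polynomial form of Q, R and derivatives
  have LQ : ∀ x : ℝ, (β₁ * x + 1) * ((β₂ * x + 1) * (β₃ * x + 1))
      = 1 - x ^ 2 / 2 - 2 * b * x ^ 3 := by
    intro x; linear_combination x ^ 3 * hpb + x ^ 2 * e2β + x * e1β
  have LR : ∀ x : ℝ, (γ₁ * x + 1) * ((γ₂ * x + 1) * (γ₃ * x + 1))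
      = 1 - x ^ 2 / 2 - 2 * c * x ^ 3 := by
    intro x; linear_combination x ^ 3 * hpc + x ^ 2 * e2γ + x * e1γ
  have LQ' : ∀ x : ℝ,
      deriv (fun z : ℝ => (β₁ * z + 1) * ((β₂ * z + 1) * (β₃ * z + 1))) x
        = -x - 6 * b * x ^ 2 := by
    intro x
    have h1 : HasDerivAt (fun z : ℝ => β₁ * z + 1) β₁ x := by
      simpa using ((hasDerivAt_id x).const_mul β₁).add_const 1
    have h2' : HasDerivAt (fun z : ℝ => β₂ * z + 1) β₂ x := by
      simpa using ((hasDerivAt_id x).const_mul β₂).add_const 1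
    have h3 : HasDerivAt (fun z : ℝ => β₃ * z + 1) β₃ x := by
      simpa using ((hasDerivAt_id x).const_mul β₃).add_const 1
    have hD : HasDerivAt (fun z : ℝ => (β₁ * z + 1) * ((β₂ * z + 1) * (β₃ * z + 1)))
        (β₁ * ((β₂ * x + 1) * (β₃ * x + 1))
          + (β₁ * x + 1) * (β₂ * (β₃ * x + 1) + (β₂ * x + 1) * β₃)) x := h1.mul (h2'.mul h3)
    rw [hD.deriv]
    linear_combination 3 * x ^ 2 * hpb + 2 * x * e2β + e1β
  have LR' : ∀ x : ℝ,
      deriv (fun z : ℝ => (γ₁ * z + 1) * ((γ₂ * z + 1) * (γ₃ * z + 1))) x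
        = -x - 6 * c * x ^ 2 := by
    intro x
    have h1 : HasDerivAt (fun z : ℝ => γ₁ * z + 1) γ₁ x := by
      simpa using ((hasDerivAt_id x).const_mul γ₁).add_const 1
    have h2' : HasDerivAt (fun z : ℝ => γ₂ * z + 1) γ₂ x := by
      simpa using ((hasDerivAt_id x).const_mul γ₂).add_const 1
    have h3 : HasDerivAt (fun z : ℝ => γ₃ * z + 1) γ₃ x := by
      simpa using ((hasDerivAt_id x).const_mul γ₃).add_const 1
    have hD : HasDerivAt (fun z : ℝ => (γ₁ * z + 1) * ((γ₂ * z + 1) * (γ₃ * z + 1)))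
        (γ₁ * ((γ₂ * x + 1) * (γ₃ * x + 1))
          + (γ₁ * x + 1) * (γ₂ * (γ₃ * x + 1) + (γ₂ * x + 1) * γ₃)) x := h1.mul (h2'.mul h3)
    rw [hD.deriv]
    linear_combination 3 * x ^ 2 * hpc + 2 * x * e2γ + e1γ
  have hv2 : ∀ s, v'' s = -2 * v s - 12 * b * (v s) ^ 2 := by
    intro s; rw [hvB' s, LQ' (v s)]; ring
  have hw2 : ∀ t, w'' t = -2 * w t - 12 * c * (w t) ^ 2 := by
    intro t; rw [hwC' t, LR' (w t)]; ring
  have hvQ : ∀ s, (v' s) ^ 2 = 4 * ((1 - (v s) ^ 2 / 2 - 2 * b * (v s) ^ 3) - B ^ 2) := by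
    intro s; rw [hvB s, LQ (v s)]
  have hwQ : ∀ t, (w' t) ^ 2 = 4 * ((1 - (w t) ^ 2 / 2 - 2 * c * (w t) ^ 3) - C ^ 2) := by
    intro t; rw [hwC t, LR (w t)]
  have hρ2 : ρ ^ 2 = (c * C) ^ 2 + (b * B) ^ 2 := by
    rw [hρ, Complex.sq_norm, hξ]
    simp [Complex.normSq_apply]
    ring
  -- the key identity
  have KI : ∀ s t : ℝ,
      b * v'' s * f s t + c * w'' t * f s t - (b * v' s) ^ 2 - (c * w' t) ^ 2
        = 4 * (ρ ^ 2 - f s t ^ 3) := by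
    intro s t
    rw [hf]
    linear_combination (b * (a + b * v s + c * w t)) * hv2 s
      + (c * (a + b * v s + c * w t)) * hw2 t
      + (-(b ^ 2)) * hvQ s + (-(c ^ 2)) * hwQ t
      + (-4 : ℝ) * hρ2 + (-4 : ℝ) * hbc
      + (1/9 + 2/3 * a + 12 * a * b * v s + 12 * a * c * w t + 4 * a ^ 2
          + 24 * b * c * v s * w t) * ha
  -- derivative machinery
  have hfs : ∀ s t : ℝ, HasDerivAt (fun x => f x t) (b * v' s) s := by
    intro s t
    have hfun : (fun x => f x t) = fun x => a + b * v x + c * w t := funext fun x => hf x t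
    rw [hfun]
    exact (((hv s).const_mul b).const_add a).add_const (c * w t)
  have hft : ∀ s t : ℝ, HasDerivAt (fun y => f s y) (c * w' t) t := by
    intro s t
    have hfun : (fun y => f s y) = fun y => a + b * v s + c * w y := funext fun y => hf s y
    rw [hfun]
    exact ((hw t).const_mul c).const_add (a + b * v s)
  have hlogs : ∀ (t s : ℝ), HasDerivAt (fun x => Real.log (f x t)) (b * v' s / f s t) s :=
    fun t s => (hfs s t).log (hfpos s t).ne'
  have hlogt : ∀ (s t : ℝ), HasDerivAt (fun y => Real.log (f s y)) (c * w' t / f s t) t :=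
    fun s t => (hft s t).log (hfpos s t).ne'
  have hlogs2 : ∀ (t s : ℝ), HasDerivAt (fun x => b * v' x / f x t)
      ((b * v'' s * f s t - b * v' s * (b * v' s)) / f s t ^ 2) s :=
    fun t s => ((hv' s).const_mul b).div (hfs s t) (hfpos s t).ne'
  have hlogt2 : ∀ (s t : ℝ), HasDerivAt (fun y => c * w' y / f s y)
      ((c * w'' t * f s t - c * w' t * (c * w' t)) / f s t ^ 2) t :=
    fun s t => ((hw' t).const_mul c).div (hft s t) (hfpos s t).ne'
  -- Laplacian of log f
  have hLap : ∀ s t : ℝ,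
      deriv (fun x => deriv (fun x' => Real.log (f x' t)) x) s
        + deriv (fun x => deriv (fun x' => Real.log (f s x')) x) t
      = 4 * (p ^ 3 - f s t ^ 3) / f s t ^ 2 := by
    intro s t
    have e1 : (fun x => deriv (fun x' => Real.log (f x' t)) x) = fun x => b * v' x / f x t :=
      funext fun x => (hlogs t x).deriv
    have e2 : (fun x => deriv (fun x' => Real.log (f s x')) x) = fun y => c * w' y / f s y :=
      funext fun y => (hlogt s y).deriv
    rw [e1, e2, (hlogs2 t s).deriv, (hlogt2 s t).deriv, ← add_div]
    have hne : f s t ^ 2 ≠ 0 := pow_ne_zero _ (hfpos s t).ne'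
    rw [div_eq_div_iff hne hne]
    linear_combination (f s t ^ 2) * KI s t + (-4 * f s t ^ 2) * hp3
  refine ⟨?_, ?_, ?_⟩
  · intro s t
    rw [hχ0 0 rfl, hχ1 1 rfl, hχ2 2 rfl]
    field_simp [(hfpos s t).ne', hp0.ne']
  · intro k s t
    rw [hχ, hχ, show (k + 3) % 3 = k % 3 by omega]
  · intro k s t
    have hk : k % 3 = 0 ∨ k % 3 = 1 ∨ k % 3 = 2 := by omega
    have hfne := (hfpos s t).ne'
    rcases hk with hk | hk | hk
    · -- χ k = 1
      have e1 : (fun x => deriv (fun x' => Real.log (χ k x' t)) x) = fun _ => (0 : ℝ) := by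
        funext x
        rw [show (fun x' => Real.log (χ k x' t)) = fun _ => (0 : ℝ) from
          funext fun x' => by rw [hχ0 k hk, Real.log_one], deriv_const]
      have e2 : (fun x => deriv (fun x' => Real.log (χ k s x')) x) = fun _ => (0 : ℝ) := by
        funext x
        rw [show (fun x' => Real.log (χ k s x')) = fun _ => (0 : ℝ) from
          funext fun x' => by rw [hχ0 k hk, Real.log_one], deriv_const]
      rw [e1, e2, deriv_const, deriv_const,
        hχ1 (k + 1) (by omega) s t, hχ0 k hk s t, hχ2 (k - 1) (by omega) s t]
      field_simp
      ring
    · -- χ k = p⁻¹ f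
      have e1 : (fun x => deriv (fun x' => Real.log (χ k x' t)) x)
          = fun x => deriv (fun x' => Real.log (f x' t)) x := by
        funext x
        rw [show (fun x' => Real.log (χ k x' t))
            = fun x' => Real.log p⁻¹ + Real.log (f x' t) from
          funext fun x' => by
            rw [hχ1 k hk, Real.log_mul (inv_ne_zero hp0.ne') (hfpos x' t).ne'],
          deriv_const_add]
      have e2 : (fun x => deriv (fun x' => Real.log (χ k s x')) x)
          = fun x => deriv (fun x' => Real.log (f s x')) x := by
        funext x
        rw [show (fun x' => Real.log (χ k s x'))
            = fun x' => Real.log p⁻¹ + Real.log (f s x') from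
          funext fun x' => by
            rw [hχ1 k hk, Real.log_mul (inv_ne_zero hp0.ne') (hfpos s x').ne'],
          deriv_const_add]
      rw [e1, e2, hLap s t,
        hχ2 (k + 1) (by omega) s t, hχ1 k hk s t, hχ0 (k - 1) (by omega) s t]
      field_simp
    · -- χ k = p / f
      have e1 : (fun x => deriv (fun x' => Real.log (χ k x' t)) x)
          = fun x => -deriv (fun x' => Real.log (f x' t)) x := by
        funext x
        rw [show (fun x' => Real.log (χ k x' t))
            = fun x' => Real.log p - Real.log (f x' t) from
          funext fun x' => by
            rw [hχ2 k hk, Real.log_div hp0.ne' (hfpos x' t).ne'],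
          deriv_const_sub]
      have e2 : (fun x => deriv (fun x' => Real.log (χ k s x')) x)
          = fun x => -deriv (fun x' => Real.log (f s x')) x := by
        funext x
        rw [show (fun x' => Real.log (χ k s x'))
            = fun x' => Real.log p - Real.log (f s x') from
          funext fun x' => by
            rw [hχ2 k hk, Real.log_div hp0.ne' (hfpos s x').ne'],
          deriv_const_sub]
      have d1 : deriv (fun x => -deriv (fun x' => Real.log (f x' t)) x) s
          = -((b * v'' s * f s t - b * v' s * (b * v' s)) / f s t ^ 2) := by
        have eflip : (fun x => -deriv (fun x' => Real.log (f x' t)) x)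
            = fun x => -(b * v' x / f x t) := by
          funext x; rw [(hlogs t x).deriv]
        rw [eflip]; exact ((hlogs2 t s).neg).deriv
      have d2 : deriv (fun x => -deriv (fun x' => Real.log (f s x')) x) t
          = -((c * w'' t * f s t - c * w' t * (c * w' t)) / f s t ^ 2) := by
        have eflip : (fun x => -deriv (fun x' => Real.log (f s x')) x)
            = fun y => -(c * w' y / f s y) := by
          funext y; rw [(hlogt s y).deriv]
        rw [eflip]; exact ((hlogt2 s t).neg).deriv
      rw [e1, e2, d1, d2,
        hχ0 (k + 1) (by omega) s t, hχ2 k hk s t, hχ1 (k - 1) (by omega) s t]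
      have hKI := KI s t
      have hne : f s t ≠ 0 := hfne
      field_simp
      linear_combination (-1 : ℝ) * hKI + (4 : ℝ) * hp3
end
end

section
/- Define F : ℝ² → ℝ by F(s,t) = log(f(s,t)) − (2/3)·log ρ. Then F satisfies the elliptic Tzitzéica equation with respect to the coordinate z = ξ^{1/3}(s+it): for all (s,t), (1/(4ρ^{2/3}))·(∂²F/∂s² + ∂²F/∂t²)(s,t) = e^{−2F(s,t)} − e^{F(s,t)}. -/
noncomputable section

open Complex

/-- Corollary 6.3 of the paper. The function
`F = log f − (2/3) log ρ` satisfies the elliptic Tzitzéica equation with respect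
to the coordinate `z = ξ^{1/3}(s + it)`. -/
theorem stmt11
    (θ B C : ℝ) (β₁ β₂ β₃ γ₁ γ₂ γ₃ a b c : ℝ)
    (hβ₁ : β₁ = Real.cos θ / Real.sqrt 2 - Real.sin θ / Real.sqrt 6)
    (hβ₂ : β₂ = -(Real.cos θ / Real.sqrt 2) - Real.sin θ / Real.sqrt 6)
    (hβ₃ : β₃ = 2 * Real.sin θ / Real.sqrt 6)
    (hγ₁ : γ₁ = -(Real.cos θ / Real.sqrt 6) - Real.sin θ / Real.sqrt 2)
    (hγ₂ : γ₂ = -(Real.cos θ / Real.sqrt 6) + Real.sin θ / Real.sqrt 2)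
    (hγ₃ : γ₃ = 2 * Real.cos θ / Real.sqrt 6)
    (ha : a = 1 / 6) (hb : b = -(1 / 2) * (β₁ * β₂ * β₃)) (hc : c = -(1 / 2) * (γ₁ * γ₂ * γ₃))
    (v w v' w' v'' w'' : ℝ → ℝ)
    (hv : ∀ s, HasDerivAt v (v' s) s) (hv' : ∀ s, HasDerivAt v' (v'' s) s)
    (hw : ∀ t, HasDerivAt w (w' t) t) (hw' : ∀ t, HasDerivAt w' (w'' t) t)
    (hvB : ∀ s, (v' s) ^ 2 =
      4 * ((β₁ * v s + 1) * ((β₂ * v s + 1) * (β₃ * v s + 1)) - B ^ 2))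
    (hvB' : ∀ s, v'' s =
      2 * deriv (fun x : ℝ => (β₁ * x + 1) * ((β₂ * x + 1) * (β₃ * x + 1))) (v s))
    (hwC : ∀ t, (w' t) ^ 2 =
      4 * ((γ₁ * w t + 1) * ((γ₂ * w t + 1) * (γ₃ * w t + 1)) - C ^ 2))
    (hwC' : ∀ t, w'' t =
      2 * deriv (fun x : ℝ => (γ₁ * x + 1) * ((γ₂ * x + 1) * (γ₃ * x + 1))) (w t))
    (f : ℝ → ℝ → ℝ) (hf : ∀ s t, f s t = a + b * v s + c * w t)
    (hfpos : ∀ s t, 0 < f s t)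
    (ξ : ℂ) (hξ : ξ = ((c * C : ℝ) : ℂ) + Complex.I * ((b * B : ℝ) : ℂ)) (hξ0 : ξ ≠ 0)
    (ρ : ℝ) (hρ : ρ = ‖ξ‖)
    (F : ℝ → ℝ → ℝ)
    (hF : ∀ s t, F s t = Real.log (f s t) - (2 / 3) * Real.log ρ) :
    ∀ s t : ℝ,
      1 / (4 * ρ ^ ((2 : ℝ) / 3)) *
        (deriv (fun x => deriv (fun x' => F x' t) x) s +
         deriv (fun x => deriv (fun x' => F s x') x) t)
      = Real.exp (-2 * F s t) - Real.exp (F s t) := by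
  have h2 : Real.sqrt 2 ^ 2 = 2 := Real.sq_sqrt (by norm_num)
  have h6 : Real.sqrt 6 ^ 2 = 6 := Real.sq_sqrt (by norm_num)
  have h1 : 2*(Real.cos θ/Real.sqrt 2)^2 + 6*(Real.sin θ/Real.sqrt 6)^2 = 1 := by
    rw [div_pow, div_pow, h2, h6]
    linear_combination Real.sin_sq_add_cos_sq θ
  have hT2 : (Real.sin θ/Real.sqrt 2)^2 = 3*(Real.sin θ/Real.sqrt 6)^2 := by
    rw [div_pow, div_pow, h2, h6]; ring
  have hG2 : (Real.cos θ/Real.sqrt 6)^2 = (Real.cos θ/Real.sqrt 2)^2/3 := by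
    rw [div_pow, div_pow, h2, h6]; ring
  -- abbreviations
  set A := Real.cos θ/Real.sqrt 2 with hA
  set S := Real.sin θ/Real.sqrt 6 with hS
  set T := Real.sin θ/Real.sqrt 2 with hT
  set G := Real.cos θ/Real.sqrt 6 with hG
  -- b, c in terms of A,S,T,G
  have hb' : b = S*(A^2 - S^2) := by rw [hb, hβ₁, hβ₂, hβ₃]; ring
  have hc' : c = G*(T^2 - G^2) := by rw [hc, hγ₁, hγ₂, hγ₃]; ring
  have hbc : b^2 + c^2 = 1/216 := by
    have e1 : b^2 = S^2*(A^2-S^2)^2 := by rw [hb']; ring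
    have e2 : c^2 = G^2*(T^2-G^2)^2 := by rw [hc']; ring
    rw [e1, e2, hG2, hT2]
    linear_combination (((2*A^2+6*S^2)^2 + (2*A^2+6*S^2) + 1)/216) * h1
  -- elementary symmetric functions of the β's and γ's
  have he1β : β₁ + β₂ + β₃ = 0 := by rw [hβ₁, hβ₂, hβ₃]; ring
  have he2β : β₁*β₂ + β₁*β₃ + β₂*β₃ = -(1/2) := by
    rw [hβ₁, hβ₂, hβ₃]
    linear_combination (-(1/2)) * h1
  have he3β : β₁*β₂*β₃ = -2*b := by linear_combination 2 * hb
  have he1γ : γ₁ + γ₂ + γ₃ = 0 := by rw [hγ₁, hγ₂, hγ₃]; ring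
  have he2γ : γ₁*γ₂ + γ₁*γ₃ + γ₂*γ₃ = -(1/2) := by
    rw [hγ₁, hγ₂, hγ₃]
    linear_combination (-(1/2)) * h1 - hT2 - 3 * hG2
  have he3γ : γ₁*γ₂*γ₃ = -2*c := by linear_combination 2 * hc
  -- the cubic polynomials
  have hQ : ∀ x : ℝ, (β₁*x+1)*((β₂*x+1)*(β₃*x+1)) = -2*b*x^3 - (1/2)*x^2 + 1 := by
    intro x
    linear_combination x^3 * he3β + x^2 * he2β + x * he1β
  have hR : ∀ x : ℝ, (γ₁*x+1)*((γ₂*x+1)*(γ₃*x+1)) = -2*c*x^3 - (1/2)*x^2 + 1 := by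
    intro x
    linear_combination x^3 * he3γ + x^2 * he2γ + x * he1γ
  have hderivP : ∀ (k x : ℝ),
      deriv (fun y : ℝ => -2*k*y^3 - (1/2)*y^2 + 1) x = -6*k*x^2 - x := by
    intro k x
    have h : HasDerivAt (fun y : ℝ => -2*k*y^3 - (1/2)*y^2 + 1) (-6*k*x^2 - x) x := by
      have h' := (((hasDerivAt_pow 3 x).const_mul (-2*k)).sub
        ((hasDerivAt_pow 2 x).const_mul (1/2))).add_const 1
      refine h'.congr_deriv ?_
      push_cast; ring
    exact h.deriv
  have hQd : ∀ x : ℝ, deriv (fun y : ℝ => (β₁*y+1)*((β₂*y+1)*(β₃*y+1))) x = -6*b*x^2 - x := by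
    intro x
    have : (fun y : ℝ => (β₁*y+1)*((β₂*y+1)*(β₃*y+1)))
        = fun y : ℝ => -2*b*y^3 - (1/2)*y^2 + 1 := funext hQ
    rw [this, hderivP]
  have hRd : ∀ x : ℝ, deriv (fun y : ℝ => (γ₁*y+1)*((γ₂*y+1)*(γ₃*y+1))) x = -6*c*x^2 - x := by
    intro x
    have : (fun y : ℝ => (γ₁*y+1)*((γ₂*y+1)*(γ₃*y+1)))
        = fun y : ℝ => -2*c*y^3 - (1/2)*y^2 + 1 := funext hR
    rw [this, hderivP]
  -- ODE data in explicit form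
  have Hv2 : ∀ s, v'' s = 2*(-6*b*(v s)^2 - v s) := by
    intro s; rw [hvB' s, hQd (v s)]
  have Hw2 : ∀ t, w'' t = 2*(-6*c*(w t)^2 - w t) := by
    intro t; rw [hwC' t, hRd (w t)]
  have HvP : ∀ s, (v' s)^2 = 4*((-2*b*(v s)^3 - (1/2)*(v s)^2 + 1) - B^2) := by
    intro s; rw [hvB s, hQ (v s)]
  have HwP : ∀ t, (w' t)^2 = 4*((-2*c*(w t)^3 - (1/2)*(w t)^2 + 1) - C^2) := by
    intro t; rw [hwC t, hR (w t)]
  -- ρ facts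
  have hρpos : 0 < ρ := by rw [hρ]; exact norm_pos_iff.mpr hξ0
  have hρ2 : ρ^2 = (c*C)^2 + (b*B)^2 := by
    rw [hρ, Complex.sq_norm, hξ]
    simp [Complex.normSq_apply]
    ring
  have hfne : ∀ s t, f s t ≠ 0 := fun s t => ne_of_gt (hfpos s t)
  -- derivatives of f in each variable
  have hfs : ∀ t x, HasDerivAt (fun x' => f x' t) (b * v' x) x := by
    intro t x
    have h := (((hv x).const_mul b).add_const (c * w t)).const_add a
    have he : (fun x' => f x' t) = fun y => a + (b * v y + c * w t) := by
      funext y; rw [hf]; ring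
    rw [he]; exact h
  have hft : ∀ s x, HasDerivAt (fun x' => f s x') (c * w' x) x := by
    intro s x
    have h := (((hw x).const_mul c).add_const (a + b * v s)).const_add 0
    have he : (fun x' => f s x') = fun y => 0 + (c * w y + (a + b * v s)) := by
      funext y; rw [hf]; ring
    rw [he]; exact h
  -- first partial derivatives of F
  have hFs : ∀ t x, HasDerivAt (fun x' => F x' t) (b * v' x / f x t) x := by
    intro t x
    have hlog := (Real.hasDerivAt_log (hfne x t)).comp x (hfs t x)
    have h2' := hlog.sub_const ((2/3) * Real.log ρ)
    have he : (fun x' => F x' t) = fun x' => Real.log (f x' t) - (2/3)*Real.log ρ :=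
      funext fun x' => hF x' t
    rw [he]
    refine h2'.congr_deriv ?_
    ring
  have hFt : ∀ s x, HasDerivAt (fun x' => F s x') (c * w' x / f s x) x := by
    intro s x
    have hlog := (Real.hasDerivAt_log (hfne s x)).comp x (hft s x)
    have h2' := hlog.sub_const ((2/3) * Real.log ρ)
    have he : (fun x' => F s x') = fun x' => Real.log (f s x') - (2/3)*Real.log ρ :=
      funext fun x' => hF s x'
    rw [he]
    refine h2'.congr_deriv ?_
    ring
  intro s t
  -- second partial derivatives
  have hFss : deriv (fun x => deriv (fun x' => F x' t) x) s
      = (b * v'' s * f s t - b * v' s * (b * v' s)) / (f s t)^2 := by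
    have he : (fun x => deriv (fun x' => F x' t) x) = fun x => b * v' x / f x t :=
      funext fun x => (hFs t x).deriv
    rw [he]
    exact (((hv' s).const_mul b).div (hfs t s) (hfne s t)).deriv
  have hFtt : deriv (fun x => deriv (fun x' => F s x') x) t
      = (c * w'' t * f s t - c * w' t * (c * w' t)) / (f s t)^2 := by
    have he : (fun x => deriv (fun x' => F s x') x) = fun x => c * w' x / f s x :=
      funext fun x => (hFt s x).deriv
    rw [he]
    exact (((hw' t).const_mul c).div (hft s t) (hfne s t)).deriv
  -- rpow facts
  set u := ρ ^ ((2 : ℝ)/3) with hu_def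
  have hu : 0 < u := Real.rpow_pos_of_pos hρpos _
  have hu3 : u^3 = ρ^2 := by
    rw [hu_def, ← Real.rpow_natCast (ρ ^ ((2:ℝ)/3)) 3, ← Real.rpow_mul hρpos.le]
    norm_num
  -- exponentials
  have hexpF : Real.exp (F s t) = f s t / u := by
    rw [hF, Real.exp_sub, Real.exp_log (hfpos s t)]
    congr 1
    rw [hu_def, Real.rpow_def_of_pos hρpos]
    ring_nf
  have hexpF2 : Real.exp (-2 * F s t) = u^2 / (f s t)^2 := by
    rw [show (-2:ℝ) * F s t = -(F s t) + -(F s t) by ring, Real.exp_add, Real.exp_neg,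
      hexpF]
    rw [inv_div]
    field_simp
  -- the key algebraic identity
  have keyid : b * v'' s * f s t - b * v' s * (b * v' s)
      + (c * w'' t * f s t - c * w' t * (c * w' t)) = 4*ρ^2 - 4*(f s t)^3 := by
    rw [hf s t, ha]
    linear_combination (b*(1/6 + b*v s + c*w t)) * Hv2 s + (-(b^2)) * HvP s
      + (c*(1/6 + b*v s + c*w t)) * Hw2 t + (-(c^2)) * HwP t
      + (-4)*hρ2 + (-4)*hbc
  -- finish
  rw [hFss, hFtt, hexpF, hexpF2]
  rw [← add_div, keyid, ← hu3]
  field_simp [hfne s t, ne_of_gt hu]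
end
end

section
/- For every (s,t) ∈ ℝ², every λ ∈ ℂ∖{0} and every μ ∈ ℂ, the characteristic polynomial of τ(λ)(s,t) satisfies det(μ·I − τ(λ)(s,t)) = μ³ + D(s,t)·μ + i·(E(s,t) + ξ²·λ⁶ + conj(ξ)²·λ^{−6}), where D = f² + 2ρ²·f^{−1} + 2|g|² + 3h² and E = −f·g² − f·conj(g)² − 2f²·h + 2ρ²·f^{−1}·h + 2|g|²·h + 2h³. -/
set_option maxHeartbeats 1600000

noncomputable section

open Complex

/-- equation (6.28) of the paper. The characteristic polynomial
of `τ(λ)` is `det(μI − τ(λ)) = μ³ + Dμ + i(E + ξ²λ⁶ + conj(ξ)²λ⁻⁶)`. -/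
theorem stmt15
    (θ B C : ℝ) (β₁ β₂ β₃ γ₁ γ₂ γ₃ a b c : ℝ)
    (hβ₁ : β₁ = Real.cos θ / Real.sqrt 2 - Real.sin θ / Real.sqrt 6)
    (hβ₂ : β₂ = -(Real.cos θ / Real.sqrt 2) - Real.sin θ / Real.sqrt 6)
    (hβ₃ : β₃ = 2 * Real.sin θ / Real.sqrt 6)
    (hγ₁ : γ₁ = -(Real.cos θ / Real.sqrt 6) - Real.sin θ / Real.sqrt 2)
    (hγ₂ : γ₂ = -(Real.cos θ / Real.sqrt 6) + Real.sin θ / Real.sqrt 2)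
    (hγ₃ : γ₃ = 2 * Real.cos θ / Real.sqrt 6)
    (ha : a = 1 / 6) (hb : b = -(1 / 2) * (β₁ * β₂ * β₃)) (hc : c = -(1 / 2) * (γ₁ * γ₂ * γ₃))
    (v w v' w' v'' w'' : ℝ → ℝ)
    (hv : ∀ s, HasDerivAt v (v' s) s) (hv' : ∀ s, HasDerivAt v' (v'' s) s)
    (hw : ∀ t, HasDerivAt w (w' t) t) (hw' : ∀ t, HasDerivAt w' (w'' t) t)
    (hvB : ∀ s, (v' s) ^ 2 =
      4 * ((β₁ * v s + 1) * ((β₂ * v s + 1) * (β₃ * v s + 1)) - B ^ 2))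
    (hvB' : ∀ s, v'' s =
      2 * deriv (fun x : ℝ => (β₁ * x + 1) * ((β₂ * x + 1) * (β₃ * x + 1))) (v s))
    (hwC : ∀ t, (w' t) ^ 2 =
      4 * ((γ₁ * w t + 1) * ((γ₂ * w t + 1) * (γ₃ * w t + 1)) - C ^ 2))
    (hwC' : ∀ t, w'' t =
      2 * deriv (fun x : ℝ => (γ₁ * x + 1) * ((γ₂ * x + 1) * (γ₃ * x + 1))) (w t))
    (f : ℝ → ℝ → ℝ) (hf : ∀ s t, f s t = a + b * v s + c * w t)
    (hfpos : ∀ s t, 0 < f s t)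
    (ξ : ℂ) (hξ : ξ = ((c * C : ℝ) : ℂ) + Complex.I * ((b * B : ℝ) : ℂ)) (hξ0 : ξ ≠ 0)
    (ρ : ℝ) (hρ : ρ = ‖ξ‖)
    (ϑ : ℝ) (hϑ : ξ = ((ρ : ℝ) : ℂ) * Complex.exp (Complex.I * ((ϑ : ℝ) : ℂ)))
    (ξ3 : ℂ) (hξ3 : ξ3 = ((ρ ^ ((1 : ℝ) / 3) : ℝ) : ℂ) * Complex.exp (Complex.I * ((ϑ / 3 : ℝ) : ℂ)))
    (g : ℝ → ℝ → ℂ)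
    (hg : ∀ s t, g s t =
      (((-(b * v' s) : ℝ) : ℂ) + Complex.I * ((c * w' t : ℝ) : ℂ)) /
        (2 * ((Real.sqrt (f s t) : ℝ) : ℂ)))
    (h : ℝ → ℝ → ℝ)
    (hh : ∀ s t, h s t = (-(b * v'' s) + c * w'' t) / (12 * f s t))
    (Lz Lzb : ℝ → ℝ → ℂ)
    (hLz : ∀ s t, Lz s t = (1 / (2 * ξ3)) *
      ((((b * v' s : ℝ) : ℂ) - Complex.I * ((c * w' t : ℝ) : ℂ)) / ((f s t : ℝ) : ℂ)))
    (hLzb : ∀ s t, Lzb s t = (1 / (2 * (starRingEnd ℂ) ξ3)) *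
      ((((b * v' s : ℝ) : ℂ) + Complex.I * ((c * w' t : ℝ) : ℂ)) / ((f s t : ℝ) : ℂ)))
    (α₁' α₀' αm₁'' α₀'' : ℝ → ℝ → Matrix (Fin 3) (Fin 3) ℂ)
    (hα₁' : ∀ s t, α₁' s t = (((ρ ^ (-(1 : ℝ) / 3) : ℝ) : ℂ)) •
      !![0, 0, ((Real.sqrt (f s t) : ℝ) : ℂ);
         ((Real.sqrt (f s t) : ℝ) : ℂ), 0, 0;
         0, ((ρ / f s t : ℝ) : ℂ), 0])
    (hα₀' : ∀ s t, α₀' s t = (1 / 2 : ℂ) •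
      !![0, 0, 0; 0, Lz s t, 0; 0, 0, -Lz s t])
    (hαm₁'' : ∀ s t, αm₁'' s t = -((((ρ ^ (-(1 : ℝ) / 3) : ℝ) : ℂ)) •
      !![0, ((Real.sqrt (f s t) : ℝ) : ℂ), 0;
         0, 0, ((ρ / f s t : ℝ) : ℂ);
         ((Real.sqrt (f s t) : ℝ) : ℂ), 0, 0]))
    (hα₀'' : ∀ s t, α₀'' s t = (1 / 2 : ℂ) •
      !![0, 0, 0; 0, -Lzb s t, 0; 0, 0, Lzb s t])
    (τ₂ τ₁ τ₀ τm₁ τm₂ : ℝ → ℝ → Matrix (Fin 3) (Fin 3) ℂ)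
    (hτ₂ : ∀ s t, τ₂ s t = (Complex.I * Complex.exp (Complex.I * ((2 * ϑ / 3 : ℝ) : ℂ))) •
      !![0, ((ρ / Real.sqrt (f s t) : ℝ) : ℂ), 0;
         0, 0, ((f s t : ℝ) : ℂ);
         ((ρ / Real.sqrt (f s t) : ℝ) : ℂ), 0, 0])
    (hτ₁ : ∀ s t, τ₁ s t = (Complex.I * Complex.exp (Complex.I * ((ϑ / 3 : ℝ) : ℂ))) •
      !![0, 0, g s t; -(g s t), 0, 0; 0, 0, 0])
    (hτ₀ : ∀ s t, τ₀ s t = Complex.I •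
      !![((2 * h s t : ℝ) : ℂ), 0, 0;
         0, ((-(h s t) : ℝ) : ℂ), 0;
         0, 0, ((-(h s t) : ℝ) : ℂ)])
    (hτm₁ : ∀ s t, τm₁ s t = (Complex.I * Complex.exp (-(Complex.I * ((ϑ / 3 : ℝ) : ℂ)))) •
      !![0, -((starRingEnd ℂ) (g s t)), 0;
         0, 0, 0;
         (starRingEnd ℂ) (g s t), 0, 0])
    (hτm₂ : ∀ s t, τm₂ s t = (Complex.I * Complex.exp (-(Complex.I * ((2 * ϑ / 3 : ℝ) : ℂ)))) •
      !![0, 0, ((ρ / Real.sqrt (f s t) : ℝ) : ℂ);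
         ((ρ / Real.sqrt (f s t) : ℝ) : ℂ), 0, 0;
         0, ((f s t : ℝ) : ℂ), 0])
    (τ : ℂ → ℝ → ℝ → Matrix (Fin 3) (Fin 3) ℂ)
    (hτ : ∀ (l : ℂ) (s t : ℝ), τ l s t =
      l ^ 2 • τ₂ s t + l • τ₁ s t + τ₀ s t + l⁻¹ • τm₁ s t + (l ^ 2)⁻¹ • τm₂ s t)
    (D : ℝ → ℝ → ℝ)
    (hD : ∀ s t, D s t =
      (f s t) ^ 2 + 2 * ρ ^ 2 / f s t + 2 * Complex.normSq (g s t) + 3 * (h s t) ^ 2)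
    (E : ℝ → ℝ → ℂ)
    (hE : ∀ s t, E s t =
      -(((f s t : ℝ) : ℂ) * (g s t) ^ 2) - ((f s t : ℝ) : ℂ) * ((starRingEnd ℂ) (g s t)) ^ 2
      - 2 * ((f s t : ℝ) : ℂ) ^ 2 * ((h s t : ℝ) : ℂ)
      + 2 * ((ρ ^ 2 / f s t : ℝ) : ℂ) * ((h s t : ℝ) : ℂ)
      + 2 * ((Complex.normSq (g s t) : ℝ) : ℂ) * ((h s t : ℝ) : ℂ)
      + 2 * ((h s t : ℝ) : ℂ) ^ 3) :
    ∀ (l : ℂ), l ≠ 0 → ∀ (s t : ℝ) (μ : ℂ),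
      Matrix.det (μ • (1 : Matrix (Fin 3) (Fin 3) ℂ) - τ l s t)
        = μ ^ 3 + ((D s t : ℝ) : ℂ) * μ
          + Complex.I * (E s t + ξ ^ 2 * l ^ 6 + ((starRingEnd ℂ) ξ) ^ 2 * (l ^ 6)⁻¹) := by

  intro l hl s t μ
  have hfp := hfpos s t
  have hsf : ((Real.sqrt (f s t) : ℝ) : ℂ) ^ 2 = ((f s t : ℝ) : ℂ) := by
    norm_cast
    exact Real.sq_sqrt hfp.le
  have hsf0 : ((Real.sqrt (f s t) : ℝ) : ℂ) ≠ 0 := by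
    norm_cast
    exact (Real.sqrt_pos.mpr hfp).ne'
  set u := Complex.exp (Complex.I * ((ϑ / 3 : ℝ) : ℂ)) with hu
  have hu0 : u ≠ 0 := Complex.exp_ne_zero _
  have hu2 : Complex.exp (Complex.I * ((2 * ϑ / 3 : ℝ) : ℂ)) = u ^ 2 := by
    rw [hu, ← Complex.exp_nat_mul]
    congr 1
    push_cast
    ring
  have hu3 : ξ = (ρ : ℂ) * u ^ 3 := by
    rw [hϑ, hu, ← Complex.exp_nat_mul]
    congr 1
    push_cast
    ring
  have hcu : (starRingEnd ℂ) u = u⁻¹ := by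
    rw [hu, ← Complex.exp_conj, ← Complex.exp_neg]
    congr 1
    simp [map_mul, Complex.conj_I, Complex.conj_ofReal, map_ofNat]
  have hcu1 : Complex.exp (-(Complex.I * ((ϑ / 3 : ℝ) : ℂ))) = u⁻¹ := by
    rw [hu, ← Complex.exp_neg]
  have hcu2 : Complex.exp (-(Complex.I * ((2 * ϑ / 3 : ℝ) : ℂ))) = (u ^ 2)⁻¹ := by
    rw [← hu2, ← Complex.exp_neg]
  have hcξ : (starRingEnd ℂ) ξ = (ρ : ℂ) * (u⁻¹) ^ 3 := by
    rw [hu3]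
    simp [map_mul, map_pow, hcu]
  have hgc : ((Complex.normSq (g s t) : ℝ) : ℂ) = g s t * (starRingEnd ℂ) (g s t) := by
    rw [Complex.mul_conj]
  set S := ((Real.sqrt (f s t) : ℝ) : ℂ) with hS
  have hc0 : l ^ 2 * u ^ 2 * S ≠ 0 := by
    exact mul_ne_zero (mul_ne_zero (pow_ne_zero _ hl) (pow_ne_zero _ hu0)) hsf0
  have key : μ • (1 : Matrix (Fin 3) (Fin 3) ℂ) - τ l s t
      = (l ^ 2 * u ^ 2 * S)⁻¹ •
        !![l ^ 2 * u ^ 2 * S * (μ - 2 * Complex.I * ((h s t : ℝ) : ℂ)),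
           -(Complex.I * l ^ 4 * u ^ 4 * (ρ : ℂ)) + Complex.I * l * u * (starRingEnd ℂ) (g s t) * S,
           -(Complex.I * l ^ 3 * u ^ 3 * g s t * S) - Complex.I * (ρ : ℂ);
           Complex.I * l ^ 3 * u ^ 3 * g s t * S - Complex.I * (ρ : ℂ),
           l ^ 2 * u ^ 2 * S * (μ + Complex.I * ((h s t : ℝ) : ℂ)),
           -(Complex.I * l ^ 4 * u ^ 4 * S ^ 3);
           -(Complex.I * l ^ 4 * u ^ 4 * (ρ : ℂ)) - Complex.I * l * u * (starRingEnd ℂ) (g s t) * S,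
           -(Complex.I * S ^ 3),
           l ^ 2 * u ^ 2 * S * (μ + Complex.I * ((h s t : ℝ) : ℂ))] := by
    rw [hτ, hτ₂, hτ₁, hτ₀, hτm₁, hτm₂, hu2, hcu1, hcu2]
    ext i j
    fin_cases i <;> fin_cases j <;>
      (simp [Matrix.sub_apply, Matrix.smul_apply, Matrix.add_apply, Matrix.one_apply,
        Matrix.vecHead, Matrix.vecTail]
       try push_cast
       try simp only [← hS]
       try simp only [← hsf]
       try field_simp
       try ring)
  rw [key, Matrix.det_smul]
  rw [hD, hE, hcξ, hu3]
  have hI2 : (Complex.I) ^ 2 = -1 := Complex.I_sq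
  have hI3 : (Complex.I) ^ 3 = -Complex.I := by rw [pow_succ, hI2]; ring
  simp only [Matrix.det_fin_three, Matrix.cons_val', Matrix.cons_val_zero, Matrix.cons_val_one,
    Matrix.head_cons, Matrix.empty_val', Matrix.cons_val_fin_one, Matrix.head_fin_const,
    Matrix.cons_val_two, Matrix.vecHead, Matrix.vecTail, Function.comp_apply, Fin.isValue,
    Fintype.card_fin, Matrix.of_apply]
  push_cast [hgc]
  rw [← hsf]
  field_simp
  ring_nf
  simp only [hI2, hI3]
  field_simp
  have hcan : l ^ 24 * u ^ 24 * S ^ 17 * l⁻¹ ^ 12 * u⁻¹ ^ 12 * S⁻¹ ^ 8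
      = l ^ 12 * u ^ 12 * S ^ 9 := by
    field_simp
  ring
end
end

section
/- For every (r,s,t) ∈ I×J×K, the partial derivatives of Φ satisfy ω(∂Φ/∂r, ∂Φ/∂s) = 0, ω(∂Φ/∂r, ∂Φ/∂t) = 0, ω(∂Φ/∂s, ∂Φ/∂t) = 0, and Im Ω(∂Φ/∂r, ∂Φ/∂s, ∂Φ/∂t) = 0. Consequently, at every point where ∂Φ/∂r, ∂Φ/∂s, ∂Φ/∂t are linearly independent over ℝ, the tangent space of N = Φ(I×J×K) is a special Lagrangian 3-plane in ℂ³, so N is a special Lagrangian 3-fold wherever it is nonsingular. -/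
noncomputable section

open Complex

lemma omega_self (a : Fin 3 → ℂ) : omegaForm a a = 0 := by
  simp [omegaForm, herm, Complex.mul_conj]

lemma herm_conj (a b : Fin 3 → ℂ) : (starRingEnd ℂ) (herm a b) = herm b a := by
  simp only [herm, map_add, map_mul, Complex.conj_conj]
  ring

lemma omega_antisymm (a b : Fin 3 → ℂ) : omegaForm b a = -omegaForm a b := by
  rw [omegaForm, ← herm_conj, Complex.conj_im, omegaForm]

lemma mem_span_triple {v₁ v₂ v₃ x : Fin 3 → ℂ}
    (h : x ∈ Submodule.span ℝ ({v₁, v₂, v₃} : Set (Fin 3 → ℂ))) :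
    ∃ c₁ c₂ c₃ : ℝ, x = c₁ • v₁ + c₂ • v₂ + c₃ • v₃ := by
  rw [show ({v₁, v₂, v₃} : Set (Fin 3 → ℂ)) = insert v₁ {v₂, v₃} from rfl,
    Submodule.mem_span_insert] at h
  obtain ⟨c₁, z, hz, rfl⟩ := h
  rw [Submodule.mem_span_pair] at hz
  obtain ⟨c₂, c₃, rfl⟩ := hz
  exact ⟨c₁, c₂, c₃, (add_assoc _ _ _).symm⟩

lemma herm_comb (v₁ v₂ v₃ : Fin 3 → ℂ) (c₁ c₂ c₃ d₁ d₂ d₃ : ℝ) :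
    herm (c₁ • v₁ + c₂ • v₂ + c₃ • v₃) (d₁ • v₁ + d₂ • v₂ + d₃ • v₃) =
      ((c₁ * d₁ : ℝ) : ℂ) * herm v₁ v₁ + ((c₁ * d₂ : ℝ) : ℂ) * herm v₁ v₂ +
      ((c₁ * d₃ : ℝ) : ℂ) * herm v₁ v₃ + ((c₂ * d₁ : ℝ) : ℂ) * herm v₂ v₁ +
      ((c₂ * d₂ : ℝ) : ℂ) * herm v₂ v₂ + ((c₂ * d₃ : ℝ) : ℂ) * herm v₂ v₃ +
      ((c₃ * d₁ : ℝ) : ℂ) * herm v₃ v₁ + ((c₃ * d₂ : ℝ) : ℂ) * herm v₃ v₂ +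
      ((c₃ * d₃ : ℝ) : ℂ) * herm v₃ v₃ := by
  simp only [herm, Pi.add_apply, Pi.smul_apply, Complex.real_smul, map_add, map_mul,
    Complex.conj_ofReal]
  push_cast
  ring

lemma omega_span_zero (v₁ v₂ v₃ : Fin 3 → ℂ)
    (h12 : omegaForm v₁ v₂ = 0) (h13 : omegaForm v₁ v₃ = 0) (h23 : omegaForm v₂ v₃ = 0) :
    ∀ a ∈ Submodule.span ℝ ({v₁, v₂, v₃} : Set (Fin 3 → ℂ)),
    ∀ b ∈ Submodule.span ℝ ({v₁, v₂, v₃} : Set (Fin 3 → ℂ)), omegaForm a b = 0 := by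
  intro a ha b hb
  obtain ⟨c₁, c₂, c₃, rfl⟩ := mem_span_triple ha
  obtain ⟨d₁, d₂, d₃, rfl⟩ := mem_span_triple hb
  have h21 : omegaForm v₂ v₁ = 0 := by rw [omega_antisymm, h12, neg_zero]
  have h31 : omegaForm v₃ v₁ = 0 := by rw [omega_antisymm, h13, neg_zero]
  have h32 : omegaForm v₃ v₂ = 0 := by rw [omega_antisymm, h23, neg_zero]
  have e := herm_comb v₁ v₂ v₃ c₁ c₂ c₃ d₁ d₂ d₃
  have : omegaForm (c₁ • v₁ + c₂ • v₂ + c₃ • v₃) (d₁ • v₁ + d₂ • v₂ + d₃ • v₃) =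
      (c₁ * d₁) * omegaForm v₁ v₁ + (c₁ * d₂) * omegaForm v₁ v₂ +
      (c₁ * d₃) * omegaForm v₁ v₃ + (c₂ * d₁) * omegaForm v₂ v₁ +
      (c₂ * d₂) * omegaForm v₂ v₂ + (c₂ * d₃) * omegaForm v₂ v₃ +
      (c₃ * d₁) * omegaForm v₃ v₁ + (c₃ * d₂) * omegaForm v₃ v₂ +
      (c₃ * d₃) * omegaForm v₃ v₃ := by
    simp [omegaForm, e, Complex.add_im, Complex.mul_im]
  rw [this, omega_self, omega_self, omega_self, h12, h13, h23, h21, h31, h32]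
  ring

lemma Omega_def (a b c : Fin 3 → ℂ) :
    OmegaForm a b c =
      a 0 * b 1 * c 2 - a 0 * c 1 * b 2 - b 0 * a 1 * c 2 +
      b 0 * c 1 * a 2 + c 0 * a 1 * b 2 - c 0 * b 1 * a 2 := by
  simp [OmegaForm, Matrix.det_fin_three]

lemma Omega_comb (v₁ v₂ v₃ : Fin 3 → ℂ) (c₁ c₂ c₃ d₁ d₂ d₃ e₁ e₂ e₃ : ℝ) :
    OmegaForm (c₁ • v₁ + c₂ • v₂ + c₃ • v₃) (d₁ • v₁ + d₂ • v₂ + d₃ • v₃)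
      (e₁ • v₁ + e₂ • v₂ + e₃ • v₃) =
    ((c₁ * (d₂ * e₃) - c₁ * (d₃ * e₂) - c₂ * (d₁ * e₃) + c₂ * (d₃ * e₁) +
      c₃ * (d₁ * e₂) - c₃ * (d₂ * e₁) : ℝ) : ℂ) * OmegaForm v₁ v₂ v₃ := by
  rw [Omega_def, Omega_def]
  simp only [Pi.add_apply, Pi.smul_apply, Complex.real_smul]
  push_cast
  ring

lemma Omega_span_zero (v₁ v₂ v₃ : Fin 3 → ℂ) (h : (OmegaForm v₁ v₂ v₃).im = 0) :
    ∀ a ∈ Submodule.span ℝ ({v₁, v₂, v₃} : Set (Fin 3 → ℂ)),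
    ∀ b ∈ Submodule.span ℝ ({v₁, v₂, v₃} : Set (Fin 3 → ℂ)),
    ∀ c ∈ Submodule.span ℝ ({v₁, v₂, v₃} : Set (Fin 3 → ℂ)),
      (OmegaForm a b c).im = 0 := by
  intro a ha b hb c hc
  obtain ⟨c₁, c₂, c₃, rfl⟩ := mem_span_triple ha
  obtain ⟨d₁, d₂, d₃, rfl⟩ := mem_span_triple hb
  obtain ⟨e₁, e₂, e₃, rfl⟩ := mem_span_triple hc
  rw [Omega_comb]
  simp [Complex.mul_im, h]

set_option maxHeartbeats 3200000 in
/-- Theorem 7.1 of the paper. The three-variable construction: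
`Φ(r,s,t) = (x₁(r)y₁(s)z₁(t), x₂(r)y₂(s)z₂(t), x₃(r)y₃(s)z₃(t))` on `I × J × K`
satisfies `ω(∂Φ/∂r, ∂Φ/∂s) = ω(∂Φ/∂r, ∂Φ/∂t) = ω(∂Φ/∂s, ∂Φ/∂t) = 0` and
`Im Ω(∂Φ/∂r, ∂Φ/∂s, ∂Φ/∂t) = 0`; consequently wherever the three partial
derivatives are linearly independent over `ℝ`, their span is a special Lagrangian
3-plane, so `N = Φ(I × J × K)` is a special Lagrangian 3-fold wherever it is
nonsingular. -/
theorem stmt17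
    (α₁ α₂ α₃ β₁ β₂ β₃ γ₁ γ₂ γ₃ : ℝ)
    (hαβ : α₁ * β₁ + α₂ * β₂ + α₃ * β₃ = 0)
    (hαγ : α₁ * γ₁ + α₂ * γ₂ + α₃ * γ₃ = 0)
    (hβγ : β₁ * γ₁ + β₂ * γ₂ + β₃ * γ₃ = 0)
    (hαβγ : α₁ * β₁ * γ₁ + α₂ * β₂ * γ₂ + α₃ * β₃ * γ₃ = 0)
    (I J K : Set ℝ)
    (hI : IsOpen I) (hI' : I.OrdConnected)
    (hJ : IsOpen J) (hJ' : J.OrdConnected)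
    (hK : IsOpen K) (hK' : K.OrdConnected)
    (x₁ x₂ x₃ y₁ y₂ y₃ z₁ z₂ z₃ : ℝ → ℂ)
    (hx₁ : ∀ r ∈ I, HasDerivAt x₁ ((α₁ : ℂ) * (starRingEnd ℂ) (x₂ r * x₃ r)) r)
    (hx₂ : ∀ r ∈ I, HasDerivAt x₂ ((α₂ : ℂ) * (starRingEnd ℂ) (x₃ r * x₁ r)) r)
    (hx₃ : ∀ r ∈ I, HasDerivAt x₃ ((α₃ : ℂ) * (starRingEnd ℂ) (x₁ r * x₂ r)) r)
    (hy₁ : ∀ s ∈ J, HasDerivAt y₁ ((β₁ : ℂ) * (starRingEnd ℂ) (y₂ s * y₃ s)) s)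
    (hy₂ : ∀ s ∈ J, HasDerivAt y₂ ((β₂ : ℂ) * (starRingEnd ℂ) (y₃ s * y₁ s)) s)
    (hy₃ : ∀ s ∈ J, HasDerivAt y₃ ((β₃ : ℂ) * (starRingEnd ℂ) (y₁ s * y₂ s)) s)
    (hz₁ : ∀ t ∈ K, HasDerivAt z₁ ((γ₁ : ℂ) * (starRingEnd ℂ) (z₂ t * z₃ t)) t)
    (hz₂ : ∀ t ∈ K, HasDerivAt z₂ ((γ₂ : ℂ) * (starRingEnd ℂ) (z₃ t * z₁ t)) t)
    (hz₃ : ∀ t ∈ K, HasDerivAt z₃ ((γ₃ : ℂ) * (starRingEnd ℂ) (z₁ t * z₂ t)) t)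
    (u v w : ℝ → ℝ)
    (hu₁ : ∀ r ∈ I, Complex.normSq (x₁ r) = α₁ * u r + 1)
    (hu₂ : ∀ r ∈ I, Complex.normSq (x₂ r) = α₂ * u r + 1)
    (hu₃ : ∀ r ∈ I, Complex.normSq (x₃ r) = α₃ * u r + 1)
    (hv₁ : ∀ s ∈ J, Complex.normSq (y₁ s) = β₁ * v s + 1)
    (hv₂ : ∀ s ∈ J, Complex.normSq (y₂ s) = β₂ * v s + 1)
    (hv₃ : ∀ s ∈ J, Complex.normSq (y₃ s) = β₃ * v s + 1)
    (hw₁ : ∀ t ∈ K, Complex.normSq (z₁ t) = γ₁ * w t + 1)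
    (hw₂ : ∀ t ∈ K, Complex.normSq (z₂ t) = γ₂ * w t + 1)
    (hw₃ : ∀ t ∈ K, Complex.normSq (z₃ t) = γ₃ * w t + 1)
    (Φ : ℝ → ℝ → ℝ → (Fin 3 → ℂ))
    (hΦ : ∀ r s t, Φ r s t =
      ![x₁ r * y₁ s * z₁ t, x₂ r * y₂ s * z₂ t, x₃ r * y₃ s * z₃ t]) :
    ∀ r ∈ I, ∀ s ∈ J, ∀ t ∈ K,
      omegaForm (deriv (fun x => Φ x s t) r) (deriv (fun x => Φ r x t) s) = 0 ∧
      omegaForm (deriv (fun x => Φ x s t) r) (deriv (fun x => Φ r s x) t) = 0 ∧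
      omegaForm (deriv (fun x => Φ r x t) s) (deriv (fun x => Φ r s x) t) = 0 ∧
      (OmegaForm (deriv (fun x => Φ x s t) r) (deriv (fun x => Φ r x t) s)
        (deriv (fun x => Φ r s x) t)).im = 0 ∧
      (LinearIndependent ℝ
          ![deriv (fun x => Φ x s t) r, deriv (fun x => Φ r x t) s,
            deriv (fun x => Φ r s x) t] →
        IsSpecialLagrangianPlane (Submodule.span ℝ
          {deriv (fun x => Φ x s t) r, deriv (fun x => Φ r x t) s,
           deriv (fun x => Φ r s x) t})) := by

  intro r hr s hs t ht
  -- the three partial derivatives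
  have hda : HasDerivAt (fun x => Φ x s t)
      ![(α₁ : ℂ) * (starRingEnd ℂ) (x₂ r * x₃ r) * y₁ s * z₁ t,
        (α₂ : ℂ) * (starRingEnd ℂ) (x₃ r * x₁ r) * y₂ s * z₂ t,
        (α₃ : ℂ) * (starRingEnd ℂ) (x₁ r * x₂ r) * y₃ s * z₃ t] r := by
    rw [hasDerivAt_pi]
    intro i
    fin_cases i
    · simpa only [hΦ, Matrix.cons_val_zero, Fin.zero_eta] using ((hx₁ r hr).mul_const (y₁ s)).mul_const (z₁ t)
    · simpa only [hΦ, Matrix.cons_val_one, Matrix.head_cons, Fin.mk_one, Matrix.cons_val_zero] using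
        ((hx₂ r hr).mul_const (y₂ s)).mul_const (z₂ t)
    · simpa only [hΦ, Matrix.cons_val_two, Matrix.tail_cons, Matrix.head_cons, Fin.reduceFinMk] using
        ((hx₃ r hr).mul_const (y₃ s)).mul_const (z₃ t)
  have hdb : HasDerivAt (fun x => Φ r x t)
      ![x₁ r * ((β₁ : ℂ) * (starRingEnd ℂ) (y₂ s * y₃ s)) * z₁ t,
        x₂ r * ((β₂ : ℂ) * (starRingEnd ℂ) (y₃ s * y₁ s)) * z₂ t,
        x₃ r * ((β₃ : ℂ) * (starRingEnd ℂ) (y₁ s * y₂ s)) * z₃ t] s := by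
    rw [hasDerivAt_pi]
    intro i
    fin_cases i
    · simpa only [hΦ, Matrix.cons_val_zero, Fin.zero_eta] using (((hy₁ s hs).const_mul (x₁ r)).mul_const (z₁ t))
    · simpa only [hΦ, Matrix.cons_val_one, Matrix.head_cons, Fin.mk_one, Matrix.cons_val_zero] using
        (((hy₂ s hs).const_mul (x₂ r)).mul_const (z₂ t))
    · simpa only [hΦ, Matrix.cons_val_two, Matrix.tail_cons, Matrix.head_cons, Fin.reduceFinMk] using
        (((hy₃ s hs).const_mul (x₃ r)).mul_const (z₃ t))
  have hdc : HasDerivAt (fun x => Φ r s x)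
      ![x₁ r * y₁ s * ((γ₁ : ℂ) * (starRingEnd ℂ) (z₂ t * z₃ t)),
        x₂ r * y₂ s * ((γ₂ : ℂ) * (starRingEnd ℂ) (z₃ t * z₁ t)),
        x₃ r * y₃ s * ((γ₃ : ℂ) * (starRingEnd ℂ) (z₁ t * z₂ t))] t := by
    rw [hasDerivAt_pi]
    intro i
    fin_cases i
    · simpa only [hΦ, Matrix.cons_val_zero, Fin.zero_eta] using ((hz₁ t ht).const_mul (x₁ r * y₁ s))
    · simpa only [hΦ, Matrix.cons_val_one, Matrix.head_cons, Fin.mk_one, Matrix.cons_val_zero] using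
        ((hz₂ t ht).const_mul (x₂ r * y₂ s))
    · simpa only [hΦ, Matrix.cons_val_two, Matrix.tail_cons, Matrix.head_cons, Fin.reduceFinMk] using
        ((hz₃ t ht).const_mul (x₃ r * y₃ s))
  have ha := hda.deriv
  have hb := hdb.deriv
  have hc := hdc.deriv
  -- conjugate-product identities from the norm hypotheses
  have hx1 : x₁ r * (starRingEnd ℂ) (x₁ r) = (α₁ : ℂ) * (u r : ℂ) + 1 := by
    rw [Complex.mul_conj, hu₁ r hr]; push_cast; ring
  have hx2 : x₂ r * (starRingEnd ℂ) (x₂ r) = (α₂ : ℂ) * (u r : ℂ) + 1 := by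
    rw [Complex.mul_conj, hu₂ r hr]; push_cast; ring
  have hx3 : x₃ r * (starRingEnd ℂ) (x₃ r) = (α₃ : ℂ) * (u r : ℂ) + 1 := by
    rw [Complex.mul_conj, hu₃ r hr]; push_cast; ring
  have hy1 : y₁ s * (starRingEnd ℂ) (y₁ s) = (β₁ : ℂ) * (v s : ℂ) + 1 := by
    rw [Complex.mul_conj, hv₁ s hs]; push_cast; ring
  have hy2 : y₂ s * (starRingEnd ℂ) (y₂ s) = (β₂ : ℂ) * (v s : ℂ) + 1 := by
    rw [Complex.mul_conj, hv₂ s hs]; push_cast; ring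
  have hy3 : y₃ s * (starRingEnd ℂ) (y₃ s) = (β₃ : ℂ) * (v s : ℂ) + 1 := by
    rw [Complex.mul_conj, hv₃ s hs]; push_cast; ring
  have hz1 : z₁ t * (starRingEnd ℂ) (z₁ t) = (γ₁ : ℂ) * (w t : ℂ) + 1 := by
    rw [Complex.mul_conj, hw₁ t ht]; push_cast; ring
  have hz2 : z₂ t * (starRingEnd ℂ) (z₂ t) = (γ₂ : ℂ) * (w t : ℂ) + 1 := by
    rw [Complex.mul_conj, hw₂ t ht]; push_cast; ring
  have hz3 : z₃ t * (starRingEnd ℂ) (z₃ t) = (γ₃ : ℂ) * (w t : ℂ) + 1 := by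
    rw [Complex.mul_conj, hw₃ t ht]; push_cast; ring
  -- cast relations
  have hαβC : (α₁ : ℂ) * β₁ + (α₂ : ℂ) * β₂ + (α₃ : ℂ) * β₃ = 0 := by
    have := congrArg (fun x : ℝ => (x : ℂ)) hαβ; push_cast at this; exact_mod_cast this
  have hαγC : (α₁ : ℂ) * γ₁ + (α₂ : ℂ) * γ₂ + (α₃ : ℂ) * γ₃ = 0 := by
    have := congrArg (fun x : ℝ => (x : ℂ)) hαγ; push_cast at this; exact_mod_cast this
  have hβγC : (β₁ : ℂ) * γ₁ + (β₂ : ℂ) * γ₂ + (β₃ : ℂ) * γ₃ = 0 := by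
    have := congrArg (fun x : ℝ => (x : ℂ)) hβγ; push_cast at this; exact_mod_cast this
  have hαβγC : (α₁ : ℂ) * β₁ * γ₁ + (α₂ : ℂ) * β₂ * γ₂ + (α₃ : ℂ) * β₃ * γ₃ = 0 := by
    have := congrArg (fun x : ℝ => (x : ℂ)) hαβγ; push_cast at this; exact_mod_cast this
  set cX : ℂ := (starRingEnd ℂ) (x₁ r) * (starRingEnd ℂ) (x₂ r) * (starRingEnd ℂ) (x₃ r) with hcX
  -- the four pointwise identities
  have h1 : omegaForm (deriv (fun x => Φ x s t) r) (deriv (fun x => Φ r x t) s) = 0 := by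
    have : herm (deriv (fun x => Φ x s t) r) (deriv (fun x => Φ r x t) s) = 0 := by
      rw [ha, hb]
      simp only [herm, Matrix.cons_val_zero, Matrix.cons_val_one, Matrix.head_cons,
        Matrix.cons_val_two, Matrix.tail_cons, map_mul, Complex.conj_conj, Complex.conj_ofReal]
      linear_combination
        ((α₁ : ℂ) * β₁ * (starRingEnd ℂ) (x₁ r) * (starRingEnd ℂ) (x₂ r) * (starRingEnd ℂ) (x₃ r)
          * y₁ s * y₂ s * y₃ s) * hz1 +
        ((α₂ : ℂ) * β₂ * (starRingEnd ℂ) (x₁ r) * (starRingEnd ℂ) (x₂ r) * (starRingEnd ℂ) (x₃ r)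
          * y₁ s * y₂ s * y₃ s) * hz2 +
        ((α₃ : ℂ) * β₃ * (starRingEnd ℂ) (x₁ r) * (starRingEnd ℂ) (x₂ r) * (starRingEnd ℂ) (x₃ r)
          * y₁ s * y₂ s * y₃ s) * hz3 +
        ((starRingEnd ℂ) (x₁ r) * (starRingEnd ℂ) (x₂ r) * (starRingEnd ℂ) (x₃ r)
          * y₁ s * y₂ s * y₃ s * (w t : ℂ)) * hαβγC +
        ((starRingEnd ℂ) (x₁ r) * (starRingEnd ℂ) (x₂ r) * (starRingEnd ℂ) (x₃ r)
          * y₁ s * y₂ s * y₃ s) * hαβC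
    rw [omegaForm, this, Complex.zero_im]
  have h2 : omegaForm (deriv (fun x => Φ x s t) r) (deriv (fun x => Φ r s x) t) = 0 := by
    have : herm (deriv (fun x => Φ x s t) r) (deriv (fun x => Φ r s x) t) = 0 := by
      rw [ha, hc]
      simp only [herm, Matrix.cons_val_zero, Matrix.cons_val_one, Matrix.head_cons,
        Matrix.cons_val_two, Matrix.tail_cons, map_mul, Complex.conj_conj, Complex.conj_ofReal]
      linear_combination
        ((α₁ : ℂ) * γ₁ * (starRingEnd ℂ) (x₁ r) * (starRingEnd ℂ) (x₂ r) * (starRingEnd ℂ) (x₃ r)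
          * z₁ t * z₂ t * z₃ t) * hy1 +
        ((α₂ : ℂ) * γ₂ * (starRingEnd ℂ) (x₁ r) * (starRingEnd ℂ) (x₂ r) * (starRingEnd ℂ) (x₃ r)
          * z₁ t * z₂ t * z₃ t) * hy2 +
        ((α₃ : ℂ) * γ₃ * (starRingEnd ℂ) (x₁ r) * (starRingEnd ℂ) (x₂ r) * (starRingEnd ℂ) (x₃ r)
          * z₁ t * z₂ t * z₃ t) * hy3 +
        ((starRingEnd ℂ) (x₁ r) * (starRingEnd ℂ) (x₂ r) * (starRingEnd ℂ) (x₃ r)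
          * z₁ t * z₂ t * z₃ t * (v s : ℂ)) *
            (by linear_combination hαβγC : (α₁ : ℂ) * γ₁ * β₁ + (α₂ : ℂ) * γ₂ * β₂ + (α₃ : ℂ) * γ₃ * β₃ = 0) +
        ((starRingEnd ℂ) (x₁ r) * (starRingEnd ℂ) (x₂ r) * (starRingEnd ℂ) (x₃ r)
          * z₁ t * z₂ t * z₃ t) * hαγC
    rw [omegaForm, this, Complex.zero_im]
  have h3 : omegaForm (deriv (fun x => Φ r x t) s) (deriv (fun x => Φ r s x) t) = 0 := by
    have : herm (deriv (fun x => Φ r x t) s) (deriv (fun x => Φ r s x) t) = 0 := by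
      rw [hb, hc]
      simp only [herm, Matrix.cons_val_zero, Matrix.cons_val_one, Matrix.head_cons,
        Matrix.cons_val_two, Matrix.tail_cons, map_mul, Complex.conj_conj, Complex.conj_ofReal]
      linear_combination
        ((β₁ : ℂ) * γ₁ * (starRingEnd ℂ) (y₁ s) * (starRingEnd ℂ) (y₂ s) * (starRingEnd ℂ) (y₃ s)
          * z₁ t * z₂ t * z₃ t) * hx1 +
        ((β₂ : ℂ) * γ₂ * (starRingEnd ℂ) (y₁ s) * (starRingEnd ℂ) (y₂ s) * (starRingEnd ℂ) (y₃ s)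
          * z₁ t * z₂ t * z₃ t) * hx2 +
        ((β₃ : ℂ) * γ₃ * (starRingEnd ℂ) (y₁ s) * (starRingEnd ℂ) (y₂ s) * (starRingEnd ℂ) (y₃ s)
          * z₁ t * z₂ t * z₃ t) * hx3 +
        ((starRingEnd ℂ) (y₁ s) * (starRingEnd ℂ) (y₂ s) * (starRingEnd ℂ) (y₃ s)
          * z₁ t * z₂ t * z₃ t * (u r : ℂ)) *
            (by linear_combination hαβγC : (β₁ : ℂ) * γ₁ * α₁ + (β₂ : ℂ) * γ₂ * α₂ + (β₃ : ℂ) * γ₃ * α₃ = 0) +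
        ((starRingEnd ℂ) (y₁ s) * (starRingEnd ℂ) (y₂ s) * (starRingEnd ℂ) (y₃ s)
          * z₁ t * z₂ t * z₃ t) * hβγC
    rw [omegaForm, this, Complex.zero_im]
  have h4 : (OmegaForm (deriv (fun x => Φ x s t) r) (deriv (fun x => Φ r x t) s)
      (deriv (fun x => Φ r s x) t)).im = 0 := by
    rw [← Complex.conj_eq_iff_im]
    rw [ha, hb, hc, Omega_def]
    simp only [Matrix.cons_val_zero, Matrix.cons_val_one, Matrix.head_cons,
      Matrix.cons_val_two, Matrix.tail_cons,
      map_add, map_sub, map_mul, Complex.conj_conj, Complex.conj_ofReal]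
    ring
  refine ⟨h1, h2, h3, h4, fun hli => ?_⟩
  refine ⟨?_, omega_span_zero _ _ _ h1 h2 h3, Omega_span_zero _ _ _ h4⟩
  have hset : ({deriv (fun x => Φ x s t) r, deriv (fun x => Φ r x t) s,
      deriv (fun x => Φ r s x) t} : Set (Fin 3 → ℂ)) =
      Set.range ![deriv (fun x => Φ x s t) r, deriv (fun x => Φ r x t) s,
        deriv (fun x => Φ r s x) t] := by
    ext p
    simp only [Matrix.range_cons, Matrix.range_empty, Set.union_empty, Set.mem_insert_iff,
      Set.mem_union, Set.mem_singleton_iff]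
  rw [hset, finrank_span_eq_card hli]
  simp
end
end

section
/- Let α = (α₁,α₂,α₃) ∈ ℝ³ be a unit vector whose coordinates α₁, α₂, α₃ are distinct and nonzero. Then there exist unit vectors β = (β₁,β₂,β₃) and γ = (γ₁,γ₂,γ₃) in ℝ³ satisfying α₁β₁+α₂β₂+α₃β₃ = 0, α₁γ₁+α₂γ₂+α₃γ₃ = 0, β₁γ₁+β₂γ₂+β₃γ₃ = 0 and α₁β₁γ₁+α₂β₂γ₂+α₃β₃γ₃ = 0; moreover the pair (β,γ) is unique up to replacing β by −β, replacing γ by −γ, and exchanging β and γ: if (β′,γ′) is any other pair of unit vectors satisfying the same four equations, then (β′,γ′) ∈ {(εβ, ε′γ), (εγ, ε′β) : ε, ε′ ∈ {1,−1}}. -/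
lemma gram3 (a b c : Fin 3 → ℝ)
    (haa : a 0 ^ 2 + a 1 ^ 2 + a 2 ^ 2 = 1)
    (hbb : b 0 ^ 2 + b 1 ^ 2 + b 2 ^ 2 = 1)
    (hcc : c 0 ^ 2 + c 1 ^ 2 + c 2 ^ 2 = 1)
    (hab : a 0 * b 0 + a 1 * b 1 + a 2 * b 2 = 0)
    (hac : a 0 * c 0 + a 1 * c 1 + a 2 * c 2 = 0)
    (hbc : b 0 * c 0 + b 1 * c 1 + b 2 * c 2 = 0) :
    ∀ i j : Fin 3, a i * a j + b i * b j + c i * c j = if i = j then 1 else 0 := by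
  set M : Matrix (Fin 3) (Fin 3) ℝ := Matrix.of ![a, b, c] with hM
  have h1 : M * M.transpose = 1 := by
    ext i j
    fin_cases i <;> fin_cases j <;>
      simp [hM, Matrix.mul_apply, Fin.sum_univ_three, Matrix.one_apply, Matrix.transpose, Matrix.vecHead, Matrix.vecTail, Function.comp]
    · linear_combination haa
    · linear_combination hab
    · linear_combination hac
    · linear_combination hab
    · linear_combination hbb
    · linear_combination hbc
    · linear_combination hac
    · linear_combination hbc
    · linear_combination hcc
  have h2 : M.transpose * M = 1 := mul_eq_one_comm.mp h1
  intro i j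
  have h3 := congrFun (congrFun h2 i) j
  simp [hM, Matrix.mul_apply, Fin.sum_univ_three, Matrix.one_apply,
    Matrix.transpose, Matrix.vecHead, Matrix.vecTail, Function.comp] at h3
  linear_combination h3

lemma expand3 (a b c : Fin 3 → ℝ)
    (haa : a 0 ^ 2 + a 1 ^ 2 + a 2 ^ 2 = 1)
    (hbb : b 0 ^ 2 + b 1 ^ 2 + b 2 ^ 2 = 1)
    (hcc : c 0 ^ 2 + c 1 ^ 2 + c 2 ^ 2 = 1)
    (hab : a 0 * b 0 + a 1 * b 1 + a 2 * b 2 = 0)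
    (hac : a 0 * c 0 + a 1 * c 1 + a 2 * c 2 = 0)
    (hbc : b 0 * c 0 + b 1 * c 1 + b 2 * c 2 = 0)
    (w : Fin 3 → ℝ) (i : Fin 3) :
    w i = (w 0 * a 0 + w 1 * a 1 + w 2 * a 2) * a i
        + (w 0 * b 0 + w 1 * b 1 + w 2 * b 2) * b i
        + (w 0 * c 0 + w 1 * c 1 + w 2 * c 2) * c i := by
  have g := gram3 a b c haa hbb hcc hab hac hbc
  have ht : i = 0 ∨ i = 1 ∨ i = 2 := by omega
  rcases ht with rfl | rfl | rfl
  · have g0 : a 0 * a 0 + b 0 * b 0 + c 0 * c 0 = 1 := by simpa using g 0 0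
    have g1 : a 0 * a 1 + b 0 * b 1 + c 0 * c 1 = 0 := by simpa using g 0 1
    have g2 : a 0 * a 2 + b 0 * b 2 + c 0 * c 2 = 0 := by simpa using g 0 2
    linear_combination (-(w 0) * g0) - w 1 * g1 - w 2 * g2
  · have g0 : a 1 * a 0 + b 1 * b 0 + c 1 * c 0 = 0 := by simpa using g 1 0
    have g1 : a 1 * a 1 + b 1 * b 1 + c 1 * c 1 = 1 := by simpa using g 1 1
    have g2 : a 1 * a 2 + b 1 * b 2 + c 1 * c 2 = 0 := by simpa using g 1 2
    linear_combination (-(w 0) * g0) - w 1 * g1 - w 2 * g2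
  · have g0 : a 2 * a 0 + b 2 * b 0 + c 2 * c 0 = 0 := by simpa using g 2 0
    have g1 : a 2 * a 1 + b 2 * b 1 + c 2 * c 1 = 0 := by simpa using g 2 1
    have g2 : a 2 * a 2 + b 2 * b 2 + c 2 * c 2 = 1 := by simpa using g 2 2
    linear_combination (-(w 0) * g0) - w 1 * g1 - w 2 * g2

lemma lam_ne (α β γ : Fin 3 → ℝ)
    (hαα : α 0 ^ 2 + α 1 ^ 2 + α 2 ^ 2 = 1)
    (h01 : α 0 ≠ α 1) (h12 : α 1 ≠ α 2) (h02 : α 0 ≠ α 2)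
    (h0 : α 0 ≠ 0) (h1 : α 1 ≠ 0) (h2 : α 2 ≠ 0)
    (hββ : β 0 ^ 2 + β 1 ^ 2 + β 2 ^ 2 = 1)
    (hγγ : γ 0 ^ 2 + γ 1 ^ 2 + γ 2 ^ 2 = 1)
    (hαβ : α 0 * β 0 + α 1 * β 1 + α 2 * β 2 = 0)
    (hαγ : α 0 * γ 0 + α 1 * γ 1 + α 2 * γ 2 = 0)
    (hβγ : β 0 * γ 0 + β 1 * γ 1 + β 2 * γ 2 = 0)
    (hm : α 0 * β 0 * γ 0 + α 1 * β 1 * γ 1 + α 2 * β 2 * γ 2 = 0) :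
    α 0 * β 0 ^ 2 + α 1 * β 1 ^ 2 + α 2 * β 2 ^ 2 ≠
      α 0 * γ 0 ^ 2 + α 1 * γ 1 ^ 2 + α 2 * γ 2 ^ 2 := by
  intro heq
  set l : ℝ := α 0 * β 0 ^ 2 + α 1 * β 1 ^ 2 + α 2 * β 2 ^ 2 with hl
  set p : ℝ := α 0 ^ 2 * β 0 + α 1 ^ 2 * β 1 + α 2 ^ 2 * β 2 with hp
  set q : ℝ := α 0 ^ 2 * γ 0 + α 1 ^ 2 * γ 1 + α 2 ^ 2 * γ 2 with hq
  have keyb : ∀ i, (α i - l) * β i = p * α i := by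
    intro i
    have hw := expand3 α β γ hαα hββ hγγ hαβ hαγ hβγ (fun j => (α j - l) * β j) i
    have c1 : (α 0 - l) * β 0 * α 0 + (α 1 - l) * β 1 * α 1 + (α 2 - l) * β 2 * α 2
        = p := by rw [hp]; linear_combination (-l) * hαβ
    have c2 : (α 0 - l) * β 0 * β 0 + (α 1 - l) * β 1 * β 1 + (α 2 - l) * β 2 * β 2
        = 0 := by linear_combination (-l) * hββ - hl
    have c3 : (α 0 - l) * β 0 * γ 0 + (α 1 - l) * β 1 * γ 1 + (α 2 - l) * β 2 * γ 2
        = 0 := by linear_combination hm - l * hβγ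
    rw [c1, c2, c3] at hw
    linear_combination hw
  have keyc : ∀ i, (α i - l) * γ i = q * α i := by
    intro i
    have hw := expand3 α β γ hαα hββ hγγ hαβ hαγ hβγ (fun j => (α j - l) * γ j) i
    have c1 : (α 0 - l) * γ 0 * α 0 + (α 1 - l) * γ 1 * α 1 + (α 2 - l) * γ 2 * α 2
        = q := by rw [hq]; linear_combination (-l) * hαγ
    have c2 : (α 0 - l) * γ 0 * β 0 + (α 1 - l) * γ 1 * β 1 + (α 2 - l) * γ 2 * β 2
        = 0 := by linear_combination hm - l * hβγ
    have c3 : (α 0 - l) * γ 0 * γ 0 + (α 1 - l) * γ 1 * γ 1 + (α 2 - l) * γ 2 * γ 2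
        = 0 := by linear_combination (-l) * hγγ - heq
    rw [c1, c2, c3] at hw
    linear_combination hw
  have key : ∀ i, α i ≠ l → q * β i - p * γ i = 0 := by
    intro i hi
    have h' : (α i - l) * (q * β i - p * γ i) = 0 := by
      linear_combination q * keyb i - p * keyc i
    exact (mul_eq_zero.mp h').resolve_left (sub_ne_zero.mpr hi)
  have hv : ∀ i, q * β i - p * γ i = 0 := by
    have dot : ∀ i : Fin 3, α i ≠ 0 → q * β i - p * γ i + q * β i - q * β i = 0 → True := fun _ _ _ => trivial
    by_cases e0 : α 0 = l
    · have n1 : α 1 ≠ l := fun h => h01 (by rw [e0, h])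
      have n2 : α 2 ≠ l := fun h => h02 (by rw [e0, h])
      have hv1 := key 1 n1
      have hv2 := key 2 n2
      have hv0 : q * β 0 - p * γ 0 = 0 := by
        have h' : α 0 * (q * β 0 - p * γ 0) = 0 := by
          linear_combination q * hαβ - p * hαγ - α 1 * hv1 - α 2 * hv2
        exact (mul_eq_zero.mp h').resolve_left h0
      intro i
      have ht : i = 0 ∨ i = 1 ∨ i = 2 := by omega
      rcases ht with rfl | rfl | rfl <;> assumption
    · by_cases e1 : α 1 = l
      · have n2 : α 2 ≠ l := fun h => h12 (by rw [e1, h])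
        have hv0 := key 0 e0
        have hv2 := key 2 n2
        have hv1 : q * β 1 - p * γ 1 = 0 := by
          have h' : α 1 * (q * β 1 - p * γ 1) = 0 := by
            linear_combination q * hαβ - p * hαγ - α 0 * hv0 - α 2 * hv2
          exact (mul_eq_zero.mp h').resolve_left h1
        intro i
        have ht : i = 0 ∨ i = 1 ∨ i = 2 := by omega
        rcases ht with rfl | rfl | rfl <;> assumption
      · by_cases e2 : α 2 = l
        · have hv0 := key 0 e0
          have hv1 := key 1 e1
          have hv2 : q * β 2 - p * γ 2 = 0 := by
            have h' : α 2 * (q * β 2 - p * γ 2) = 0 := by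
              linear_combination q * hαβ - p * hαγ - α 0 * hv0 - α 1 * hv1
            exact (mul_eq_zero.mp h').resolve_left h2
          intro i
          have ht : i = 0 ∨ i = 1 ∨ i = 2 := by omega
          rcases ht with rfl | rfl | rfl <;> assumption
        · intro i
          have ht : i = 0 ∨ i = 1 ∨ i = 2 := by omega
          rcases ht with rfl | rfl | rfl
          exacts [key 0 e0, key 1 e1, key 2 e2]
  have hp0 : p = 0 := by
    linear_combination (-(γ 0)) * hv 0 - γ 1 * hv 1 - γ 2 * hv 2 - p * hγγ + q * hβγ
  have hq0 : q = 0 := by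
    linear_combination β 0 * hv 0 + β 1 * hv 1 + β 2 * hv 2 - q * hββ + p * hβγ
  have zb : ∀ i, α i ≠ l → β i = 0 := by
    intro i hi
    have := keyb i
    rw [hp0] at this
    simp at this
    exact (this).resolve_left (sub_ne_zero.mpr hi)
  have zc : ∀ i, α i ≠ l → γ i = 0 := by
    intro i hi
    have := keyc i
    rw [hq0] at this
    simp at this
    exact (this).resolve_left (sub_ne_zero.mpr hi)
  by_cases e0 : α 0 = l
  · have n1 : α 1 ≠ l := fun h => h01 (by rw [e0, h])
    have n2 : α 2 ≠ l := fun h => h02 (by rw [e0, h])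
    have b1 := zb 1 n1; have b2 := zb 2 n2
    have g1 := zc 1 n1; have g2 := zc 2 n2
    rw [b1, b2] at hββ hβγ
    rw [g1, g2] at hγγ
    nlinarith [hββ, hγγ, hβγ, sq_nonneg (β 0 * γ 0)]
  · by_cases e1 : α 1 = l
    · have n2 : α 2 ≠ l := fun h => h12 (by rw [e1, h])
      have b0 := zb 0 e0; have b2 := zb 2 n2
      have g0 := zc 0 e0; have g2 := zc 2 n2
      rw [b0, b2] at hββ hβγ
      rw [g0, g2] at hγγ
      nlinarith [hββ, hγγ, hβγ, sq_nonneg (β 1 * γ 1)]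
    · have b0 := zb 0 e0; have b1 := zb 1 e1
      have g0 := zc 0 e0; have g1 := zc 1 e1
      rw [b0, b1] at hββ hβγ
      rw [g0, g1] at hγγ
      nlinarith [hββ, hγγ, hβγ, sq_nonneg (β 2 * γ 2)]

set_option maxHeartbeats 2000000 in
/-- Proposition 7.2 of the paper. If `α ∈ ℝ³` is a unit vector
with distinct nonzero coordinates, then there exist unit vectors `β, γ ∈ ℝ³` with
`α·β = α·γ = β·γ = 0` and `α₁β₁γ₁ + α₂β₂γ₂ + α₃β₃γ₃ = 0`, unique up to changing
the signs of `β` and `γ` and exchanging `β` and `γ`. -/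
theorem stmt18 (α : Fin 3 → ℝ)
    (hα : α 0 ^ 2 + α 1 ^ 2 + α 2 ^ 2 = 1)
    (h01 : α 0 ≠ α 1) (h12 : α 1 ≠ α 2) (h02 : α 0 ≠ α 2)
    (h0 : α 0 ≠ 0) (h1 : α 1 ≠ 0) (h2 : α 2 ≠ 0) :
    ∃ β γ : Fin 3 → ℝ,
      (β 0 ^ 2 + β 1 ^ 2 + β 2 ^ 2 = 1) ∧
      (γ 0 ^ 2 + γ 1 ^ 2 + γ 2 ^ 2 = 1) ∧
      (α 0 * β 0 + α 1 * β 1 + α 2 * β 2 = 0) ∧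
      (α 0 * γ 0 + α 1 * γ 1 + α 2 * γ 2 = 0) ∧
      (β 0 * γ 0 + β 1 * γ 1 + β 2 * γ 2 = 0) ∧
      (α 0 * β 0 * γ 0 + α 1 * β 1 * γ 1 + α 2 * β 2 * γ 2 = 0) ∧
      (∀ β' γ' : Fin 3 → ℝ,
        (β' 0 ^ 2 + β' 1 ^ 2 + β' 2 ^ 2 = 1) →
        (γ' 0 ^ 2 + γ' 1 ^ 2 + γ' 2 ^ 2 = 1) →
        (α 0 * β' 0 + α 1 * β' 1 + α 2 * β' 2 = 0) →
        (α 0 * γ' 0 + α 1 * γ' 1 + α 2 * γ' 2 = 0) →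
        (β' 0 * γ' 0 + β' 1 * γ' 1 + β' 2 * γ' 2 = 0) →
        (α 0 * β' 0 * γ' 0 + α 1 * β' 1 * γ' 1 + α 2 * β' 2 * γ' 2 = 0) →
        ((β' = β ∨ β' = -β) ∧ (γ' = γ ∨ γ' = -γ)) ∨
        ((β' = γ ∨ β' = -γ) ∧ (γ' = β ∨ γ' = -β))) := by
  obtain ⟨aa, haadef⟩ : ∃ aa : ℝ, aa = α 0 * α 1 ^ 2 + α 1 * α 0 ^ 2 := ⟨_, rfl⟩
  obtain ⟨bb, hbbdef⟩ : ∃ bb : ℝ, bb = α 0 * α 1 * α 2 * (α 0 - α 1) := ⟨_, rfl⟩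
  obtain ⟨cc, hccdef⟩ : ∃ cc : ℝ,
    cc = (α 0 ^ 3 + α 1 ^ 3) * α 2 ^ 2 + α 2 * (α 0 ^ 2 + α 1 ^ 2) ^ 2 := ⟨_, rfl⟩
  have hbbne : bb ≠ 0 := by
    rw [hbbdef]
    exact mul_ne_zero (mul_ne_zero (mul_ne_zero h0 h1) h2) (sub_ne_zero.mpr h01)
  have hbb2 : 0 < bb ^ 2 := pow_two_pos_of_ne_zero hbbne
  have hs : 0 < α 0 ^ 2 + α 1 ^ 2 := by
    have := pow_two_pos_of_ne_zero h0
    nlinarith [sq_nonneg (α 1)]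
  obtain ⟨D, hDdef⟩ : ∃ D : ℝ, D = Real.sqrt ((aa - cc) ^ 2 + 4 * bb ^ 2) := ⟨_, rfl⟩
  have hD2 : D ^ 2 = (aa - cc) ^ 2 + 4 * bb ^ 2 := by
    rw [hDdef]; exact Real.sq_sqrt (by positivity)
  obtain ⟨t1, ht1def⟩ : ∃ t1 : ℝ, t1 = (cc - aa + D) / 2 := ⟨_, rfl⟩
  obtain ⟨t2, ht2def⟩ : ∃ t2 : ℝ, t2 = (cc - aa - D) / 2 := ⟨_, rfl⟩
  have hsum : t1 + t2 = cc - aa := by rw [ht1def, ht2def]; ring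
  have hprod : t1 * t2 = -bb ^ 2 := by
    rw [ht1def, ht2def]; linear_combination (-(1 : ℝ) / 4) * hD2
  obtain ⟨n1, hn1def⟩ : ∃ n1 : ℝ,
    n1 = Real.sqrt ((α 0 ^ 2 + α 1 ^ 2) * (bb ^ 2 + t1 ^ 2)) := ⟨_, rfl⟩
  obtain ⟨n2, hn2def⟩ : ∃ n2 : ℝ,
    n2 = Real.sqrt ((α 0 ^ 2 + α 1 ^ 2) * (bb ^ 2 + t2 ^ 2)) := ⟨_, rfl⟩
  have hn1pos : 0 < n1 := by
    rw [hn1def]; apply Real.sqrt_pos.mpr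
    apply mul_pos hs; nlinarith [sq_nonneg t1]
  have hn2pos : 0 < n2 := by
    rw [hn2def]; apply Real.sqrt_pos.mpr
    apply mul_pos hs; nlinarith [sq_nonneg t2]
  have hn1 : n1 ^ 2 = (α 0 ^ 2 + α 1 ^ 2) * (bb ^ 2 + t1 ^ 2) := by
    rw [hn1def]; apply Real.sq_sqrt; positivity
  have hn2 : n2 ^ 2 = (α 0 ^ 2 + α 1 ^ 2) * (bb ^ 2 + t2 ^ 2) := by
    rw [hn2def]; apply Real.sq_sqrt; positivity
  have hn1ne : n1 ≠ 0 := ne_of_gt hn1pos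
  have hn2ne : n2 ≠ 0 := ne_of_gt hn2pos
  obtain ⟨β, hβ0, hβ1, hβ2⟩ : ∃ β : Fin 3 → ℝ,
      β 0 = (bb * α 1 + t1 * (α 0 * α 2)) / n1 ∧
      β 1 = (bb * (-α 0) + t1 * (α 1 * α 2)) / n1 ∧
      β 2 = (t1 * (-(α 0 ^ 2 + α 1 ^ 2))) / n1 :=
    ⟨![(bb * α 1 + t1 * (α 0 * α 2)) / n1,
       (bb * (-α 0) + t1 * (α 1 * α 2)) / n1,
       (t1 * (-(α 0 ^ 2 + α 1 ^ 2))) / n1], rfl, rfl, rfl⟩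
  obtain ⟨γ, hγ0, hγ1, hγ2⟩ : ∃ γ : Fin 3 → ℝ,
      γ 0 = (bb * α 1 + t2 * (α 0 * α 2)) / n2 ∧
      γ 1 = (bb * (-α 0) + t2 * (α 1 * α 2)) / n2 ∧
      γ 2 = (t2 * (-(α 0 ^ 2 + α 1 ^ 2))) / n2 :=
    ⟨![(bb * α 1 + t2 * (α 0 * α 2)) / n2,
       (bb * (-α 0) + t2 * (α 1 * α 2)) / n2,
       (t2 * (-(α 0 ^ 2 + α 1 ^ 2))) / n2], rfl, rfl, rfl⟩
  have P1 : β 0 ^ 2 + β 1 ^ 2 + β 2 ^ 2 = 1 := by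
    rw [hβ0, hβ1, hβ2]
    field_simp
    linear_combination (-1 : ℝ) * hn1 + (α 0 ^ 2 + α 1 ^ 2) * t1 ^ 2 * hα
  have P2 : γ 0 ^ 2 + γ 1 ^ 2 + γ 2 ^ 2 = 1 := by
    rw [hγ0, hγ1, hγ2]
    field_simp
    linear_combination (-1 : ℝ) * hn2 + (α 0 ^ 2 + α 1 ^ 2) * t2 ^ 2 * hα
  have P3 : α 0 * β 0 + α 1 * β 1 + α 2 * β 2 = 0 := by
    rw [hβ0, hβ1, hβ2]
    field_simp
    ring
  have P4 : α 0 * γ 0 + α 1 * γ 1 + α 2 * γ 2 = 0 := by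
    rw [hγ0, hγ1, hγ2]
    field_simp
    ring
  have P5 : β 0 * γ 0 + β 1 * γ 1 + β 2 * γ 2 = 0 := by
    rw [hβ0, hβ1, hβ2, hγ0, hγ1, hγ2]
    field_simp
    linear_combination (α 0 ^ 2 + α 1 ^ 2) * t1 * t2 * hα + (α 0 ^ 2 + α 1 ^ 2) * hprod
  have P6 : α 0 * β 0 * γ 0 + α 1 * β 1 * γ 1 + α 2 * β 2 * γ 2 = 0 := by
    rw [hβ0, hβ1, hβ2, hγ0, hγ1, hγ2]
    field_simp
    linear_combination (-(bb ^ 2)) * haadef - bb * (t1 + t2) * hbbdef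
      - t1 * t2 * hccdef + bb ^ 2 * hsum + cc * hprod
  refine ⟨β, γ, P1, P2, P3, P4, P5, P6, ?_⟩
  intro β' γ' hb'u hg'u hab' hag' hbg' hq'
  have hne := lam_ne α β γ hα h01 h12 h02 h0 h1 h2 P1 P2 P3 P4 P5 P6
  obtain ⟨u, hudef⟩ : ∃ u : ℝ, u = β' 0 * β 0 + β' 1 * β 1 + β' 2 * β 2 := ⟨_, rfl⟩
  obtain ⟨v, hvdef⟩ : ∃ v : ℝ, v = β' 0 * γ 0 + β' 1 * γ 1 + β' 2 * γ 2 := ⟨_, rfl⟩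
  obtain ⟨u', hu'def⟩ : ∃ u' : ℝ, u' = γ' 0 * β 0 + γ' 1 * β 1 + γ' 2 * β 2 := ⟨_, rfl⟩
  obtain ⟨v', hv'def⟩ : ∃ v' : ℝ, v' = γ' 0 * γ 0 + γ' 1 * γ 1 + γ' 2 * γ 2 := ⟨_, rfl⟩
  have eβ' : ∀ i, β' i = u * β i + v * γ i := by
    intro i
    have hw := expand3 α β γ hα P1 P2 P3 P4 P5 β' i
    have hz : β' 0 * α 0 + β' 1 * α 1 + β' 2 * α 2 = 0 := by linear_combination hab'
    rw [hz] at hw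
    linear_combination hw - β i * hudef - γ i * hvdef
  have eγ' : ∀ i, γ' i = u' * β i + v' * γ i := by
    intro i
    have hw := expand3 α β γ hα P1 P2 P3 P4 P5 γ' i
    have hz : γ' 0 * α 0 + γ' 1 * α 1 + γ' 2 * α 2 = 0 := by linear_combination hag'
    rw [hz] at hw
    linear_combination hw - β i * hu'def - γ i * hv'def
  have R1 : u ^ 2 + v ^ 2 = 1 := by
    rw [eβ' 0, eβ' 1, eβ' 2] at hb'u
    linear_combination hb'u - u ^ 2 * P1 - 2 * u * v * P5 - v ^ 2 * P2
  have R2 : u' ^ 2 + v' ^ 2 = 1 := by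
    rw [eγ' 0, eγ' 1, eγ' 2] at hg'u
    linear_combination hg'u - u' ^ 2 * P1 - 2 * u' * v' * P5 - v' ^ 2 * P2
  have R3 : u * u' + v * v' = 0 := by
    rw [eβ' 0, eβ' 1, eβ' 2, eγ' 0, eγ' 1, eγ' 2] at hbg'
    linear_combination hbg' - u * u' * P1 - (u * v' + v * u') * P5 - v * v' * P2
  have R4 : u * u' * (α 0 * β 0 ^ 2 + α 1 * β 1 ^ 2 + α 2 * β 2 ^ 2)
      + v * v' * (α 0 * γ 0 ^ 2 + α 1 * γ 1 ^ 2 + α 2 * γ 2 ^ 2) = 0 := by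
    rw [eβ' 0, eβ' 1, eβ' 2, eγ' 0, eγ' 1, eγ' 2] at hq'
    linear_combination hq' - (u * v' + v * u') * P6
  have h5 : u * u' * ((α 0 * β 0 ^ 2 + α 1 * β 1 ^ 2 + α 2 * β 2 ^ 2)
      - (α 0 * γ 0 ^ 2 + α 1 * γ 1 ^ 2 + α 2 * γ 2 ^ 2)) = 0 := by
    linear_combination R4 - (α 0 * γ 0 ^ 2 + α 1 * γ 1 ^ 2 + α 2 * γ 2 ^ 2) * R3
  have huu : u * u' = 0 := (mul_eq_zero.mp h5).resolve_right (sub_ne_zero.mpr hne)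
  have hvv : v * v' = 0 := by linear_combination R3 - huu
  rcases mul_eq_zero.mp huu with hu | hu'
  · -- u = 0, so β' = ±γ, γ' = ±β
    have hv2 : v ^ 2 = 1 := by linear_combination R1 - u * hu
    have hvne : v ≠ 0 := by intro h; rw [h] at hv2; norm_num at hv2
    have hv'0 : v' = 0 := (mul_eq_zero.mp hvv).resolve_left hvne
    have hu'2 : u' ^ 2 = 1 := by linear_combination R2 - v' * hv'0
    right
    constructor
    · have hf : (v - 1) * (v + 1) = 0 := by linear_combination hv2
      rcases mul_eq_zero.mp hf with h | h
      · left; funext i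
        have hv1 : v = 1 := by linarith
        rw [eβ' i, hu, hv1]; ring
      · right; funext i
        have hv1 : v = -1 := by linarith
        rw [Pi.neg_apply, eβ' i, hu, hv1]; ring
    · have hf : (u' - 1) * (u' + 1) = 0 := by linear_combination hu'2
      rcases mul_eq_zero.mp hf with h | h
      · left; funext i
        have hv1 : u' = 1 := by linarith
        rw [eγ' i, hv'0, hv1]; ring
      · right; funext i
        have hv1 : u' = -1 := by linarith
        rw [Pi.neg_apply, eγ' i, hv'0, hv1]; ring
  · -- u' = 0, so β' = ±β, γ' = ±γ
    have hv'2 : v' ^ 2 = 1 := by linear_combination R2 - u' * hu'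
    have hv'ne : v' ≠ 0 := by intro h; rw [h] at hv'2; norm_num at hv'2
    have hv0 : v = 0 := (mul_eq_zero.mp hvv).resolve_right hv'ne
    have hu2 : u ^ 2 = 1 := by linear_combination R1 - v * hv0
    left
    constructor
    · have hf : (u - 1) * (u + 1) = 0 := by linear_combination hu2
      rcases mul_eq_zero.mp hf with h | h
      · left; funext i
        have hv1 : u = 1 := by linarith
        rw [eβ' i, hv0, hv1]; ring
      · right; funext i
        have hv1 : u = -1 := by linarith
        rw [Pi.neg_apply, eβ' i, hv0, hv1]; ring
    · have hf : (v' - 1) * (v' + 1) = 0 := by linear_combination hv'2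
      rcases mul_eq_zero.mp hf with h | h
      · left; funext i
        have hv1 : v' = 1 := by linarith
        rw [eγ' i, hu', hv1]; ring
      · right; funext i
        have hv1 : v' = -1 := by linarith
        rw [Pi.neg_apply, eγ' i, hu', hv1]; ring
end
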